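/- arXiv:math/0506521 — 5 statements merged into one kernel-verified Lean document; each statement's English description precedes it below -/
import Mathlib

section
/- Path composition of partial leaf functions is well-defined and associative: given signed sets X, Y, Z, W and partial leaf functions f : X → Y, g : Y → Z, h : Z → W (where a partial leaf function X → Y is a partial function from X⁺ + Y⁻ to X⁻ + Y⁺), the composite gf defined by (gf)(l) = l' iff there is a finite directed path from l to l' in the union of f and g is again a partial leaf function, and h(gf) = (hg)f. -/
namespace SignedSets

/-- A signed set: a set together with a sign function (`true` = positive). -/
structure SignedSet where
  carrier : Type
  sign : carrier → Bool

/-- Admissibility for the domain side of a partial leaf function `X → Y`: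
the element lies in `X⁺ + Y⁻`. -/
def domOK (X Y : SignedSet) : X.carrier ⊕ Y.carrier → Prop
  | .inl x => X.sign x = true
  | .inr y => Y.sign y = false

/-- Admissibility for the codomain side of a partial leaf function `X → Y`:
the element lies in `X⁻ + Y⁺`. -/
def codOK (X Y : SignedSet) : X.carrier ⊕ Y.carrier → Prop
  | .inl x => X.sign x = false
  | .inr y => Y.sign y = true

/-- A partial leaf function `X → Y`, presented as a functional relation
from `X⁺ + Y⁻` to `X⁻ + Y⁺`. -/
structure PLF (X Y : SignedSet) where
  rel : X.carrier ⊕ Y.carrier → X.carrier ⊕ Y.carrier → Prop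
  functional : ∀ ⦃a b c⦄, rel a b → rel a c → b = c
  dom_ok : ∀ ⦃a b⦄, rel a b → domOK X Y a
  cod_ok : ∀ ⦃a b⦄, rel a b → codOK X Y b

variable {X Y Z : SignedSet}

/-- One directed edge of the union of `f : X → Y` and `g : Y → Z`, viewed as a
directed graph on `X + Y + Z`. -/
def step (f : PLF X Y) (g : PLF Y Z) :
    (X.carrier ⊕ Y.carrier ⊕ Z.carrier) → (X.carrier ⊕ Y.carrier ⊕ Z.carrier) → Prop :=
  fun a b =>
    (∃ a' b', f.rel a' b' ∧ a = Sum.map id Sum.inl a' ∧ b = Sum.map id Sum.inl b') ∨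
    (∃ a' b', g.rel a' b' ∧ a = Sum.inr a' ∧ b = Sum.inr b')

/-- Path composition: `(g f)(l) = l'` iff there is a finite directed path from `l` to
`l'` in the union of `f` and `g`. -/
def pcomp (f : PLF X Y) (g : PLF Y Z) :
    X.carrier ⊕ Z.carrier → X.carrier ⊕ Z.carrier → Prop :=
  fun a b => Relation.TransGen (step f g) (Sum.map id Sum.inr a) (Sum.map id Sum.inr b)

end SignedSets

/-
Each vertex of the union graph of two partial leaf functions has at most one outgoing edge (the
sign of a vertex of `Y` decides whether `f` or `g` may start there), and the vertices of
`X⁻ + Z⁺` are sinks; so two paths from the same vertex ending in `X⁻ + Z⁺` coincide, and the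
composite is again a partial leaf function.

Associativity holds for arbitrary relations. Both `h (g f)` and `(h g) f` relate exactly the
pairs joined by a path in the union of the graphs of `f`, `g` and `h` on `X + Y + Z + W`: an edge
of a composite is a path in the union of its factors, and conversely such a path, cut at the
edges of the outer factor, is a path of composite edges.
-/

namespace Relation

open Function

variable {α β γ δ V : Type*}

theorem map_sup (r s : α → β → Prop) (f : α → γ) (g : β → δ) :
    Relation.Map (r ⊔ s) f g = Relation.Map r f g ⊔ Relation.Map s f g := by
  ext c d
  simp only [Relation.Map, Pi.sup_apply, sup_Prop_eq]
  grind

theorem transGen_map {r : α → α → Prop} {f : α → V} (hf : Injective f) :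
    TransGen (Relation.Map r f f) = Relation.Map (TransGen r) f f := by
  ext x y
  constructor
  · intro h
    induction h with
    | single h =>
      obtain ⟨a, b, hab, rfl, rfl⟩ := h
      exact ⟨a, b, .single hab, rfl, rfl⟩
    | tail _ h ih =>
      obtain ⟨a, c, hac, rfl, rfl⟩ := ih
      obtain ⟨c', b, hcb, hc, rfl⟩ := h
      exact ⟨a, b, hac.tail (hf hc ▸ hcb), rfl, rfl⟩
  · rintro ⟨a, b, hab, rfl, rfl⟩
    exact TransGen.lift f (fun a b h => ⟨a, b, h, rfl, rfl⟩) a b hab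

theorem transGen_of_transGen_sup {R S : V → V → Prop} {T : α → α → Prop} {ι : α → V}
    (hι : Injective ι) (hS : S ≤ Relation.Map T ι ι)
    (hR : (TransGen R on ι) ≤ T) {a b : α}
    (h : TransGen (R ⊔ S) (ι a) (ι b)) : TransGen T a b := by
  have reach : ∀ {a x y}, ReflTransGen R (ι a) (ι x) → T x y → TransGen T a y := by
    intro a x y hax hxy
    rcases reflTransGen_iff_eq_or_transGen.mp hax with hxa | hax
    · exact .single (hι hxa ▸ hxy)
    · exact .head (hR a x hax) (.single hxy)
  -- Cut the path at its `S`-edges: each maximal `R`-segment before an `S`-edge becomes a `T`-edge.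
  suffices ∀ p, TransGen (R ⊔ S) p (ι b) → ∀ a, ReflTransGen R (ι a) p → TransGen T a b from
    this _ h a .refl
  intro p hp
  induction hp using TransGen.head_induction_on with
  | single e =>
    intro a hap
    rcases e with e | e
    · exact .single (hR a b (.tail' hap e))
    · obtain ⟨x, y, hxy, rfl, hy⟩ := hS _ _ e
      exact reach hap (hι hy ▸ hxy)
  | head e _ ih =>
    intro a hap
    rcases e with e | e
    · exact ih a (hap.tail e)
    · obtain ⟨x, y, hxy, rfl, rfl⟩ := hS _ _ e
      exact (reach hap hxy).trans (ih y .refl)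

theorem transGen_sup_iff {R S : V → V → Prop} {T : α → α → Prop} {ι : α → V}
    (hι : Injective ι) (hT : T ≤ (TransGen (R ⊔ S) on ι)) (hS : S ≤ Relation.Map T ι ι)
    (hR : (TransGen R on ι) ≤ T) {a b : α} :
    TransGen (R ⊔ S) (ι a) (ι b) ↔ TransGen T a b :=
  ⟨transGen_of_transGen_sup hι hS hR, fun h => TransGen.lift' ι hT a b h⟩

end Relation

namespace SignedSets

open Relation Function

section PathComp

variable {α β γ δ : Type*}

def unionRel (r : α ⊕ β → α ⊕ β → Prop) (s : β ⊕ γ → β ⊕ γ → Prop) :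
    α ⊕ β ⊕ γ → α ⊕ β ⊕ γ → Prop :=
  Relation.Map r (Sum.map id Sum.inl) (Sum.map id Sum.inl) ⊔ Relation.Map s Sum.inr Sum.inr

def pathComp (r : α ⊕ β → α ⊕ β → Prop) (s : β ⊕ γ → β ⊕ γ → Prop) :
    α ⊕ γ → α ⊕ γ → Prop :=
  fun a b => TransGen (unionRel r s) (Sum.map id Sum.inr a) (Sum.map id Sum.inr b)

def tripleRel (r : α ⊕ β → α ⊕ β → Prop) (s : β ⊕ γ → β ⊕ γ → Prop)
    (t : γ ⊕ δ → γ ⊕ δ → Prop) : α ⊕ β ⊕ γ ⊕ δ → α ⊕ β ⊕ γ ⊕ δ → Prop :=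
  Relation.Map r (Sum.map id Sum.inl) (Sum.map id Sum.inl) ⊔
    Relation.Map s (Sum.inr ∘ Sum.map id Sum.inl) (Sum.inr ∘ Sum.map id Sum.inl) ⊔
    Relation.Map t (Sum.inr ∘ Sum.inr) (Sum.inr ∘ Sum.inr)

variable (r : α ⊕ β → α ⊕ β → Prop) (s : β ⊕ γ → β ⊕ γ → Prop) (t : γ ⊕ δ → γ ⊕ δ → Prop)

theorem transGen_tripleRel_iff_left (a b : α ⊕ δ) :
    TransGen (tripleRel r s t) (Sum.map id (Sum.inr ∘ Sum.inr) a)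
      (Sum.map id (Sum.inr ∘ Sum.inr) b) ↔ pathComp (pathComp r s) t a b := by
  set κ : α ⊕ β ⊕ γ → α ⊕ β ⊕ γ ⊕ δ := Sum.map id (Sum.map id Sum.inl)
  set ι : α ⊕ γ ⊕ δ → α ⊕ β ⊕ γ ⊕ δ := Sum.map id Sum.inr
  have hκ : Injective κ :=
    Sum.map_injective.2 ⟨injective_id, Sum.map_injective.2 ⟨injective_id, Sum.inl_injective⟩⟩
  have hι : Injective ι := Sum.map_injective.2 ⟨injective_id, Sum.inr_injective⟩
  have hκι (a : α ⊕ γ) : κ (Sum.map id Sum.inr a) = ι (Sum.map id Sum.inl a) := by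
    cases a <;> rfl
  have hι_end (a : α ⊕ δ) : ι (Sum.map id Sum.inr a) = Sum.map id (Sum.inr ∘ Sum.inr) a := by
    cases a <;> rfl
  have hsplit : tripleRel r s t =
      Relation.Map (unionRel r s) κ κ ⊔ Relation.Map t (ι ∘ Sum.inr) (ι ∘ Sum.inr) := by
    rw [unionRel, map_sup, map_map, map_map, Sum.map_comp_map]
    rfl
  rw [hsplit, ← hι_end, ← hι_end, transGen_sup_iff hι]
  · rfl
  · rintro u v (⟨a, b, h, rfl, rfl⟩ | ⟨c, d, h, rfl, rfl⟩)
    · have h' := (transGen_map hκ).ge _ _ ⟨_, _, h, rfl, rfl⟩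
      rw [hκι, hκι] at h'
      exact TransGen.mono le_sup_left _ _ h'
    · exact .single (Or.inr ⟨c, d, h, rfl, rfl⟩)
  · rintro _ _ ⟨c, d, h, rfl, rfl⟩
    exact ⟨_, _, Or.inr ⟨c, d, h, rfl, rfl⟩, rfl, rfl⟩
  · intro u v h
    obtain ⟨x, y, hxy, hx, hy⟩ := (transGen_map hκ).le _ _ h
    have hmatch {x u} (h : κ x = ι u) :
        ∃ a, x = Sum.map id Sum.inr a ∧ u = Sum.map id Sum.inl a := by
      rcases x with _ | _ | _ <;> rcases u with _ | _ | _ <;> simp [κ, ι] at h <;> subst h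
      exacts [⟨.inl _, rfl, rfl⟩, ⟨.inr _, rfl, rfl⟩]
    obtain ⟨a, rfl, rfl⟩ := hmatch hx
    obtain ⟨b, rfl, rfl⟩ := hmatch hy
    exact Or.inl ⟨a, b, hxy, rfl, rfl⟩

theorem transGen_tripleRel_iff_right (a b : α ⊕ δ) :
    TransGen (tripleRel r s t) (Sum.map id (Sum.inr ∘ Sum.inr) a)
      (Sum.map id (Sum.inr ∘ Sum.inr) b) ↔ pathComp r (pathComp s t) a b := by
  set κ : β ⊕ γ ⊕ δ → α ⊕ β ⊕ γ ⊕ δ := Sum.inr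
  set ι : α ⊕ β ⊕ δ → α ⊕ β ⊕ γ ⊕ δ := Sum.map id (Sum.map id Sum.inr)
  have hκ : Injective κ := Sum.inr_injective
  have hι : Injective ι :=
    Sum.map_injective.2 ⟨injective_id, Sum.map_injective.2 ⟨injective_id, Sum.inr_injective⟩⟩
  have hκι (c : β ⊕ δ) : κ (Sum.map id Sum.inr c) = ι (Sum.inr c) := by
    cases c <;> rfl
  have hι_end (a : α ⊕ δ) : ι (Sum.map id Sum.inr a) = Sum.map id (Sum.inr ∘ Sum.inr) a := by
    cases a <;> rfl
  have hsplit : tripleRel r s t = Relation.Map (unionRel s t) κ κ ⊔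
      Relation.Map r (ι ∘ Sum.map id Sum.inl) (ι ∘ Sum.map id Sum.inl) := by
    rw [unionRel, map_sup, map_map, map_map, tripleRel, Sum.map_comp_map]
    ac_rfl
  rw [hsplit, ← hι_end, ← hι_end, transGen_sup_iff hι]
  · rfl
  · rintro u v (⟨a, b, h, rfl, rfl⟩ | ⟨c, d, h, rfl, rfl⟩)
    · exact .single (Or.inr ⟨a, b, h, rfl, rfl⟩)
    · have h' := (transGen_map hκ).ge _ _ ⟨_, _, h, rfl, rfl⟩
      rw [hκι, hκι] at h'
      exact TransGen.mono le_sup_left _ _ h'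
  · rintro _ _ ⟨a, b, h, rfl, rfl⟩
    exact ⟨_, _, Or.inl ⟨a, b, h, rfl, rfl⟩, rfl, rfl⟩
  · intro u v h
    obtain ⟨x, y, hxy, hx, hy⟩ := (transGen_map hκ).le _ _ h
    have hmatch {x u} (h : κ x = ι u) : ∃ c, x = Sum.map id Sum.inr c ∧ u = Sum.inr c := by
      rcases u with _ | _ | _ <;> simp [κ, ι] at h <;> subst h
      exacts [⟨.inl _, rfl, rfl⟩, ⟨.inr _, rfl, rfl⟩]
    obtain ⟨c, rfl, rfl⟩ := hmatch hx
    obtain ⟨d, rfl, rfl⟩ := hmatch hy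
    exact Or.inr ⟨c, d, hxy, rfl, rfl⟩

theorem pathComp_assoc : pathComp (pathComp r s) t = pathComp r (pathComp s t) := by
  ext a b
  rw [← transGen_tripleRel_iff_left, transGen_tripleRel_iff_right]

end PathComp

section PLF

variable {X Y Z : SignedSet} {f : PLF X Y} {g : PLF Y Z}

theorem pcomp_eq_pathComp : pcomp f g = pathComp f.rel g.rel := by
  have : step f g = unionRel f.rel g.rel := by
    ext u v
    simp only [step, unionRel, Relation.Map, Pi.sup_apply, sup_Prop_eq, eq_comm]
  unfold pcomp pathComp
  rw [this]

theorem not_domOK_of_codOK {a : X.carrier ⊕ Y.carrier} (h : codOK X Y a) : ¬ domOK X Y a := by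
  cases a <;> simp_all [domOK, codOK]

theorem domOK_of_step {a : X.carrier ⊕ Z.carrier} {v} (h : step f g (Sum.map id Sum.inr a) v) :
    domOK X Z a := by
  rcases h with ⟨a', b', h, ha, rfl⟩ | ⟨a', b', h, ha, rfl⟩
  · rcases a with _ | _ <;> rcases a' with _ | _ <;> simp at ha
    subst ha
    exact f.dom_ok h
  · rcases a with _ | _ <;> simp at ha
    subst ha
    exact g.dom_ok h

theorem codOK_of_step {b : X.carrier ⊕ Z.carrier} {v} (h : step f g v (Sum.map id Sum.inr b)) :
    codOK X Z b := by
  rcases h with ⟨a', b', h, rfl, hb⟩ | ⟨a', b', h, rfl, hb⟩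
  · rcases b with _ | _ <;> rcases b' with _ | _ <;> simp at hb
    subst hb
    exact f.cod_ok h
  · rcases b with _ | _ <;> simp at hb
    subst hb
    exact g.cod_ok h

theorem step_rightUnique : Relator.RightUnique (step f g) := by
  have disjoint_sources {a b a' b'} (hf : f.rel a b) (hg : g.rel a' b') :
      Sum.map id Sum.inl a ≠ Sum.inr a' := by
    intro h
    rcases a with _ | y <;> simp at h
    subst h
    have := f.dom_ok hf
    have := g.dom_ok hg
    simp_all [domOK]
  rintro _ _ _ (⟨a, b, h, rfl, rfl⟩ | ⟨a, b, h, rfl, rfl⟩)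
    (⟨a', b', h', ha, rfl⟩ | ⟨a', b', h', ha, rfl⟩)
  · obtain rfl := Sum.map_injective.2 ⟨injective_id, Sum.inl_injective⟩ ha
    rw [f.functional h h']
  · exact (disjoint_sources h h' ha).elim
  · exact (disjoint_sources h' h ha.symm).elim
  · obtain rfl := Sum.inr_injective ha
    rw [g.functional h h']

-- The endpoint of a path lies in `X⁻ + Z⁺`, where no edge starts.
theorem not_step_of_pcomp {a b : X.carrier ⊕ Z.carrier} {v} (hab : pcomp f g a b) :
    ¬ step f g (Sum.map id Sum.inr b) v := by
  obtain ⟨_, _, hlast⟩ := TransGen.tail'_iff.mp hab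
  exact fun h => not_domOK_of_codOK (codOK_of_step hlast) (domOK_of_step h)

variable (f g) in
def pcompPLF : PLF X Z where
  rel := pcomp f g
  functional a b c hab hac := by
    have key {b c} (hab : pcomp f g a b)
        (hbc : ReflTransGen (step f g) (Sum.map id Sum.inr b) (Sum.map id Sum.inr c)) : b = c := by
      rcases reflTransGen_iff_eq_or_transGen.mp hbc with h | h
      · exact (Sum.map_injective.2 ⟨injective_id, Sum.inr_injective⟩ h).symm
      · obtain ⟨_, hstep, _⟩ := TransGen.head'_iff.mp h
        exact (not_step_of_pcomp hab hstep).elim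
    -- `step f g` is deterministic, so one of the two paths from `a` extends the other.
    rcases ReflTransGen.total_of_right_unique step_rightUnique hab.to_reflTransGen
      hac.to_reflTransGen with h | h
    · exact key hab h
    · exact (key hac h).symm
  dom_ok a b hab := by
    obtain ⟨_, hstep, _⟩ := TransGen.head'_iff.mp hab
    exact domOK_of_step hstep
  cod_ok a b hab := by
    obtain ⟨_, _, hstep⟩ := TransGen.tail'_iff.mp hab
    exact codOK_of_step hstep

end PLF

/-- Path composition of partial leaf functions is well-defined
(the path-composite relation is again a partial leaf function) and associative. -/
theorem statement0 :
    ∀ (X Y Z W : SignedSet) (f : PLF X Y) (g : PLF Y Z) (h : PLF Z W),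
      ∃ (gf : PLF X Z) (hg : PLF Y W),
        gf.rel = pcomp f g ∧ hg.rel = pcomp g h ∧ pcomp gf h = pcomp f hg := by
  intro X Y Z W f g h
  refine ⟨pcompPLF f g, pcompPLF g h, rfl, rfl, ?_⟩
  simp only [pcomp_eq_pathComp, pcompPLF, pathComp_assoc]

end SignedSets
end

section
/- The identity partial leaf function, whose edges connect each positive element of X on the domain side to the corresponding element on the codomain side and each negative element on the codomain side to the corresponding element on the domain side, is a two-sided identity for path composition of partial leaf functions; hence signed sets and partial leaf functions form a category. -/
namespace SignedSets

/-- The identity partial leaf function on a signed set `X`: each positive element on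
the domain side is sent to the corresponding element on the codomain side, and each
negative element on the codomain side is sent to the corresponding element on the
domain side. -/
def idRel (X : SignedSet) :
    X.carrier ⊕ X.carrier → X.carrier ⊕ X.carrier → Prop :=
  fun a b =>
    (∃ x, X.sign x = true ∧ a = Sum.inl x ∧ b = Sum.inr x) ∨
    (∃ x, X.sign x = false ∧ a = Sum.inr x ∧ b = Sum.inl x)

variable {X Y : SignedSet}

/-- The identity as a PLF. -/
def idPLF (X : SignedSet) : PLF X X where
  rel := idRel X
  functional := by
    rintro a b c (⟨x, hx, rfl, rfl⟩ | ⟨x, hx, rfl, rfl⟩)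
      (⟨x', hx', h1, h2⟩ | ⟨x', hx', h1, h2⟩) <;> simp_all
  dom_ok := by
    rintro a b (⟨x, hx, rfl, rfl⟩ | ⟨x, hx, rfl, rfl⟩) <;> simp [domOK, hx]
  cod_ok := by
    rintro a b (⟨x, hx, rfl, rfl⟩ | ⟨x, hx, rfl, rfl⟩) <;> simp [codOK, hx]

/-- Explicit transitive closure of `step (idPLF X) f`. -/
def Cleft (f : PLF X Y) :
    (X.carrier ⊕ X.carrier ⊕ Y.carrier) → (X.carrier ⊕ X.carrier ⊕ Y.carrier) → Prop :=
  fun p q =>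
    (∃ x, X.sign x = true ∧ p = .inl x ∧ q = .inr (.inl x)) ∨
    (∃ x b', f.rel (.inl x) b' ∧ p = .inl x ∧ q = .inr b') ∨
    (∃ x x', f.rel (.inl x) (.inl x') ∧ p = .inl x ∧ q = .inl x') ∨
    (∃ x, X.sign x = false ∧ p = .inr (.inl x) ∧ q = .inl x) ∨
    (∃ a' b', f.rel a' b' ∧ p = .inr a' ∧ q = .inr b') ∨
    (∃ a' x', f.rel a' (.inl x') ∧ p = .inr a' ∧ q = .inl x')

lemma step_left (f : PLF X Y) {p q} (h : step (idPLF X) f p q) : Cleft f p q := by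
  rcases h with ⟨a', b', hr, rfl, rfl⟩ | ⟨a', b', hr, rfl, rfl⟩
  · rcases hr with ⟨x, hx, rfl, rfl⟩ | ⟨x, hx, rfl, rfl⟩
    · exact Or.inl ⟨x, hx, rfl, rfl⟩
    · exact Or.inr (Or.inr (Or.inr (Or.inl ⟨x, hx, rfl, rfl⟩)))
  · exact Or.inr (Or.inr (Or.inr (Or.inr (Or.inl ⟨a', b', hr, rfl, rfl⟩))))

lemma Cleft_step (f : PLF X Y) {p q r} (h : Cleft f p q) (hs : step (idPLF X) f q r) :
    Cleft f p r := by
  rcases h with ⟨x, hx, rfl, rfl⟩ | ⟨x, b', hf, rfl, rfl⟩ | ⟨x, x', hf, rfl, rfl⟩ |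
    ⟨x, hx, rfl, rfl⟩ | ⟨a', b', hf, rfl, rfl⟩ | ⟨a', x', hf, rfl, rfl⟩
  · -- q = inr (inl x), x pos; only possible step is an f-edge from inl x
    rcases hs with ⟨a', b', hr, ha, rfl⟩ | ⟨a', b', hr, ha, rfl⟩
    · -- idRel edge from inr (inl x): needs x negative, contradiction
      rcases hr with ⟨x', hx', rfl, rfl⟩ | ⟨x', hx', rfl, rfl⟩ <;> simp_all [Sum.map]
    · cases a' with
      | inl x'' =>
        cases ha; exact Or.inr (Or.inl ⟨x, b', by simpa using hr, rfl, rfl⟩)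
      | inr y => simp_all
  · -- q = inr b'
    have hc := f.cod_ok hf
    cases b' with
    | inl x' =>
      -- x' negative; only step: idRel edge back to outer inl x'
      simp only [codOK] at hc
      rcases hs with ⟨a', b'', hr, ha, rfl⟩ | ⟨a', b'', hr, ha, rfl⟩
      · rcases hr with ⟨x'', hx'', rfl, rfl⟩ | ⟨x'', hx'', rfl, rfl⟩
        · simp_all [Sum.map]
        · simp only [Sum.map, Sum.inr.injEq] at ha
          cases ha
          exact Or.inr (Or.inr (Or.inl ⟨x, x', hf, rfl, rfl⟩))
      · cases a' with
        | inl x'' =>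
          simp only [Sum.inr.injEq, Sum.inl.injEq] at ha; subst ha
          have := f.dom_ok hr; simp only [domOK] at this; simp_all
        | inr y => simp_all
    | inr y =>
      -- y positive; no outgoing step
      simp only [codOK] at hc
      rcases hs with ⟨a', b'', hr, ha, rfl⟩ | ⟨a', b'', hr, ha, rfl⟩
      · rcases hr with ⟨x'', hx'', rfl, rfl⟩ | ⟨x'', hx'', rfl, rfl⟩ <;> simp_all [Sum.map]
      · cases a' with
        | inl x'' => simp_all
        | inr y' =>
          simp only [Sum.inr.injEq] at ha; cases ha
          have := f.dom_ok hr; simp only [domOK] at this; simp_all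
  · -- q = inl x', x' negative: no outgoing step
    have hc := f.cod_ok hf; simp only [codOK] at hc
    rcases hs with ⟨a', b'', hr, ha, rfl⟩ | ⟨a', b'', hr, ha, rfl⟩
    · rcases hr with ⟨x'', hx'', rfl, rfl⟩ | ⟨x'', hx'', rfl, rfl⟩ <;> simp_all [Sum.map]
    · simp_all
  · -- q = inl x, x negative: no outgoing step
    rcases hs with ⟨a', b'', hr, ha, rfl⟩ | ⟨a', b'', hr, ha, rfl⟩
    · rcases hr with ⟨x'', hx'', rfl, rfl⟩ | ⟨x'', hx'', rfl, rfl⟩ <;> simp_all [Sum.map]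
    · simp_all
  · -- q = inr b'
    have hc := f.cod_ok hf
    cases b' with
    | inl x' =>
      simp only [codOK] at hc
      rcases hs with ⟨a'', b'', hr, ha, rfl⟩ | ⟨a'', b'', hr, ha, rfl⟩
      · rcases hr with ⟨x'', hx'', rfl, rfl⟩ | ⟨x'', hx'', rfl, rfl⟩
        · simp_all [Sum.map]
        · simp only [Sum.map, Sum.inr.injEq] at ha; cases ha
          exact Or.inr (Or.inr (Or.inr (Or.inr (Or.inr ⟨a', x', hf, rfl, rfl⟩))))
      · cases a'' with
        | inl x'' =>
          simp only [Sum.inr.injEq, Sum.inl.injEq] at ha; subst ha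
          have := f.dom_ok hr; simp only [domOK] at this; simp_all
        | inr y => simp_all
    | inr y =>
      simp only [codOK] at hc
      rcases hs with ⟨a'', b'', hr, ha, rfl⟩ | ⟨a'', b'', hr, ha, rfl⟩
      · rcases hr with ⟨x'', hx'', rfl, rfl⟩ | ⟨x'', hx'', rfl, rfl⟩ <;> simp_all [Sum.map]
      · cases a'' with
        | inl x'' => simp_all
        | inr y' =>
          simp only [Sum.inr.injEq] at ha; cases ha
          have := f.dom_ok hr; simp only [domOK] at this; simp_all
  · -- q = inl x', x' negative: no outgoing step
    have hc := f.cod_ok hf; simp only [codOK] at hc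
    rcases hs with ⟨a'', b'', hr, ha, rfl⟩ | ⟨a'', b'', hr, ha, rfl⟩
    · rcases hr with ⟨x'', hx'', rfl, rfl⟩ | ⟨x'', hx'', rfl, rfl⟩ <;> simp_all [Sum.map]
    · simp_all

lemma trans_left (f : PLF X Y) {p q} (h : Relation.TransGen (step (idPLF X) f) p q) :
    Cleft f p q := by
  induction h with
  | single h => exact step_left f h
  | tail _ h ih => exact Cleft_step f ih h





lemma left_id (f : PLF X Y) : pcomp (idPLF X) f = f.rel := by
  funext a b
  apply propext
  constructor
  · intro h
    have hc := trans_left f h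
    cases a with
    | inl x =>
      cases b with
      | inl x' =>
        rcases hc with ⟨x'', _, h1, h2⟩ | ⟨x'', b', _, h1, h2⟩ | ⟨x'', x''', hf, h1, h2⟩ |
          ⟨x'', _, h1, h2⟩ | ⟨a', b', _, h1, h2⟩ | ⟨a', x''', _, h1, h2⟩ <;>
          simp_all [Sum.map]
      | inr y =>
        rcases hc with ⟨x'', _, h1, h2⟩ | ⟨x'', b', hf, h1, h2⟩ | ⟨x'', x''', hf, h1, h2⟩ |
          ⟨x'', _, h1, h2⟩ | ⟨a', b', _, h1, h2⟩ | ⟨a', x''', _, h1, h2⟩ <;>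
          simp_all [Sum.map]
    | inr y =>
      cases b with
      | inl x' =>
        rcases hc with ⟨x'', _, h1, h2⟩ | ⟨x'', b', hf, h1, h2⟩ | ⟨x'', x''', hf, h1, h2⟩ |
          ⟨x'', _, h1, h2⟩ | ⟨a', b', hf, h1, h2⟩ | ⟨a', x''', hf, h1, h2⟩ <;>
          simp_all [Sum.map]
      | inr y' =>
        rcases hc with ⟨x'', _, h1, h2⟩ | ⟨x'', b', hf, h1, h2⟩ | ⟨x'', x''', hf, h1, h2⟩ |
          ⟨x'', _, h1, h2⟩ | ⟨a', b', hf, h1, h2⟩ | ⟨a', x''', hf, h1, h2⟩ <;>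
          simp_all [Sum.map]
  · intro hf
    have hd := f.dom_ok hf
    have hc := f.cod_ok hf
    cases a with
    | inl x =>
      simp only [domOK] at hd
      have e1 : step (idPLF X) f (Sum.inl x) (Sum.inr (Sum.inl x)) :=
        Or.inl ⟨Sum.inl x, Sum.inr x, Or.inl ⟨x, hd, rfl, rfl⟩, rfl, rfl⟩
      have e2 : step (idPLF X) f (Sum.inr (Sum.inl x)) (Sum.inr b) :=
        Or.inr ⟨Sum.inl x, b, hf, rfl, rfl⟩
      cases b with
      | inl x' =>
        simp only [codOK] at hc
        have e3 : step (idPLF X) f (Sum.inr (Sum.inl x')) (Sum.inl x') :=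
          Or.inl ⟨Sum.inr x', Sum.inl x', Or.inr ⟨x', hc, rfl, rfl⟩, rfl, rfl⟩
        exact Relation.TransGen.head e1 (Relation.TransGen.tail (.single e2) e3)
      | inr y =>
        exact Relation.TransGen.head e1 (.single e2)
    | inr y =>
      have e2 : step (idPLF X) f (Sum.inr (Sum.inr y)) (Sum.inr b) :=
        Or.inr ⟨Sum.inr y, b, hf, rfl, rfl⟩
      cases b with
      | inl x' =>
        simp only [codOK] at hc
        have e3 : step (idPLF X) f (Sum.inr (Sum.inl x')) (Sum.inl x') :=
          Or.inl ⟨Sum.inr x', Sum.inl x', Or.inr ⟨x', hc, rfl, rfl⟩, rfl, rfl⟩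
        exact Relation.TransGen.tail (.single e2) e3
      | inr y' =>
        exact .single e2





/-- Explicit transitive closure of `step g (idPLF X)` for `g : PLF Y X`. -/
def Cright (g : PLF Y X) :
    (Y.carrier ⊕ X.carrier ⊕ X.carrier) → (Y.carrier ⊕ X.carrier ⊕ X.carrier) → Prop :=
  fun p q =>
    (∃ x, X.sign x = true ∧ p = .inr (.inl x) ∧ q = .inr (.inr x)) ∨
    (∃ x, X.sign x = false ∧ p = .inr (.inr x) ∧ q = .inr (.inl x)) ∨
    (∃ a' b', g.rel a' b' ∧ p = Sum.map id Sum.inl a' ∧ q = Sum.map id Sum.inl b') ∨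
    (∃ x b', g.rel (.inr x) b' ∧ p = .inr (.inr x) ∧ q = Sum.map id Sum.inl b') ∨
    (∃ a' x', g.rel a' (.inr x') ∧ p = Sum.map id Sum.inl a' ∧ q = .inr (.inr x')) ∨
    (∃ x x', g.rel (.inr x) (.inr x') ∧ p = .inr (.inr x) ∧ q = .inr (.inr x'))

lemma step_right (g : PLF Y X) {p q} (h : step g (idPLF X) p q) : Cright g p q := by
  rcases h with ⟨a', b', hr, rfl, rfl⟩ | ⟨a', b', hr, rfl, rfl⟩
  · exact Or.inr (Or.inr (Or.inl ⟨a', b', hr, rfl, rfl⟩))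
  · rcases hr with ⟨x, hx, rfl, rfl⟩ | ⟨x, hx, rfl, rfl⟩
    · exact Or.inl ⟨x, hx, rfl, rfl⟩
    · exact Or.inr (Or.inl ⟨x, hx, rfl, rfl⟩)

lemma Cright_step (g : PLF Y X) {p q r} (h : Cright g p q) (hs : step g (idPLF X) q r) :
    Cright g p r := by
  rcases h with ⟨x, hx, rfl, rfl⟩ | ⟨x, hx, rfl, rfl⟩ | ⟨a', b', hg, rfl, rfl⟩ |
    ⟨x, b', hg, rfl, rfl⟩ | ⟨a', x', hg, rfl, rfl⟩ | ⟨x, x', hg, rfl, rfl⟩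
  · -- q = inr (inr x), x pos: no outgoing step
    rcases hs with ⟨a'', b'', hr, ha, rfl⟩ | ⟨a'', b'', hr, ha, rfl⟩
    · cases a'' <;> simp_all [Sum.map]
    · rcases hr with ⟨x'', hx'', rfl, rfl⟩ | ⟨x'', hx'', rfl, rfl⟩ <;> simp_all
  · -- q = inr (inl x), x neg: only a g-edge from inr x
    rcases hs with ⟨a'', b'', hr, ha, rfl⟩ | ⟨a'', b'', hr, ha, rfl⟩
    · cases a'' with
      | inl y => simp_all [Sum.map]
      | inr x'' =>
        simp only [Sum.map_inr, Sum.map_inl, id_eq, Sum.inr.injEq, Sum.inl.injEq] at ha; subst ha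
        exact Or.inr (Or.inr (Or.inr (Or.inl ⟨x, b'', hr, rfl, rfl⟩)))
    · rcases hr with ⟨x'', hx'', rfl, rfl⟩ | ⟨x'', hx'', rfl, rfl⟩ <;> simp_all
  · -- q = m b'
    have hc := g.cod_ok hg
    cases b' with
    | inl y' =>
      simp only [codOK] at hc
      rcases hs with ⟨a'', b'', hr, ha, rfl⟩ | ⟨a'', b'', hr, ha, rfl⟩
      · cases a'' with
        | inl y'' =>
          simp only [Sum.map_inl, id_eq, Sum.inl.injEq] at ha; subst ha
          have := g.dom_ok hr; simp only [domOK] at this; simp_all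
        | inr x'' => simp_all [Sum.map]
      · rcases hr with ⟨x'', hx'', rfl, rfl⟩ | ⟨x'', hx'', rfl, rfl⟩ <;> simp_all [Sum.map]
    | inr x' =>
      simp only [codOK] at hc
      rcases hs with ⟨a'', b'', hr, ha, rfl⟩ | ⟨a'', b'', hr, ha, rfl⟩
      · cases a'' with
        | inl y'' => simp_all [Sum.map]
        | inr x'' =>
          simp only [Sum.map_inr, Sum.map_inl, id_eq, Sum.inr.injEq, Sum.inl.injEq] at ha; subst ha
          have := g.dom_ok hr; simp only [domOK] at this; simp_all
      · rcases hr with ⟨x'', hx'', rfl, rfl⟩ | ⟨x'', hx'', rfl, rfl⟩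
        · simp only [Sum.map_inr, Sum.map_inl, id_eq, Sum.inr.injEq, Sum.inl.injEq] at ha; subst ha
          exact Or.inr (Or.inr (Or.inr (Or.inr (Or.inl ⟨a', x', hg, rfl, rfl⟩))))
        · simp_all [Sum.map]
  · -- q = m b' after starting at inr (inr x)
    have hc := g.cod_ok hg
    cases b' with
    | inl y' =>
      simp only [codOK] at hc
      rcases hs with ⟨a'', b'', hr, ha, rfl⟩ | ⟨a'', b'', hr, ha, rfl⟩
      · cases a'' with
        | inl y'' =>
          simp only [Sum.map_inl, id_eq, Sum.inl.injEq] at ha; subst ha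
          have := g.dom_ok hr; simp only [domOK] at this; simp_all
        | inr x'' => simp_all [Sum.map]
      · rcases hr with ⟨x'', hx'', rfl, rfl⟩ | ⟨x'', hx'', rfl, rfl⟩ <;> simp_all [Sum.map]
    | inr x' =>
      simp only [codOK] at hc
      rcases hs with ⟨a'', b'', hr, ha, rfl⟩ | ⟨a'', b'', hr, ha, rfl⟩
      · cases a'' with
        | inl y'' => simp_all [Sum.map]
        | inr x'' =>
          simp only [Sum.map_inr, Sum.map_inl, id_eq, Sum.inr.injEq, Sum.inl.injEq] at ha; subst ha
          have := g.dom_ok hr; simp only [domOK] at this; simp_all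
      · rcases hr with ⟨x'', hx'', rfl, rfl⟩ | ⟨x'', hx'', rfl, rfl⟩
        · simp only [Sum.map_inr, Sum.map_inl, id_eq, Sum.inr.injEq, Sum.inl.injEq] at ha; subst ha
          exact Or.inr (Or.inr (Or.inr (Or.inr (Or.inr ⟨x, x', hg, rfl, rfl⟩))))
        · simp_all [Sum.map]
  · -- q = inr (inr x'), x' pos: no outgoing step
    have hc := g.cod_ok hg; simp only [codOK] at hc
    rcases hs with ⟨a'', b'', hr, ha, rfl⟩ | ⟨a'', b'', hr, ha, rfl⟩
    · cases a'' <;> simp_all [Sum.map]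
    · rcases hr with ⟨x'', hx'', rfl, rfl⟩ | ⟨x'', hx'', rfl, rfl⟩ <;> simp_all
  · -- same
    have hc := g.cod_ok hg; simp only [codOK] at hc
    rcases hs with ⟨a'', b'', hr, ha, rfl⟩ | ⟨a'', b'', hr, ha, rfl⟩
    · cases a'' <;> simp_all [Sum.map]
    · rcases hr with ⟨x'', hx'', rfl, rfl⟩ | ⟨x'', hx'', rfl, rfl⟩ <;> simp_all

lemma trans_right (g : PLF Y X) {p q} (h : Relation.TransGen (step g (idPLF X)) p q) :
    Cright g p q := by
  induction h with
  | single h => exact step_right g h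
  | tail _ h ih => exact Cright_step g ih h

lemma right_id (g : PLF Y X) : pcomp g (idPLF X) = g.rel := by
  funext a b
  apply propext
  constructor
  · intro h
    have hc := trans_right g h
    cases a with
    | inl y =>
      cases b with
      | inl y' =>
        rcases hc with ⟨x, _, h1, h2⟩ | ⟨x, _, h1, h2⟩ | ⟨a', b', hg, h1, h2⟩ |
          ⟨x, b', hg, h1, h2⟩ | ⟨a', x', hg, h1, h2⟩ | ⟨x, x', hg, h1, h2⟩ <;>
          [skip; skip; (cases a' <;> cases b'); (cases b'); (cases a'); skip] <;>
          simp_all [Sum.map]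
      | inr x' =>
        rcases hc with ⟨x, _, h1, h2⟩ | ⟨x, _, h1, h2⟩ | ⟨a', b', hg, h1, h2⟩ |
          ⟨x, b', hg, h1, h2⟩ | ⟨a', x', hg, h1, h2⟩ | ⟨x, x', hg, h1, h2⟩ <;>
          [skip; skip; (cases a' <;> cases b'); (cases b'); (cases a'); skip] <;>
          simp_all [Sum.map]
    | inr x =>
      cases b with
      | inl y' =>
        rcases hc with ⟨x'', _, h1, h2⟩ | ⟨x'', _, h1, h2⟩ | ⟨a', b', hg, h1, h2⟩ |
          ⟨x'', b', hg, h1, h2⟩ | ⟨a', x', hg, h1, h2⟩ | ⟨x'', x', hg, h1, h2⟩ <;>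
          [skip; skip; (cases a' <;> cases b'); (cases b'); (cases a'); skip] <;>
          simp_all [Sum.map]
      | inr x' =>
        rcases hc with ⟨x'', _, h1, h2⟩ | ⟨x'', _, h1, h2⟩ | ⟨a', b', hg, h1, h2⟩ |
          ⟨x'', b', hg, h1, h2⟩ | ⟨a', x'', hg, h1, h2⟩ | ⟨x'', x''', hg, h1, h2⟩ <;>
          [skip; skip; (cases a' <;> cases b'); (cases b'); (cases a'); skip] <;>
          simp_all [Sum.map]
  · intro hg
    have hd := g.dom_ok hg
    have hc := g.cod_ok hg
    cases a with
    | inl y =>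
      have e2 : step g (idPLF X) (Sum.inl y) (Sum.map id Sum.inl b) :=
        Or.inl ⟨Sum.inl y, b, hg, rfl, rfl⟩
      cases b with
      | inl y' => exact .single e2
      | inr x' =>
        simp only [codOK] at hc
        have e3 : step g (idPLF X) (Sum.inr (Sum.inl x')) (Sum.inr (Sum.inr x')) :=
          Or.inr ⟨Sum.inl x', Sum.inr x', Or.inl ⟨x', hc, rfl, rfl⟩, rfl, rfl⟩
        exact Relation.TransGen.tail (.single e2) e3
    | inr x =>
      simp only [domOK] at hd
      have e1 : step g (idPLF X) (Sum.inr (Sum.inr x)) (Sum.inr (Sum.inl x)) :=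
        Or.inr ⟨Sum.inr x, Sum.inl x, Or.inr ⟨x, hd, rfl, rfl⟩, rfl, rfl⟩
      have e2 : step g (idPLF X) (Sum.inr (Sum.inl x)) (Sum.map id Sum.inl b) :=
        Or.inl ⟨Sum.inr x, b, hg, rfl, rfl⟩
      cases b with
      | inl y' => exact Relation.TransGen.head e1 (.single e2)
      | inr x' =>
        simp only [codOK] at hc
        have e3 : step g (idPLF X) (Sum.inr (Sum.inl x')) (Sum.inr (Sum.inr x')) :=
          Or.inr ⟨Sum.inl x', Sum.inr x', Or.inl ⟨x', hc, rfl, rfl⟩, rfl, rfl⟩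
        exact Relation.TransGen.tail (Relation.TransGen.head e1 (.single e2)) e3

/-- The identity partial leaf function is a two-sided identity for
path composition; hence signed sets and partial leaf functions form a category. -/
theorem statement1 :
    ∀ X : SignedSet, ∃ idX : PLF X X, idX.rel = idRel X ∧
      (∀ (Y : SignedSet) (f : PLF X Y), pcomp idX f = f.rel) ∧
      (∀ (Y : SignedSet) (g : PLF Y X), pcomp g idX = g.rel) := by
  intro X
  exact ⟨idPLF X, rfl, fun Y f => left_id f, fun Y g => right_id g⟩

end SignedSets
end

section
/- The category Setp of sets and partial functions, with monoidal structure given by disjoint union (coproduct), is a traced symmetric monoidal category: there is a trace operator sending a partial function f : X + U → Y + U to a partial function Tr(f) : X → Y defined by iterated feedback through U (Tr(f)(x) = y iff there is a finite sequence x, u₁, …, uₙ, y with f(x) = u₁ or f(x)=y, f(uᵢ) = u_{i+1}, f(uₙ) = y), satisfying the trace axioms (naturality in X and Y, dinaturality in U, vanishing, superposing and yanking). -/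
namespace SetpTrace

/-- Disjoint union (coproduct) of partial functions: the tensor of `Setp`
on morphisms. -/
def psum {α β γ δ : Type} (f : α →. β) (g : γ →. δ) : α ⊕ γ →. β ⊕ δ
  | .inl a => (f a).map Sum.inl
  | .inr c => (g c).map Sum.inr

/-- A total function viewed as a partial function. -/
def pfn {α β : Type} (g : α → β) : α →. β := PFun.lift g

/-- The feedback relation: `traceRel f x y` holds iff there is a finite sequence
`x, u₁, …, uₙ, y` with `f x = inr u₁` (or directly `f x = inl y`),
`f uᵢ = inr uᵢ₊₁`, and `f uₙ = inl y`. -/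
def traceRel {X U Y : Type} (f : X ⊕ U →. Y ⊕ U) (x : X) (y : Y) : Prop :=
  ∃ a : X ⊕ U,
    Relation.ReflTransGen (fun p q => ∃ u, Sum.inr u ∈ f p ∧ q = Sum.inr u) (Sum.inl x) a ∧
    Sum.inl y ∈ f a

/-- The trace (iterated feedback) of a partial function `f : X + U →. Y + U`. -/
noncomputable def trace {X U Y : Type} (f : X ⊕ U →. Y ⊕ U) : X →. Y :=
  fun x => ⟨∃ y, traceRel f x y, fun h => Classical.choose h⟩

/-!
Everything reduces to the relation `Exits f a y`: iterating `f` from an arbitrary point `a` of `X ⊕ U`,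
feeding outputs in `U` back in, eventually leaves at `y`. Since `f` is single-valued so is
`Exits f`, and `trace f` is its graph on the points `inl x`. Allowing arbitrary starting points
makes each axiom a statement about feedback paths, proved by induction on the path. For
vanishing, a path through `U ⊕ V` is cut at its visits to `U`: the segments in between are the
`V`-loops resolved by the inner trace.
-/

open Sum

section

variable {α β γ δ : Type}

@[simp] lemma pfn_apply (g : α → β) (a : α) : pfn g a = Part.some (g a) := rfl

@[simp] lemma psum_inl (f : α →. β) (g : γ →. δ) (a : α) :
    psum f g (inl a) = (f a).map inl := rfl

@[simp] lemma psum_inr (f : α →. β) (g : γ →. δ) (c : γ) :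
    psum f g (inr c) = (g c).map inr := rfl

-- `Part.mem_bind_iff` does not fire when the continuation is a `PFun`.
@[simp] lemma mem_bind_iff (o : Part α) (f : α →. β) (b : β) :
    b ∈ o.bind f ↔ ∃ a ∈ o, b ∈ f a :=
  Part.mem_bind_iff

end

variable {X X' U U' V W Y Y' : Type}

inductive Exits (f : X ⊕ U →. Y ⊕ U) : X ⊕ U → Y → Prop
  | exit {a y} : inl y ∈ f a → Exits f a y
  | loop {a u y} : inr u ∈ f a → Exits f (inr u) y → Exits f a y

namespace Exits

variable {f : X ⊕ U →. Y ⊕ U} {a : X ⊕ U} {y : Y}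

lemma iff_exists_mem : Exits f a y ↔ inl y ∈ f a ∨ ∃ u, inr u ∈ f a ∧ Exits f (inr u) y :=
  ⟨fun | exit hy => .inl hy | loop hu h => .inr ⟨_, hu, h⟩,
   fun | .inl hy => exit hy | .inr ⟨_, hu, h⟩ => loop hu h⟩

lemma unique {y' : Y} (h : Exits f a y) (h' : Exits f a y') : y = y' := by
  induction h generalizing y' with
  | exit hy =>
    cases h' with
    | exit hy' => exact inl_injective (Part.mem_unique hy hy')
    | loop hu _ => cases Part.mem_unique hy hu
  | loop hu _ ih =>
    cases h' with
    | exit hy' => cases Part.mem_unique hu hy'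
    | loop hu' h' => cases Part.mem_unique hu hu'; exact ih h'

lemma iff_reflTransGen : Exits f a y ↔ ∃ b, Relation.ReflTransGen
    (fun p q => ∃ u, inr u ∈ f p ∧ q = inr u) a b ∧ inl y ∈ f b := by
  constructor
  · intro h
    induction h with
    | exit hy => exact ⟨_, .refl, hy⟩
    | loop hu _ ih =>
      obtain ⟨b, hab, hb⟩ := ih
      exact ⟨b, .head ⟨_, hu, rfl⟩ hab, hb⟩
  · rintro ⟨b, hab, hb⟩
    induction hab using Relation.ReflTransGen.head_induction_on with
    | refl => exact exit hb
    | head hstep _ ih =>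
      obtain ⟨u, hu, rfl⟩ := hstep
      exact loop hu ih

lemma of_mem {b : Y ⊕ U} (hb : b ∈ f a)
    (h : Sum.elim (· = y) (fun u => Exits f (inr u) y) b) : Exits f a y := by
  rcases b with y' | u
  · exact exit (h ▸ hb)
  · exact loop hb h

lemma congr {f' : X' ⊕ U →. Y ⊕ U} {a' : X' ⊕ U} (h : Exits f a y)
    (ha : f a = f' a') (hinr : ∀ u, f (inr u) = f' (inr u)) : Exits f' a' y := by
  induction h generalizing a' with
  | exit hy => exact exit (ha ▸ hy)
  | loop hu _ ih => exact loop (ha ▸ hu) (ih (hinr _))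

end Exits

lemma traceRel_iff_exits {f : X ⊕ U →. Y ⊕ U} {x : X} {y : Y} :
    traceRel f x y ↔ Exits f (inl x) y :=
  Exits.iff_reflTransGen.symm

lemma mem_trace_iff_traceRel (f : X ⊕ U →. Y ⊕ U) (x : X) (y : Y) :
    y ∈ trace f x ↔ traceRel f x y := by
  constructor
  · rintro ⟨h, rfl⟩
    exact Classical.choose_spec h
  · intro h
    have hchoose := traceRel_iff_exits.1 (Classical.choose_spec ⟨y, h⟩)
    exact ⟨⟨y, h⟩, hchoose.unique (traceRel_iff_exits.1 h)⟩

@[simp] lemma mem_trace_iff_exits {f : X ⊕ U →. Y ⊕ U} {x : X} {y : Y} :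
    y ∈ trace f x ↔ Exits f (inl x) y :=
  (mem_trace_iff_traceRel f x y).trans traceRel_iff_exits

theorem trace_comp_psum_id (f : X ⊕ U →. Y ⊕ U) (g : X' →. X) :
    trace (f.comp (psum g (pfn id))) = (trace f).comp g := by
  have hinr (u : U) : f.comp (psum g (pfn id)) (inr u) = f (inr u) :=
    Part.bind_some (inr u) f
  ext x' y
  simp only [mem_trace_iff_exits, PFun.comp_apply, mem_bind_iff]
  constructor
  · rintro (⟨hy⟩ | ⟨hu, h⟩)
    · obtain ⟨x, hx, hy⟩ : ∃ x ∈ g x', inl y ∈ f (inl x) := by simpa using hy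
      exact ⟨x, hx, .exit hy⟩
    · obtain ⟨x, hx, hu⟩ : ∃ x ∈ g x', inr _ ∈ f (inl x) := by simpa using hu
      exact ⟨x, hx, .loop hu (h.congr (hinr _) hinr)⟩
  · rintro ⟨x, hx, (⟨hy⟩ | ⟨hu, h⟩)⟩
    · exact .exit (by simpa using ⟨x, hx, hy⟩)
    · exact .loop (by simpa using ⟨x, hx, hu⟩) (h.congr (hinr _).symm fun u => (hinr u).symm)

lemma exits_psum_comp_iff {f : X ⊕ U →. Y ⊕ U} {g : Y →. Y'} {a : X ⊕ U} {y' : Y'} :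
    Exits ((psum g (pfn id)).comp f) a y' ↔ ∃ y, Exits f a y ∧ y' ∈ g y := by
  constructor
  · intro h
    induction h with
    | exit hy =>
      obtain ⟨y, hy, hgy⟩ := by simpa using hy
      exact ⟨y, .exit hy, hgy⟩
    | loop hu _ ih =>
      obtain ⟨y, h, hgy⟩ := ih
      exact ⟨y, .loop (by simpa using hu) h, hgy⟩
  · rintro ⟨y, h, hgy⟩
    revert hgy
    induction h with
    | exit hy => exact fun hgy => .exit (by simpa using ⟨_, hy, hgy⟩)
    | loop hu _ ih => exact fun hgy => .loop (by simpa using hu) (ih hgy)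

theorem trace_psum_id_comp (f : X ⊕ U →. Y ⊕ U) (g : Y →. Y') :
    trace ((psum g (pfn id)).comp f) = g.comp (trace f) := by
  ext x y'
  simp [exits_psum_comp_iff]

lemma exits_comp_psum_iff {f : X ⊕ U →. Y ⊕ U'} {g : U' →. U} {b : X ⊕ U'} {y : Y} :
    Exits (f.comp (psum (pfn id) g)) b y ↔
      ∃ a ∈ psum (pfn id) g b, Exits ((psum (pfn id) g).comp f) a y := by
  constructor
  · intro h
    induction h with
    | exit hy =>
      obtain ⟨a, ha, hy⟩ := (mem_bind_iff _ _ _).1 hy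
      exact ⟨a, ha, .exit ((mem_bind_iff _ _ _).2 ⟨_, hy, by simp⟩)⟩
    | loop hu _ ih =>
      obtain ⟨a, ha, hu⟩ := (mem_bind_iff _ _ _).1 hu
      obtain ⟨_, hu', h⟩ := ih
      obtain ⟨u, hgu, rfl⟩ : ∃ u ∈ g _, inr u = _ := by simpa using hu'
      exact ⟨a, ha, .loop ((mem_bind_iff _ _ _).2 ⟨_, hu, by simpa using hgu⟩) h⟩
  · rintro ⟨a, ha, h⟩
    induction h generalizing b with
    | exit hy =>
      obtain ⟨c, hc, hyc⟩ := (mem_bind_iff _ _ _).1 hy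
      rcases c with y' | u' <;> simp at hyc
      subst hyc
      exact .exit ((mem_bind_iff _ _ _).2 ⟨_, ha, hc⟩)
    | loop hu _ ih =>
      obtain ⟨c, hc, huc⟩ := (mem_bind_iff _ _ _).1 hu
      rcases c with y' | u' <;> simp at huc
      exact .loop ((mem_bind_iff _ _ _).2 ⟨_, ha, hc⟩) (ih (by simpa using huc))

theorem trace_psum_comp_eq_trace_comp_psum (f : X ⊕ U →. Y ⊕ U') (g : U' →. U) :
    trace ((psum (pfn id) g).comp f) = trace (f.comp (psum (pfn id) g)) := by
  ext x y
  simp [exits_comp_psum_iff]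

theorem trace_superpose (f : X ⊕ U →. Y ⊕ U) :
    trace ((pfn (Equiv.sumAssoc W Y U).symm).comp
      ((psum (pfn (id : W → W)) f).comp (pfn (Equiv.sumAssoc W X U))))
      = psum (pfn (id : W → W)) (trace f) := by
  -- Away from `W`, `h` is `f` with its `Y`-outputs relabelled into `W ⊕ Y`,
  -- so naturality in both variables computes its trace there.
  set h := (pfn (Equiv.sumAssoc W Y U).symm).comp
    ((psum (pfn (id : W → W)) f).comp (pfn (Equiv.sumAssoc W X U))) with h_def
  have h_inl (w : W) : trace h (inl w) = Part.some (inl w) := by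
    ext z
    rw [mem_trace_iff_exits, Exits.iff_exists_mem]
    simp [h_def]
  have h_inr : h.comp (psum (pfn inr) (pfn id)) = (psum (pfn inr) (pfn id)).comp f := by
    ext (x | u) b <;> simp [h_def]
  have h_trace_inr : (trace h).comp (pfn inr) = (pfn inr).comp (trace f) := by
    rw [← trace_comp_psum_id, h_inr, trace_psum_id_comp]
  ext (w | x) z
  · simp [h_inl]
  · simpa [eq_comm] using PFun.ext_iff.1 h_trace_inr x z

theorem trace_empty (f : X ⊕ Empty →. Y ⊕ Empty) :
    trace f = (pfn (Sum.elim id Empty.elim)).comp (f.comp (pfn inl)) := by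
  ext x y
  rw [mem_trace_iff_exits, Exits.iff_exists_mem]
  simp

theorem trace_swap : trace (pfn (Sum.swap : U ⊕ U → U ⊕ U)) = pfn id := by
  ext u y
  simp [Exits.iff_exists_mem (a := inl u), Exits.iff_exists_mem (a := inr u)]

def reassoc (f : X ⊕ (U ⊕ V) →. Y ⊕ (U ⊕ V)) : (X ⊕ U) ⊕ V →. (Y ⊕ U) ⊕ V :=
  (pfn (Equiv.sumAssoc Y U V).symm).comp (f.comp (pfn (Equiv.sumAssoc X U V)))

section Vanishing

variable {f : X ⊕ (U ⊕ V) →. Y ⊕ (U ⊕ V)}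

@[simp] lemma mem_reassoc {c : (X ⊕ U) ⊕ V} {b : (Y ⊕ U) ⊕ V} :
    b ∈ reassoc f c ↔ Equiv.sumAssoc Y U V b ∈ f (Equiv.sumAssoc X U V c) := by
  simp only [reassoc, PFun.comp_apply, pfn_apply, mem_bind_iff, Part.mem_some_iff,
    Equiv.eq_symm_apply, exists_eq_right', exists_eq_left]

lemma exits_of_exits_reassoc {c : (X ⊕ U) ⊕ V} {z : Y ⊕ U} {y : Y}
    (h : Exits (reassoc f) c z) (hz : Sum.elim (· = y) (fun u => Exits f (inr (inl u)) y) z) :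
    Exits f (Equiv.sumAssoc X U V c) y := by
  induction h with
  | @exit c z hz' =>
    rcases z with y' | u
    · exact .exit (by simpa [← show y' = y from hz] using hz')
    · exact .loop (by simpa using hz') hz
  | loop hv _ ih => exact .loop (by simpa using hv) (ih hz)

lemma exits_of_exits_trace_reassoc {a : X ⊕ U} {y : Y} (h : Exits (trace (reassoc f)) a y) :
    Exits f (Equiv.sumAssoc X U V (inl a)) y := by
  induction h with
  | exit hy => exact exits_of_exits_reassoc (mem_trace_iff_exits.1 hy) rfl
  | loop hu _ ih => exact exits_of_exits_reassoc (mem_trace_iff_exits.1 hu) ih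

-- `z` is where the `V`-loop of `reassoc f` started at `c` leaves; an exit into `U` is resumed
-- by the outer trace.
lemma exists_exits_reassoc_of_exits {p : X ⊕ (U ⊕ V)} {y : Y} (h : Exits f p y)
    (c : (X ⊕ U) ⊕ V) (hc : Equiv.sumAssoc X U V c = p) :
    ∃ z, Exits (reassoc f) c z ∧
      Sum.elim (· = y) (fun u => Exits (trace (reassoc f)) (inr u) y) z := by
  induction h generalizing c with
  | @exit p y hy => exact ⟨inl y, .exit (by simpa [hc] using hy), rfl⟩
  | @loop p w y hw _ ih =>
    rcases w with u | v
    · obtain ⟨z, hz, hzy⟩ := ih (inl (inr u)) rfl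
      exact ⟨inr u, .exit (by simpa [hc] using hw), .of_mem (mem_trace_iff_exits.2 hz) hzy⟩
    · obtain ⟨z, hz, hzy⟩ := ih (inr v) rfl
      exact ⟨z, .loop (by simpa [hc] using hw) hz, hzy⟩

theorem trace_eq_trace_trace_reassoc (f : X ⊕ (U ⊕ V) →. Y ⊕ (U ⊕ V)) :
    trace f = trace (trace (reassoc f)) := by
  ext x y
  simp only [mem_trace_iff_exits]
  constructor
  · intro h
    obtain ⟨z, hz, hzy⟩ := exists_exits_reassoc_of_exits h (inl (inl x)) rfl
    exact .of_mem (mem_trace_iff_exits.2 hz) hzy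
  · exact exits_of_exits_trace_reassoc

end Vanishing

/-- `Setp` (sets and partial functions, with disjoint union as
tensor) is traced symmetric monoidal: the feedback operator `trace` satisfies the
Joyal–Street–Verity axioms: naturality in `X` and `Y`, dinaturality in `U`,
vanishing (both forms), superposing and yanking. -/
theorem statement3 :
    -- the trace relation is indeed the graph of `trace`
    (∀ (X U Y : Type) (f : X ⊕ U →. Y ⊕ U) (x : X) (y : Y),
        y ∈ trace f x ↔ traceRel f x y) ∧
    -- naturality in X
    (∀ (X X' U Y : Type) (f : X ⊕ U →. Y ⊕ U) (g : X' →. X),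
        trace (f.comp (psum g (pfn (id : U → U)))) = (trace f).comp g) ∧
    -- naturality in Y
    (∀ (X U Y Y' : Type) (f : X ⊕ U →. Y ⊕ U) (g : Y →. Y'),
        trace ((psum g (pfn (id : U → U))).comp f) = g.comp (trace f)) ∧
    -- dinaturality in U
    (∀ (X U U' Y : Type) (f : X ⊕ U →. Y ⊕ U') (g : U' →. U),
        trace ((psum (pfn (id : Y → Y)) g).comp f)
          = trace (f.comp (psum (pfn (id : X → X)) g))) ∧
    -- vanishing (unit)
    (∀ (X Y : Type) (f : X ⊕ Empty →. Y ⊕ Empty),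
        trace f = (pfn (Sum.elim id Empty.elim)).comp (f.comp (pfn Sum.inl))) ∧
    -- vanishing (tensor)
    (∀ (X U V Y : Type) (f : X ⊕ (U ⊕ V) →. Y ⊕ (U ⊕ V)),
        trace f = trace (trace
          ((pfn (Equiv.sumAssoc Y U V).symm).comp
            (f.comp (pfn (Equiv.sumAssoc X U V))))) ) ∧
    -- superposing
    (∀ (W X U Y : Type) (f : X ⊕ U →. Y ⊕ U),
        trace ((pfn (Equiv.sumAssoc W Y U).symm).comp
          ((psum (pfn (id : W → W)) f).comp (pfn (Equiv.sumAssoc W X U))))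
          = psum (pfn (id : W → W)) (trace f)) ∧
    -- yanking
    (∀ U : Type, trace (pfn (Sum.swap : U ⊕ U → U ⊕ U)) = pfn (id : U → U)) :=
  ⟨fun _ _ _ => mem_trace_iff_traceRel,
   fun _ _ _ _ => trace_comp_psum_id,
   fun _ _ _ _ => trace_psum_id_comp,
   fun _ _ _ _ => trace_psum_comp_eq_trace_comp_psum,
   fun _ _ => trace_empty,
   fun _ _ _ _ => trace_eq_trace_trace_reassoc,
   fun _ _ _ _ => trace_superpose,
   fun _ => trace_swap⟩

end SetpTrace
end

section
/- The identity leaf function on a shape S (connecting the i-th leaf of the source copy of S to the i-th leaf of the target copy) satisfies the switching criterion: every switching of the identity S → S is a tree. (Proof by induction on the number of tensors in S.) -/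
attribute [local instance] Classical.propDecidable

namespace Nets

/-- A star-autonomous shape over a type `A` of generators: an expression built
from generators and the unit `I` by binary tensor and unary dual. -/
inductive Shape (A : Type) : Type where
  | gen : A → Shape A
  | unit : Shape A
  | tensor : Shape A → Shape A → Shape A
  | dual : Shape A → Shape A

/-- A vertex of the parse tree of a shape. -/
inductive Vtx {A : Type} : Shape A → Type where
  | root (S : Shape A) : Vtx S
  | tleft {S T : Shape A} : Vtx S → Vtx (Shape.tensor S T)
  | tright {S T : Shape A} : Vtx T → Vtx (Shape.tensor S T)
  | dchild {S : Shape A} : Vtx S → Vtx (Shape.dual S)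

namespace Shape

variable {A : Type}

/-- The sign of a vertex: `true` (positive) iff it is under an even number of duals. -/
def vsign : {S : Shape A} → Vtx S → Bool
  | _, .root _ => true
  | _, .tleft v => vsign v
  | _, .tright v => vsign v
  | _, .dchild v => !vsign v

/-- The subshape rooted at a vertex. -/
def subtreeAt : {S : Shape A} → Vtx S → Shape A
  | S, .root _ => S
  | _, .tleft v => subtreeAt v
  | _, .tright v => subtreeAt v
  | _, .dchild v => subtreeAt v

/-- Atoms: generators and the unit. -/
def IsAtom : Shape A → Prop
  | gen _ => True
  | unit => True
  | _ => False

def IsTensorSh : Shape A → Prop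
  | tensor _ _ => True
  | _ => False

/-- The generator labelling a shape, if any. -/
def lblSh : Shape A → Option A
  | gen a => some a
  | _ => none

/-- The parent of a vertex in the parse tree (none at the root). -/
def parent : {S : Shape A} → Vtx S → Option (Vtx S)
  | _, .root _ => none
  | _, .tleft v => some (match parent v with | none => .root _ | some p => .tleft p)
  | _, .tright v => some (match parent v with | none => .root _ | some p => .tright p)
  | _, .dchild v => some (match parent v with | none => .root _ | some p => .dchild p)

/-- Which argument of its parent a vertex is (false = left, true = right);
only meaningful when the parent is a tensor. -/
def sideOf : {S : Shape A} → Vtx S → Bool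
  | _, .root _ => false
  | _, .tleft v => match v with
    | .root _ => false
    | w => sideOf w
  | _, .tright v => match v with
    | .root _ => true
    | w => sideOf w
  | _, .dchild v => match v with
    | .root _ => false
    | w => sideOf w

end Shape

open Shape

/-- A cut sequent: a family of shapes (the sequent proper) together with a
family of cut pairs, the cut pair at `j` consisting of `cuts j` and its dual,
joined by a cut edge between their roots.  A plain sequent is the case where
the cut index type `κ` is empty. -/
structure CutSeq (A : Type) where
  ι : Type
  main : ι → Shape A
  κ : Type
  cuts : κ → Shape A

namespace CutSeq

variable {A : Type}

/-- The vertices of (the parse forest of) a cut sequent. -/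
def Vt (Γ : CutSeq A) : Type :=
  (Σ i : Γ.ι, Vtx (Γ.main i)) ⊕ (Σ j : Γ.κ, (Vtx (Γ.cuts j) ⊕ Vtx (Shape.dual (Γ.cuts j))))

variable {Γ : CutSeq A}

def sgn : Γ.Vt → Bool
  | .inl ⟨_, v⟩ => vsign v
  | .inr ⟨_, .inl v⟩ => vsign v
  | .inr ⟨_, .inr v⟩ => vsign v

def shapeAt : Γ.Vt → Shape A
  | .inl ⟨_, v⟩ => subtreeAt v
  | .inr ⟨_, .inl v⟩ => subtreeAt v
  | .inr ⟨_, .inr v⟩ => subtreeAt v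

def leaf (v : Γ.Vt) : Prop := IsAtom (shapeAt v)
def unitLeaf (v : Γ.Vt) : Prop := shapeAt v = Shape.unit
def lblAt (v : Γ.Vt) : Option A := lblSh (shapeAt v)

def par : Γ.Vt → Option Γ.Vt
  | .inl ⟨i, v⟩ => (parent v).map fun p => .inl ⟨i, p⟩
  | .inr ⟨j, .inl v⟩ => (parent v).map fun p => .inr ⟨j, .inl p⟩
  | .inr ⟨j, .inr v⟩ => (parent v).map fun p => .inr ⟨j, .inr p⟩

def side : Γ.Vt → Bool
  | .inl ⟨_, v⟩ => sideOf v
  | .inr ⟨_, .inl v⟩ => sideOf v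
  | .inr ⟨_, .inr v⟩ => sideOf v

/-- Switched vertices: negative tensors (one argument edge is deleted in a switching). -/
def switched (v : Γ.Vt) : Prop := IsTensorSh (shapeAt v) ∧ sgn v = false

def IsNeg (v : Γ.Vt) : Prop := leaf v ∧ sgn v = false
def IsPos (v : Γ.Vt) : Prop := leaf v ∧ sgn v = true

def NegLeaf (Γ : CutSeq A) : Type := {v : Γ.Vt // IsNeg v}
def PosLeaf (Γ : CutSeq A) : Type := {v : Γ.Vt // IsPos v}

/-- The cut edges, joining the roots of the two shapes of each cut pair. -/
def cutEdge (a b : Γ.Vt) : Prop :=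
  ∃ j : Γ.κ, a = .inr ⟨j, .inl (Vtx.root _)⟩ ∧ b = .inr ⟨j, .inr (Vtx.root _)⟩

/-- A lax leaf function: every negative leaf gets an edge; edges from
generator-labelled leaves must target positive leaves, edges from negative
unit leaves may target arbitrary vertices. -/
structure LaxLF (Γ : CutSeq A) where
  f : NegLeaf Γ → Γ.Vt
  gen_ok : ∀ v : NegLeaf Γ, ¬ unitLeaf v.1 → IsPos (f v)

/-- Standard leaf functions: every edge targets a positive leaf. -/
def IsStandard (L : LaxLF Γ) : Prop := ∀ v, IsPos (L.f v)

/-- The switching determined by `σ`: delete the argument edge on the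
non-chosen side of every negative tensor; keep parse edges, cut edges and
the (undirected) edges of the leaf function. -/
def switchGraph (L : LaxLF Γ) (σ : Γ.Vt → Bool) : SimpleGraph Γ.Vt :=
  SimpleGraph.fromRel fun a b =>
    (par a = some b ∧ (switched b → σ b = side a)) ∨ cutEdge a b ∨
      ∃ h : IsNeg a, L.f ⟨a, h⟩ = b

/-- The switching criterion: every switching is a tree. -/
def SwitchOK (L : LaxLF Γ) : Prop := ∀ σ : Γ.Vt → Bool, (switchGraph L σ).IsTree

/-- The matching criterion: the restriction of the leaf function to
`a`-labelled leaves is a label-preserving bijection, for each generator `a`. -/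
def Matching (L : LaxLF Γ) : Prop :=
  (∀ (v : NegLeaf Γ) (a : A), lblAt v.1 = some a → lblAt (L.f v) = some a) ∧
  (∀ v w : NegLeaf Γ, ¬ unitLeaf v.1 → ¬ unitLeaf w.1 → L.f v = L.f w → v = w) ∧
  (∀ (w : PosLeaf Γ) (a : A), lblAt w.1 = some a →
      ∃ v : NegLeaf Γ, ¬ unitLeaf v.1 ∧ L.f v = w.1)

/-- A lax linking: a lax leaf function satisfying matching and the switching criterion. -/
def IsLaxLink (L : LaxLF Γ) : Prop := Matching L ∧ SwitchOK L

/-- A (standard) linking. -/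
def IsLink (L : LaxLF Γ) : Prop := IsLaxLink L ∧ IsStandard L

/-- Similarity (Trimble rewiring): two lax linkings differing only in the
target of one edge from a negative unit leaf. -/
def Similar (L L' : LaxLF Γ) : Prop :=
  IsLaxLink L ∧ IsLaxLink L' ∧
  ∃ u : NegLeaf Γ, unitLeaf u.1 ∧ ∀ v : NegLeaf Γ, v ≠ u → L.f v = L'.f v

/-- Lax equivalence: chains of similar lax linkings. -/
def LaxEquiv : LaxLF Γ → LaxLF Γ → Prop := Relation.ReflTransGen Similar

def StdSimilar (L L' : LaxLF Γ) : Prop := Similar L L' ∧ IsStandard L ∧ IsStandard L'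

/-- Standard equivalence: chains of similar standard linkings. -/
def StdEquiv : LaxLF Γ → LaxLF Γ → Prop := Relation.ReflTransGen StdSimilar

end CutSeq

open CutSeq

/-- The (cut-free) sequent `S^⊥, T` encoding a two-sided linking `S → T`. -/
def two {A : Type} (S T : Shape A) : CutSeq A where
  ι := Bool
  main := fun b => match b with
    | false => Shape.dual S
    | true => T
  κ := Empty
  cuts := fun j => j.elim

end Nets

namespace Nets

open Shape CutSeq

variable {A : Type}

/-- Characterization of the identity linking `S → S`: the `i`-th leaf of the
source copy of `S` is joined to the `i`-th leaf of the target copy. -/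
def idChar (S : Shape A) (L : LaxLF (two S S)) : Prop :=
  (∀ (u : Vtx S) (h : IsNeg (Γ := two S S) (Sum.inl ⟨false, Vtx.dchild u⟩)),
      L.f ⟨Sum.inl ⟨false, Vtx.dchild u⟩, h⟩ = Sum.inl ⟨true, u⟩) ∧
  (∀ (u : Vtx S) (h : IsNeg (Γ := two S S) (Sum.inl ⟨true, u⟩)),
      L.f ⟨Sum.inl ⟨true, u⟩, h⟩ = Sum.inl ⟨false, Vtx.dchild u⟩)

end Nets

/-!
Delete the root of `S^⊥` from a switching of the identity on `S`. What remains lives on two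
copies of the parse tree of `S`: the source copy, whose signs are flipped by the dual, and the
target copy, joined by one edge between the two copies of each atom. This graph is a tree, by
induction on `S`: for an atom it is a single edge; for `T^⊥` it is the graph of `T` with its
copies exchanged, plus the two roots hanging from the roots of `T`; for `T ⊗ U` the root of the
target copy is a positive tensor, which joins the trees of `T` and `U`, and the root of the source
copy is a negative tensor, which hangs from the one argument the switching keeps. Every step, and
finally reattaching the root of `S^⊥` to the source root, joins two trees by a single edge.
-/

namespace SimpleGraph

variable {V W : Type*} {G : SimpleGraph V} {H : SimpleGraph W}

theorem Walk.IsCycle.induce {s : Set V} {v : V} {c : G.Walk v v} (hc : c.IsCycle)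
    (hs : ∀ x ∈ c.support, x ∈ s) : (c.induce s hs).IsCycle :=
  Walk.IsCycle.of_map (f := (Embedding.induce s).toHom) (by rwa [Walk.map_induce])

theorem IsAcyclic.not_isCycle_sum_of_isLeft (hG : G.IsAcyclic) {x : V ⊕ W} (hx : x.isLeft)
    (c : (G ⊕g H).Walk x x) : ¬ c.IsCycle := by
  obtain ⟨v, rfl⟩ := Sum.isLeft_iff.mp hx
  intro hc
  have hs : ∀ y ∈ c.support, y ∈ Set.range Sum.inl := by
    rintro (y | y) hy
    · exact ⟨y, rfl⟩
    · exact absurd (c.takeUntil _ hy).reachable (not_reachable_sum_inl_inr v y)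
  exact (Embedding.sumInl (H := H)).isoInduceRange.isAcyclic_iff.mp hG _ (hc.induce hs)

theorem IsAcyclic.sum (hG : G.IsAcyclic) (hH : H.IsAcyclic) : (G ⊕g H).IsAcyclic := by
  rintro (v | w) c hc
  · exact hG.not_isCycle_sum_of_isLeft rfl c hc
  · let e : G ⊕g H ≃g H ⊕g G := Iso.sumComm
    exact hH.not_isCycle_sum_of_isLeft rfl _ (hc.map (f := e.toHom) e.injective)

theorem IsTree.sum_sup_edge (hG : G.IsTree) (hH : H.IsTree) (v : V) (w : W) :
    ((G ⊕g H) ⊔ edge (Sum.inl v) (Sum.inr w)).IsTree :=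
  ⟨hG.connected.sum_sup_edge hH.connected,
    (hG.isAcyclic.sum hH.isAcyclic).sup_edge_of_not_reachable (not_reachable_sum_inl_inr v w)⟩

end SimpleGraph

namespace Nets

open Shape CutSeq SimpleGraph

variable {A : Type}

/-- `v` is an argument of `w` on side `s`; the argument of a dual counts as side `false`. -/
inductive IsChild : {S : Shape A} → Vtx S → Vtx S → Bool → Prop
  | tleft_root {T U : Shape A} : IsChild (Vtx.tleft (T := U) (Vtx.root T)) (Vtx.root _) false
  | tright_root {T U : Shape A} : IsChild (Vtx.tright (S := T) (Vtx.root U)) (Vtx.root _) true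
  | dchild_root {T : Shape A} : IsChild (Vtx.dchild (Vtx.root T)) (Vtx.root _) false
  | tleft {T U : Shape A} {v w : Vtx T} {s : Bool} :
      IsChild v w s → IsChild (Vtx.tleft (T := U) v) (Vtx.tleft w) s
  | tright {T U : Shape A} {v w : Vtx U} {s : Bool} :
      IsChild v w s → IsChild (Vtx.tright (S := T) v) (Vtx.tright w) s
  | dchild {T : Shape A} {v w : Vtx T} {s : Bool} :
      IsChild v w s → IsChild (Vtx.dchild v) (Vtx.dchild w) s

namespace IsChild

variable {T U : Shape A} {s : Bool}

@[simp] theorem not_root {S : Shape A} {w : Vtx S} : ¬ IsChild (Vtx.root S) w s := by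
  rintro ⟨⟩

@[simp] theorem tleft_root_iff {v : Vtx T} :
    IsChild (Vtx.tleft (T := U) v) (Vtx.root _) s ↔ v = Vtx.root T ∧ s = false :=
  ⟨by rintro ⟨⟩; exact ⟨rfl, rfl⟩, by rintro ⟨rfl, rfl⟩; exact tleft_root⟩

@[simp] theorem tright_root_iff {v : Vtx U} :
    IsChild (Vtx.tright (S := T) v) (Vtx.root _) s ↔ v = Vtx.root U ∧ s = true :=
  ⟨by rintro ⟨⟩; exact ⟨rfl, rfl⟩, by rintro ⟨rfl, rfl⟩; exact tright_root⟩

@[simp] theorem dchild_root_iff {v : Vtx T} :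
    IsChild (Vtx.dchild v) (Vtx.root _) s ↔ v = Vtx.root T ∧ s = false :=
  ⟨by rintro ⟨⟩; exact ⟨rfl, rfl⟩, by rintro ⟨rfl, rfl⟩; exact dchild_root⟩

@[simp] theorem tleft_tleft_iff {v w : Vtx T} :
    IsChild (Vtx.tleft (T := U) v) (Vtx.tleft w) s ↔ IsChild v w s :=
  ⟨by rintro ⟨⟩; assumption, tleft⟩

@[simp] theorem tright_tright_iff {v w : Vtx U} :
    IsChild (Vtx.tright (S := T) v) (Vtx.tright w) s ↔ IsChild v w s :=
  ⟨by rintro ⟨⟩; assumption, tright⟩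

@[simp] theorem dchild_dchild_iff {v w : Vtx T} :
    IsChild (Vtx.dchild v) (Vtx.dchild w) s ↔ IsChild v w s :=
  ⟨by rintro ⟨⟩; assumption, dchild⟩

@[simp] theorem not_tleft_tright {v : Vtx T} {w : Vtx U} :
    ¬ IsChild (Vtx.tleft v) (Vtx.tright w) s := by
  rintro ⟨⟩

@[simp] theorem not_tright_tleft {v : Vtx U} {w : Vtx T} :
    ¬ IsChild (Vtx.tright v) (Vtx.tleft w) s := by
  rintro ⟨⟩

theorem sideOf_eq {S : Shape A} {v w : Vtx S} (h : IsChild v w s) : sideOf v = s := by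
  induction h with
  | tleft_root | tright_root | dchild_root => rfl
  | tleft h ih | tright h ih | dchild h ih => cases h <;> exact ih

theorem parent_eq {S : Shape A} {v w : Vtx S} (h : IsChild v w s) : parent v = some w := by
  induction h <;> simp_all [parent]

end IsChild

theorem exists_isChild_of_parent_eq_some {S : Shape A} {v w : Vtx S} (h : parent v = some w) :
    ∃ s, IsChild v w s := by
  induction v with
  | root => simp [parent] at h
  | tleft v ih | tright v ih | dchild v ih =>
    cases hp : parent v with
    | none =>
      obtain rfl : v = .root _ := by cases v <;> simp_all [parent]
      simp only [parent, Option.some.injEq] at h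
      exact h ▸ ⟨_, by constructor⟩
    | some p =>
      simp only [parent, hp, Option.some.injEq] at h
      exact h ▸ (ih hp).imp fun _ hs => by constructor; exact hs

theorem parent_eq_some_iff {S : Shape A} {v w : Vtx S} :
    parent v = some w ↔ IsChild v w (sideOf v) :=
  ⟨fun h => have ⟨_, hs⟩ := exists_isChild_of_parent_eq_some h; hs.sideOf_eq ▸ hs,
    IsChild.parent_eq⟩

theorem exists_isChild_and_iff {S : Shape A} {v w : Vtx S} {p : Bool → Prop} :
    (∃ s, IsChild v w s ∧ p s) ↔ IsChild v w (sideOf v) ∧ p (sideOf v) :=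
  ⟨fun ⟨_, h, hp⟩ => h.sideOf_eq ▸ ⟨h, hp⟩, fun h => ⟨_, h⟩⟩

@[simp] theorem sideOf_dchild {T : Shape A} (v : Vtx T) : sideOf (Vtx.dchild v) = sideOf v := by
  cases v <;> rfl

/-- A vertex of `S^⊥, S` other than the root of `S^⊥`: `(v, false)` is `v` in the source copy
(under the dual) and `(v, true)` is `v` in the target copy. -/
abbrev Pt (S : Shape A) : Type := Vtx S × Bool

/-- The sign of `(v, b)` in `S^⊥, S` is `vsign v` for `b = true` and its negation for `b = false`,
so this says that `(v, b)` is a negative tensor. -/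
def Pt.IsSwitched {S : Shape A} (x : Pt S) : Prop :=
  IsTensorSh (subtreeAt x.1) ∧ vsign x.1 ≠ x.2

/-- The switching `χ` of the identity on `S`, with the root of `S^⊥` deleted. -/
def idGraph (S : Shape A) (χ : Pt S → Bool) : SimpleGraph (Pt S) :=
  SimpleGraph.fromRel fun x y =>
    (∃ s, IsChild x.1 y.1 s ∧ x.2 = y.2 ∧ (y.IsSwitched → χ y = s)) ∨
      (x.1 = y.1 ∧ x.2 ≠ y.2 ∧ IsAtom (subtreeAt x.1))

theorem isTree_idGraph_of_isAtom {S : Shape A} (hS : Shape.IsAtom S)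
    (hroot : ∀ v : Vtx S, v = .root S) (χ : Pt S → Bool) : (idGraph S χ).IsTree := by
  let e : Pt S ≃ Unit ⊕ Unit :=
    { toFun := fun x => if x.2 then .inr () else .inl ()
      invFun := Sum.elim (fun _ => (.root S, false)) (fun _ => (.root S, true))
      left_inv := by rintro ⟨v, _ | _⟩ <;> simp [hroot v]
      right_inv := by rintro (⟨⟩ | ⟨⟩) <;> rfl }
  refine (Iso.isTree_iff ⟨e, ?_⟩).mpr ((IsTree.of_subsingleton (G := ⊥)).sum_sup_edge
    (.of_subsingleton (G := ⊥)) () ())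
  rintro ⟨v, _ | _⟩ ⟨w, _ | _⟩ <;> obtain rfl := hroot v <;> obtain rfl := hroot w <;>
    simp [e, idGraph, edge_adj, subtreeAt, hS]

def Pt.dualEquiv (T : Shape A) : Pt (Shape.dual T) ≃ (Pt T ⊕ Unit) ⊕ Unit where
  toFun
    | (.dchild v, b) => .inl (.inl (v, !b))
    | (.root _, true) => .inl (.inr ())
    | (.root _, false) => .inr ()
  invFun
    | .inl (.inl (v, b)) => (.dchild v, !b)
    | .inl (.inr ()) => (.root _, true)
    | .inr () => (.root _, false)
  left_inv := by rintro ⟨_ | _ | _ | v, _ | _⟩ <;> rfl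
  right_inv := by rintro ((⟨v, _ | _⟩ | ⟨⟩) | ⟨⟩) <;> rfl

theorem isTree_idGraph_dual {T : Shape A} (hT : ∀ χ, (idGraph T χ).IsTree)
    (χ : Pt (Shape.dual T) → Bool) : (idGraph (Shape.dual T) χ).IsTree := by
  set χT : Pt T → Bool := fun x => χ (.dchild x.1, !x.2)
  have hX := ((hT χT).sum_sup_edge (.of_subsingleton (G := (⊥ : SimpleGraph Unit)))
    (Vtx.root T, false) ()).sum_sup_edge (.of_subsingleton (G := (⊥ : SimpleGraph Unit)))
    (.inl (Vtx.root T, true)) ()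
  refine (Iso.isTree_iff ⟨Pt.dualEquiv T, ?_⟩).mpr hX
  rintro ⟨_ | _ | _ | v, _ | _⟩ ⟨_ | _ | _ | w, _ | _⟩ <;>
    simp [Pt.dualEquiv, idGraph, edge_adj, Pt.IsSwitched, vsign, subtreeAt, Shape.IsAtom,
      Shape.IsTensorSh, χT]

def Pt.tensorEquiv (T U : Shape A) :
    Pt (Shape.tensor T U) ≃ ((Pt T ⊕ Unit) ⊕ Pt U) ⊕ Unit where
  toFun
    | (.tleft v, b) => .inl (.inl (.inl (v, b)))
    | (.tright v, b) => .inl (.inr (v, b))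
    | (.root _, true) => .inl (.inl (.inr ()))
    | (.root _, false) => .inr ()
  invFun
    | .inl (.inl (.inl (v, b))) => (.tleft v, b)
    | .inl (.inr (v, b)) => (.tright v, b)
    | .inl (.inl (.inr ())) => (.root _, true)
    | .inr () => (.root _, false)
  left_inv := by rintro ⟨_ | v | v, _ | _⟩ <;> rfl
  right_inv := by rintro (((⟨v, _⟩ | ⟨⟩) | ⟨v, _⟩) | ⟨⟩) <;> rfl

theorem isTree_idGraph_tensor {T U : Shape A} (hT : ∀ χ, (idGraph T χ).IsTree)
    (hU : ∀ χ, (idGraph U χ).IsTree) (χ : Pt (Shape.tensor T U) → Bool) :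
    (idGraph (Shape.tensor T U) χ).IsTree := by
  set χT : Pt T → Bool := fun x => χ (.tleft x.1, x.2)
  set χU : Pt U → Bool := fun x => χ (.tright x.1, x.2)
  have hX := (((hT χT).sum_sup_edge (.of_subsingleton (G := (⊥ : SimpleGraph Unit)))
    (Vtx.root T, true) ()).sum_sup_edge (hU χU) (.inr ()) (Vtx.root U, true)).sum_sup_edge
    (.of_subsingleton (G := (⊥ : SimpleGraph Unit)))
    (if χ (Vtx.root _, false) then .inr (Vtx.root U, false)
      else .inl (.inl (Vtx.root T, false))) ()
  refine (Iso.isTree_iff ⟨Pt.tensorEquiv T U, ?_⟩).mpr hX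
  rintro ⟨_ | v | v, _ | _⟩ ⟨_ | w | w, _ | _⟩ <;>
    simp only [Pt.tensorEquiv, Equiv.coe_fn_mk, idGraph, fromRel_adj, sup_adj, sum_adj, edge_adj,
      Pt.IsSwitched, vsign, subtreeAt, Shape.IsAtom, Shape.IsTensorSh, χT, χU, IsChild.not_root,
      IsChild.tleft_root_iff, IsChild.tright_root_iff, IsChild.not_tleft_tright,
      IsChild.not_tright_tleft, IsChild.tleft_tleft_iff, IsChild.tright_tright_iff,
      Vtx.tleft.injEq, Vtx.tright.injEq, Prod.mk.injEq, Sum.inl.injEq, Sum.inr.injEq,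
      reduceCtorEq, Bool.exists_bool, ne_eq] <;>
    (try simp) <;> cases χ (Vtx.root _, false) <;> simp

theorem isTree_idGraph : ∀ (S : Shape A) (χ : Pt S → Bool), (idGraph S χ).IsTree
  | .gen _, χ => isTree_idGraph_of_isAtom (S := .gen _) trivial (by rintro ⟨⟩; rfl) χ
  | .unit, χ => isTree_idGraph_of_isAtom (S := .unit) trivial (by rintro ⟨⟩; rfl) χ
  | .tensor T U, χ => isTree_idGraph_tensor (isTree_idGraph T) (isTree_idGraph U) χ
  | .dual T, χ => isTree_idGraph_dual (isTree_idGraph T) χ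

def ofPt {S : Shape A} : Pt S → (two S S).Vt
  | (v, false) => .inl ⟨false, .dchild v⟩
  | (v, true) => .inl ⟨true, v⟩

def rootV (S : Shape A) : (two S S).Vt := .inl ⟨false, .root _⟩

theorem par_inl_eq_inl {Γ : CutSeq A} {i : Γ.ι} {v w : Vtx (Γ.main i)} :
    par (.inl ⟨i, v⟩ : Γ.Vt) = some (.inl ⟨i, w⟩) ↔ parent v = some w := by
  show (parent v).map _ = _ ↔ _
  cases parent v with
  | none => exact iff_of_false (fun h => Option.some_ne_none _ h.symm) (Option.some_ne_none _).symm
  | some p => exact ⟨fun h => congrArg some (eq_of_heq (Sigma.mk.inj (Sum.inl.inj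
      (Option.some.inj h))).2), fun h => by cases h; rfl⟩

theorem par_inl_ne_inl {Γ : CutSeq A} {i j : Γ.ι} (hij : i ≠ j) (v : Vtx (Γ.main i))
    (w : Vtx (Γ.main j)) : par (.inl ⟨i, v⟩ : Γ.Vt) ≠ some (.inl ⟨j, w⟩) := by
  show (parent v).map _ ≠ _
  cases parent v with
  | none => exact fun h => Option.some_ne_none _ h.symm
  | some p => exact fun h => hij (Sigma.mk.inj (Sum.inl.inj (Option.some.inj h))).1

section ofPt

variable {S : Shape A}

theorem ofPt_injective : Function.Injective (ofPt (S := S)) := by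
  rintro ⟨v, _ | _⟩ ⟨w, _ | _⟩ h <;> cases h <;> rfl

theorem ofPt_ne_rootV (x : Pt S) : ofPt x ≠ rootV S := by
  rcases x with ⟨v, _ | _⟩ <;> rintro ⟨⟩

theorem parent_dchild_eq_some_dchild {v w : Vtx S} :
    parent (Vtx.dchild v) = some (Vtx.dchild w) ↔ IsChild v w (sideOf v) := by
  rw [parent_eq_some_iff, IsChild.dchild_dchild_iff, sideOf_dchild]

theorem parent_dchild_eq_some_root {v : Vtx S} :
    parent (Vtx.dchild v) = some (Vtx.root (Shape.dual S)) ↔ v = Vtx.root S := by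
  rw [parent_eq_some_iff, IsChild.dchild_root_iff]
  exact ⟨And.left, fun h => ⟨h, h ▸ rfl⟩⟩

theorem par_ofPt_eq_ofPt {x y : Pt S} :
    par (ofPt x) = some (ofPt y) ↔ x.2 = y.2 ∧ IsChild x.1 y.1 (sideOf x.1) := by
  rcases x with ⟨v, _ | _⟩ <;> rcases y with ⟨w, _ | _⟩
  · exact par_inl_eq_inl.trans (parent_dchild_eq_some_dchild.trans (by simp))
  · exact iff_of_false (par_inl_ne_inl Bool.false_ne_true _ _) (by simp)
  · exact iff_of_false (par_inl_ne_inl Bool.false_ne_true.symm _ _) (by simp)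
  · exact par_inl_eq_inl.trans (parent_eq_some_iff.trans ⟨fun h => ⟨rfl, h⟩, And.right⟩)

theorem par_ofPt_eq_rootV {x : Pt S} : par (ofPt x) = some (rootV S) ↔ x = (.root S, false) := by
  rcases x with ⟨v, _ | _⟩
  · exact par_inl_eq_inl.trans (parent_dchild_eq_some_root.trans (by simp))
  · exact iff_of_false (par_inl_ne_inl Bool.false_ne_true.symm _ _) (by simp)

theorem par_rootV : par (rootV S) = none := rfl

theorem side_ofPt (x : Pt S) : side (ofPt x) = sideOf x.1 := by
  rcases x with ⟨v, _ | _⟩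
  · exact sideOf_dchild v
  · rfl

theorem switched_ofPt {x : Pt S} : switched (ofPt x) ↔ x.IsSwitched := by
  rcases x with ⟨v, _ | _⟩
  · show IsTensorSh (subtreeAt v) ∧ (!vsign v) = false ↔ _
    simp [Pt.IsSwitched]
  · show IsTensorSh (subtreeAt v) ∧ vsign v = false ↔ _
    simp [Pt.IsSwitched]

theorem not_switched_rootV : ¬ switched (rootV S) := fun h => h.1

theorem isNeg_ofPt {x : Pt S} : IsNeg (ofPt x) ↔ IsAtom (subtreeAt x.1) ∧ vsign x.1 = !x.2 := by
  rcases x with ⟨v, _ | _⟩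
  · show IsAtom (subtreeAt v) ∧ (!vsign v) = false ↔ _
    simp
  · exact Iff.rfl

theorem isPos_ofPt {x : Pt S} : IsPos (ofPt x) ↔ IsAtom (subtreeAt x.1) ∧ vsign x.1 = x.2 := by
  rcases x with ⟨v, _ | _⟩
  · show IsAtom (subtreeAt v) ∧ (!vsign v) = true ↔ _
    simp
  · exact Iff.rfl

theorem not_isNeg_rootV : ¬ IsNeg (rootV S) := fun h => h.1

theorem not_cutEdge (a b : (two S S).Vt) : ¬ cutEdge a b := fun ⟨j, _⟩ => j.elim

theorem idChar.exists_f_eq_iff {L : LaxLF (two S S)} (hL : idChar S L) (x : Pt S)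
    (z : (two S S).Vt) :
    (∃ h, L.f ⟨ofPt x, h⟩ = z) ↔ IsNeg (ofPt x) ∧ z = ofPt (x.1, !x.2) := by
  rcases x with ⟨v, _ | _⟩
  · exact ⟨fun ⟨h, e⟩ => ⟨h, e ▸ hL.1 v h⟩,
      fun ⟨h, e⟩ => ⟨h, (hL.1 v h).trans e.symm⟩⟩
  · exact ⟨fun ⟨h, e⟩ => ⟨h, e ▸ hL.2 v h⟩,
      fun ⟨h, e⟩ => ⟨h, (hL.2 v h).trans e.symm⟩⟩

theorem switchGraph_adj_ofPt {L : LaxLF (two S S)} (hL : idChar S L) (σ : (two S S).Vt → Bool)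
    (x y : Pt S) :
    (switchGraph L σ).Adj (ofPt x) (ofPt y) ↔ (idGraph S (σ ∘ ofPt)).Adj x y := by
  simp only [switchGraph, idGraph, fromRel_adj, hL.exists_f_eq_iff]
  simp only [par_ofPt_eq_ofPt, switched_ofPt, side_ofPt, isNeg_ofPt, not_cutEdge,
    ofPt_injective.ne_iff, ofPt_injective.eq_iff, exists_isChild_and_iff, Function.comp_apply,
    false_or]
  rcases x with ⟨v, _ | _⟩ <;> rcases y with ⟨w, _ | _⟩ <;> simp <;>
    rcases eq_or_ne v w with rfl | hvw <;> simp [*, Ne.symm] <;> cases vsign v <;> simp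

theorem switchGraph_adj_ofPt_rootV {L : LaxLF (two S S)} (hL : idChar S L)
    (σ : (two S S).Vt → Bool) (x : Pt S) :
    (switchGraph L σ).Adj (ofPt x) (rootV S) ↔ x = (.root S, false) := by
  simp only [switchGraph, fromRel_adj, hL.exists_f_eq_iff]
  simp [par_ofPt_eq_rootV, par_rootV, not_switched_rootV, not_isNeg_rootV, not_cutEdge,
    ofPt_ne_rootV, (ofPt_ne_rootV _).symm]

end ofPt

def twoEquiv (S : Shape A) : (two S S).Vt ≃ Pt S ⊕ Unit where
  toFun
    | .inl ⟨false, .dchild v⟩ => .inl (v, false)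
    | .inl ⟨true, v⟩ => .inl (v, true)
    | .inl ⟨false, .root _⟩ => .inr ()
    | .inr ⟨j, _⟩ => j.elim
  invFun := Sum.elim ofPt fun _ => rootV S
  left_inv := by
    rintro (⟨_ | _, v⟩ | ⟨⟨⟩, _⟩)
    · cases v <;> rfl
    · rfl
  right_inv := by rintro (⟨v, _ | _⟩ | ⟨⟩) <;> rfl

@[simp] theorem twoEquiv_symm_inl {S : Shape A} (x : Pt S) : (twoEquiv S).symm (.inl x) = ofPt x :=
  rfl

@[simp] theorem twoEquiv_symm_inr {S : Shape A} (u : Unit) :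
    (twoEquiv S).symm (.inr u) = rootV S :=
  rfl

def switchGraphIso {S : Shape A} {L : LaxLF (two S S)} (hL : idChar S L)
    (σ : (two S S).Vt → Bool) :
    ((idGraph S (σ ∘ ofPt) ⊕g ⊥) ⊔ edge (.inl (Vtx.root S, false)) (.inr ())) ≃g
      switchGraph L σ where
  toEquiv := (twoEquiv S).symm
  map_rel_iff' := by
    rintro (x | ⟨⟩) (y | ⟨⟩)
    · simpa [edge_adj] using switchGraph_adj_ofPt hL σ x y
    · simpa [edge_adj] using switchGraph_adj_ofPt_rootV hL σ x
    · simpa [edge_adj, adj_comm, eq_comm] using switchGraph_adj_ofPt_rootV hL σ y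
    · simp

/-- The value at the root of `S^⊥` is never used: that vertex is not a leaf. -/
def idLF (S : Shape A) : LaxLF (two S S) where
  f v := Sum.elim (fun x => ofPt (x.1, !x.2)) (fun _ => rootV S) (twoEquiv S v.1)
  gen_ok := by
    rintro ⟨y, hy⟩ -
    obtain ⟨p, rfl⟩ := (twoEquiv S).symm.surjective y
    rcases p with x | ⟨⟩
    · simp only [Equiv.apply_symm_apply, Sum.elim_inl]
      exact isPos_ofPt.mpr (isNeg_ofPt.mp hy)
    · exact absurd hy not_isNeg_rootV

theorem idChar_idLF (S : Shape A) : idChar S (idLF S) :=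
  ⟨fun _ _ => rfl, fun _ _ => rfl⟩

/-- The identity leaf function on a shape `S` exists and
satisfies the switching criterion: every switching of the identity `S → S`
is a tree. -/
theorem statement8 (A : Type) (S : Shape A) :
    (∃ L : LaxLF (two S S), idChar S L) ∧
    ∀ L : LaxLF (two S S), idChar S L → SwitchOK L :=
  ⟨⟨idLF S, idChar_idLF S⟩, fun _ hL σ => (switchGraphIso hL σ).isTree_iff.mp
    ((isTree_idGraph S _).sum_sup_edge .of_subsingleton (Vtx.root S, false) ())⟩

end Nets
end

section
/- Tensor of linkings is a linking: if f : S → T and f' : S' → T' are linkings between shapes, then the disjoint union f ⊗ f' : S ⊗ S' → T ⊗ T' is a linking, i.e. every switching of f ⊗ f' is a tree. -/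
attribute [local instance] Classical.propDecidable

namespace TreeGlue

open SimpleGraph

variable {V : Type*} {G : SimpleGraph V}

/-- Unique-path-within-a-set predicate. -/
def UT (G : SimpleGraph V) (s : Set V) : Prop :=
  s.Nonempty ∧ ∀ u w, u ∈ s → w ∈ s →
    ∃! p : G.Walk u w, p.IsPath ∧ ∀ x ∈ p.support, x ∈ s

theorem isTree_of_ut_univ (h : UT G Set.univ) : G.IsTree := by
  rw [SimpleGraph.isTree_iff_existsUnique_path]
  obtain ⟨⟨v, _⟩, h2⟩ := h
  refine ⟨⟨v⟩, fun u w => ?_⟩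
  obtain ⟨p, ⟨hp, _⟩, hu⟩ := h2 u w trivial trivial
  exact ⟨p, hp, fun q hq => hu q ⟨hq, fun x _ => trivial⟩⟩

theorem ut_univ_of_isTree [Nonempty V] (h : G.IsTree) : UT G Set.univ := by
  rw [SimpleGraph.isTree_iff_existsUnique_path] at h
  obtain ⟨⟨v⟩, h2⟩ := h
  refine ⟨⟨v, trivial⟩, fun u w _ _ => ?_⟩
  obtain ⟨p, hp, hu⟩ := h2 u w
  exact ⟨p, ⟨hp, fun x _ => trivial⟩, fun q ⟨hq, _⟩ => hu q hq⟩

/-- On a path ending at `w ≠ x`, if every neighbour of `x` inside `t` is `c` and the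
path stays in `insert x t`, then `x` can appear only as the start. -/
theorem pendant_start {t : Set V} {x c : V} (hnb : ∀ b, b ∈ t → G.Adj x b → b = c) :
    ∀ {u w : V} (p : G.Walk u w), p.IsPath → (∀ v ∈ p.support, v ∈ insert x t) →
      w ≠ x → x ∈ p.support → x = u := by
  intro u w p
  induction p with
  | nil => intro _ _ hw hd; simp at hd; exact hd
  | @cons a b c' h p ih =>
    intro hp hsub hw hd
    rw [SimpleGraph.Walk.support_cons] at hd
    rcases List.mem_cons.mp hd with h1 | h2
    · exact h1
    · exfalso
      have hxb := ih hp.of_cons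
        (fun v hv => hsub v (by rw [SimpleGraph.Walk.support_cons]; exact List.mem_cons_of_mem _ hv))
        hw h2
      subst hxb
      have hanotp : a ∉ p.support := ((SimpleGraph.Walk.cons_isPath_iff _ _).mp hp).2
      have hax : a ≠ x := fun h' => hanotp (h' ▸ h2)
      have hat : a ∈ t := by
        have := hsub a (by rw [SimpleGraph.Walk.support_cons]; exact List.mem_cons_self)
        rcases this with h' | h'
        · exact absurd h' hax
        · exact h'
      have hac : a = c := hnb a hat h.symm
      rcases p with _ | @⟨_, z, _, hadj, p'⟩
      · exact hw rfl
      · have hzx : z ≠ x := fun h' => (G.irrefl (h' ▸ hadj))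
        have hzt : z ∈ t := by
          have := hsub z (by
            rw [SimpleGraph.Walk.support_cons, SimpleGraph.Walk.support_cons]
            exact List.mem_cons_of_mem _ (List.mem_cons_of_mem _ (SimpleGraph.Walk.start_mem_support p')))
          rcases this with h' | h'
          · exact absurd h' hzx
          · exact h'
        have hzc : z = c := hnb z hzt hadj
        exact hanotp (by
          rw [SimpleGraph.Walk.support_cons]
          exact List.mem_cons_of_mem _ (by
            rw [show a = z from hac.trans hzc.symm]
            exact SimpleGraph.Walk.start_mem_support p'))

section Glue

variable {s t : Set V} {c : V}

theorem cross_start (hedge : ∀ a b, G.Adj a b → a ∈ s ∪ t → b ∈ s ∪ t →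
      (a ∈ s ∧ b ∈ s) ∨ (a ∈ t ∧ b ∈ t)) (hst : s ∩ t ⊆ {c}) :
    ∀ {u w : V} (p : G.Walk u w), (∀ v ∈ p.support, v ∈ s ∪ t) → w ∈ s →
      u ∈ s ∨ c ∈ p.support := by
  intro u w p
  induction p with
  | nil => intro _ hw; exact Or.inl hw
  | @cons a b c' h p ih =>
    intro hsub hw
    have hsub' : ∀ v ∈ p.support, v ∈ s ∪ t := fun v hv =>
      hsub v (by rw [SimpleGraph.Walk.support_cons]; exact List.mem_cons_of_mem _ hv)
    rcases ih hsub' hw with hb | hc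
    · rcases hedge a b h (hsub a (by rw [SimpleGraph.Walk.support_cons]; exact List.mem_cons_self))
        (hsub' b (SimpleGraph.Walk.start_mem_support p)) with ⟨ha, _⟩ | ⟨_, hb'⟩
      · exact Or.inl ha
      · have : b = c := hst ⟨hb, hb'⟩
        exact Or.inr (by
          rw [SimpleGraph.Walk.support_cons]
          exact List.mem_cons_of_mem _ (this ▸ SimpleGraph.Walk.start_mem_support p))
    · exact Or.inr (by
        rw [SimpleGraph.Walk.support_cons]; exact List.mem_cons_of_mem _ hc)

theorem within (hedge : ∀ a b, G.Adj a b → a ∈ s ∪ t → b ∈ s ∪ t →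
      (a ∈ s ∧ b ∈ s) ∨ (a ∈ t ∧ b ∈ t)) (hst : s ∩ t ⊆ {c}) :
    ∀ {u w : V} (p : G.Walk u w), p.IsPath → (∀ v ∈ p.support, v ∈ s ∪ t) →
      u ∈ s → w ∈ s → ∀ x ∈ p.support, x ∈ s := by
  intro u w p
  induction p with
  | nil => intro _ _ hu _ x hx; simp at hx; exact hx ▸ hu
  | @cons a b c' h p ih =>
    intro hp hsub hu hw x hx
    have hsub' : ∀ v ∈ p.support, v ∈ s ∪ t := fun v hv =>
      hsub v (by rw [SimpleGraph.Walk.support_cons]; exact List.mem_cons_of_mem _ hv)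
    rw [SimpleGraph.Walk.support_cons] at hx
    rcases List.mem_cons.mp hx with h1 | h2
    · exact h1 ▸ hu
    · have hb : b ∈ s := by
        rcases hedge a b h (hsub a (by rw [SimpleGraph.Walk.support_cons]; exact List.mem_cons_self))
          (hsub' b (SimpleGraph.Walk.start_mem_support p)) with ⟨_, hb⟩ | ⟨ha, _⟩
        · exact hb
        · -- a ∈ s ∩ t so a = c
          have hac : a = c := hst ⟨hu, ha⟩
          rcases cross_start hedge hst p hsub' hw with hb | hcp
          · exact hb
          · exact absurd (hac ▸ hcp) ((SimpleGraph.Walk.cons_isPath_iff _ _).mp hp).2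
      exact ih hp.of_cons hsub' hb hw x h2

theorem UT.glue (hs : UT G s) (ht : UT G t) (hst : s ∩ t = {c})
    (hedge : ∀ a b, G.Adj a b → a ∈ s ∪ t → b ∈ s ∪ t →
      (a ∈ s ∧ b ∈ s) ∨ (a ∈ t ∧ b ∈ t)) : UT G (s ∪ t) := by
  have hcs : c ∈ s := (hst ▸ (Set.mem_singleton c) : c ∈ s ∩ t).1
  have hct : c ∈ t := (hst ▸ (Set.mem_singleton c) : c ∈ s ∩ t).2
  have hst' : s ∩ t ⊆ {c} := hst.le
  have hts' : t ∩ s ⊆ {c} := by rw [Set.inter_comm]; exact hst'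
  have hedge' : ∀ a b, G.Adj a b → a ∈ t ∪ s → b ∈ t ∪ s →
      (a ∈ t ∧ b ∈ t) ∨ (a ∈ s ∧ b ∈ s) := fun a b h ha hb =>
    (hedge a b h (Set.union_comm t s ▸ ha) (Set.union_comm t s ▸ hb)).symm
  -- unique path within s between points of s, etc.
  -- mixed-case canonical path
  have key : ∀ u w, u ∈ s ∪ t → w ∈ s ∪ t →
      ∃! p : G.Walk u w, p.IsPath ∧ ∀ x ∈ p.support, x ∈ s ∪ t := by
    -- symmetric helper for the within-one-side case
    have side : ∀ (s' t' : Set V), s' ∩ t' ⊆ {c} → UT G s' →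
        (∀ a b, G.Adj a b → a ∈ s' ∪ t' → b ∈ s' ∪ t' → (a ∈ s' ∧ b ∈ s') ∨ (a ∈ t' ∧ b ∈ t')) →
        ∀ u w, u ∈ s' → w ∈ s' →
        ∃! p : G.Walk u w, p.IsPath ∧ ∀ x ∈ p.support, x ∈ s' ∪ t' := by
      intro s' t' hst' hs' hedge' u w hu hw
      obtain ⟨p, ⟨hp, hps⟩, hup⟩ := hs'.2 u w hu hw
      refine ⟨p, ⟨hp, fun x hx => Or.inl (hps x hx)⟩, ?_⟩
      rintro q ⟨hq, hqs⟩
      exact hup q ⟨hq, fun x hx => within hedge' hst' q hq hqs hu hw x hx⟩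
    -- mixed case helper
    have mixed : ∀ (s' t' : Set V) (c' : V), s' ∩ t' = {c'} → UT G s' → UT G t' →
        (∀ a b, G.Adj a b → a ∈ s' ∪ t' → b ∈ s' ∪ t' → (a ∈ s' ∧ b ∈ s') ∨ (a ∈ t' ∧ b ∈ t')) →
        ∀ u w, u ∈ s' → u ∉ t' → w ∈ t' → w ∉ s' →
        ∃! p : G.Walk u w, p.IsPath ∧ ∀ x ∈ p.support, x ∈ s' ∪ t' := by
      intro s' t' c' hst' hs' ht' hedge' u w hu hut hw hws
      have hc's : c' ∈ s' := (hst' ▸ (Set.mem_singleton c') : c' ∈ s' ∩ t').1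
      have hc't : c' ∈ t' := (hst' ▸ (Set.mem_singleton c') : c' ∈ s' ∩ t').2
      have hsub : s' ∩ t' ⊆ {c'} := hst'.le
      obtain ⟨p1, ⟨hp1, hp1s⟩, hup1⟩ := hs'.2 u c' hu hc's
      obtain ⟨p2, ⟨hp2, hp2s⟩, hup2⟩ := ht'.2 c' w hc't hw
      have happ : (p1.append p2).IsPath := by
        rw [SimpleGraph.Walk.isPath_def, SimpleGraph.Walk.support_append]
        refine List.Nodup.append (SimpleGraph.Walk.isPath_def _ |>.mp hp1) ?_ ?_
        · exact List.Nodup.sublist (List.tail_sublist _) (SimpleGraph.Walk.isPath_def _ |>.mp hp2)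
        · intro x hx1 hx2
          have hxs : x ∈ s' := hp1s x hx1
          have hxt : x ∈ t' := hp2s x (List.mem_of_mem_tail hx2)
          have hxc : x = c' := hsub ⟨hxs, hxt⟩
          subst hxc
          have : x ∉ p2.support.tail := by
            have := SimpleGraph.Walk.isPath_def _ |>.mp hp2
            rw [SimpleGraph.Walk.support_eq_cons] at this
            exact (List.nodup_cons.mp this).1
          exact this hx2
      refine ⟨p1.append p2, ⟨happ, ?_⟩, ?_⟩
      · intro x hx
        rw [SimpleGraph.Walk.support_append] at hx
        rcases List.mem_append.mp hx with h' | h'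
        · exact Or.inl (hp1s x h')
        · exact Or.inr (hp2s x (List.mem_of_mem_tail h'))
      · rintro q ⟨hq, hqs⟩
        have hcq : c' ∈ q.support := by
          rcases cross_start (G := G) (s := t') (t := s') (c := c')
            (fun a b h ha hb => (hedge' a b h (Set.union_comm t' s' ▸ ha) (Set.union_comm t' s' ▸ hb)).symm)
            (by rw [Set.inter_comm]; exact hsub) q
            (fun v hv => (Set.union_comm s' t') ▸ hqs v hv) hw with h' | h'
          · exact absurd h' hut
          · exact h'
        have hq1 := hq.takeUntil hcq
        have hq2 := hq.dropUntil hcq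
        have hq1s : ∀ x ∈ (q.takeUntil c' hcq).support, x ∈ s' := by
          intro x hx
          refine within hedge' hsub (q.takeUntil c' hcq) hq1 ?_ hu hc's x hx
          exact fun v hv => hqs v (SimpleGraph.Walk.support_takeUntil_subset _ hcq hv)
        have hq2s : ∀ x ∈ (q.dropUntil c' hcq).support, x ∈ t' := by
          intro x hx
          refine within (G := G) (s := t') (t := s') (c := c')
            (fun a b h ha hb => (hedge' a b h (Set.union_comm t' s' ▸ ha) (Set.union_comm t' s' ▸ hb)).symm)
            (by rw [Set.inter_comm]; exact hsub) (q.dropUntil c' hcq) hq2 ?_ hc't hw x hx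
          exact fun v hv => (Set.union_comm s' t') ▸ hqs v (SimpleGraph.Walk.support_dropUntil_subset _ hcq hv)
        have e1 : q.takeUntil c' hcq = p1 := hup1 _ ⟨hq1, hq1s⟩
        have e2 : q.dropUntil c' hcq = p2 := hup2 _ ⟨hq2, hq2s⟩
        rw [← SimpleGraph.Walk.take_spec q hcq, e1, e2]
    intro u w hu hw
    by_cases hus : u ∈ s
    · by_cases hws : w ∈ s
      · exact side s t hst' hs hedge u w hus hws
      · have hwt : w ∈ t := hw.resolve_left hws
        by_cases hut : u ∈ t
        · have := side t s hts' ht hedge' u w hut hwt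
          refine this.imp fun p hp => ?_
          constructor
          · exact ⟨hp.1.1, fun x hx => (Set.union_comm t s) ▸ hp.1.2 x hx⟩
          · intro q hq
            exact hp.2 q ⟨hq.1, fun x hx => (Set.union_comm s t) ▸ hq.2 x hx⟩
        · exact mixed s t c hst hs ht hedge u w hus hut hwt hws
    · have hut : u ∈ t := hu.resolve_left hus
      by_cases hwt : w ∈ t
      · have := side t s hts' ht hedge' u w hut hwt
        refine this.imp fun p hp => ?_
        constructor
        · exact ⟨hp.1.1, fun x hx => (Set.union_comm t s) ▸ hp.1.2 x hx⟩
        · intro q hq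
          exact hp.2 q ⟨hq.1, fun x hx => (Set.union_comm s t) ▸ hq.2 x hx⟩
      · have hws : w ∈ s := hw.resolve_right hwt
        have := mixed t s c (by rw [Set.inter_comm]; exact hst) ht hs hedge' u w hut hus hws hwt
        refine this.imp fun p hp => ?_
        constructor
        · exact ⟨hp.1.1, fun x hx => (Set.union_comm t s) ▸ hp.1.2 x hx⟩
        · intro q hq
          exact hp.2 q ⟨hq.1, fun x hx => (Set.union_comm s t) ▸ hq.2 x hx⟩
  exact ⟨⟨c, Or.inl hcs⟩, key⟩

end Glue

section Pendant

variable {s : Set V} {x c : V}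

/-- Add a pendant vertex `x` attached at `c ∈ s`. -/
theorem UT.pendant (h : UT G s) (hc : c ∈ s) (hx : x ∉ s) (hadj : G.Adj x c)
    (hnb : ∀ b, b ∈ s → G.Adj x b → b = c) : UT G (insert x s) := by
  obtain ⟨hne, hup⟩ := h
  -- canonical path from x to any w ∈ s
  have canon : ∀ w, w ∈ s → ∃! p : G.Walk x w, p.IsPath ∧ ∀ v ∈ p.support, v ∈ insert x s := by
    intro w hw
    obtain ⟨p, ⟨hp, hps⟩, hupp⟩ := hup c w hc hw
    have hxnp : x ∉ p.support := fun h' => hx (hps x h')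
    refine ⟨SimpleGraph.Walk.cons hadj p, ⟨hp.cons hxnp, ?_⟩, ?_⟩
    · intro v hv
      rw [SimpleGraph.Walk.support_cons] at hv
      rcases List.mem_cons.mp hv with h' | h'
      · exact h' ▸ Set.mem_insert _ _
      · exact Set.mem_insert_of_mem _ (hps v h')
    · rintro q ⟨hq, hqs⟩
      have hwx : w ≠ x := fun h' => hx (h' ▸ hw)
      rcases q with _ | @⟨_, z, _, hadj', q'⟩
      · exact (hwx rfl).elim
      · have hzx : z ≠ x := fun h' => G.irrefl (h' ▸ hadj')
        have hzs : z ∈ s := by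
          have : z ∈ insert x s := hqs z (by
            rw [SimpleGraph.Walk.support_cons]
            exact List.mem_cons_of_mem _ (SimpleGraph.Walk.start_mem_support q'))
          exact this.resolve_left hzx
        have hzc : z = c := hnb z hzs hadj'
        subst hzc
        have hq' : q'.IsPath := hq.of_cons
        have hxq' : x ∉ q'.support := ((SimpleGraph.Walk.cons_isPath_iff _ _).mp hq).2
        have hq's : ∀ v ∈ q'.support, v ∈ s := by
          intro v hv
          exact (hqs v (by rw [SimpleGraph.Walk.support_cons]; exact List.mem_cons_of_mem _ hv)).resolve_left
            (fun h' => hxq' (h' ▸ hv))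
        have : q' = p := hupp q' ⟨hq', hq's⟩
        subst this
        rfl
  refine ⟨⟨c, Set.mem_insert_of_mem _ hc⟩, ?_⟩
  intro u w hu hw
  rcases hu with hux | hus
  · subst hux
    rcases hw with hwx | hws
    · subst hwx
      refine ⟨SimpleGraph.Walk.nil, ⟨SimpleGraph.Walk.IsPath.nil, by simp⟩, ?_⟩
      rintro q ⟨hq, _⟩
      exact (SimpleGraph.Walk.isPath_iff_eq_nil (p := q)).mp hq
    · exact canon w hws
  · rcases hw with hwx | hws
    · subst hwx
      obtain ⟨p, hp, hupp⟩ := canon u hus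
      refine ⟨p.reverse, ⟨hp.1.reverse, fun v hv => hp.2 v (by
        rw [SimpleGraph.Walk.support_reverse] at hv; exact List.mem_reverse.mp hv)⟩, ?_⟩
      rintro q ⟨hq, hqs⟩
      have : q.reverse = p := hupp q.reverse ⟨hq.reverse, fun v hv => hqs v (by
        rw [SimpleGraph.Walk.support_reverse] at hv; exact List.mem_reverse.mp hv)⟩
      rw [← SimpleGraph.Walk.reverse_reverse q, this]
    · -- both in s: any valid path avoids x
      obtain ⟨p, ⟨hp, hps⟩, hupp⟩ := hup u w hus hws
      refine ⟨p, ⟨hp, fun v hv => Set.mem_insert_of_mem _ (hps v hv)⟩, ?_⟩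
      rintro q ⟨hq, hqs⟩
      have hwx : w ≠ x := fun h' => hx (h' ▸ hws)
      have hxq : x ∉ q.support := by
        intro hxq
        have := pendant_start hnb q hq hqs hwx hxq
        exact hx (this ▸ hus)
      exact hupp q ⟨hq, fun v hv => (hqs v hv).resolve_left (fun h' => hxq (h' ▸ hv))⟩

/-- Remove a pendant vertex `d` (whose only possible neighbour is `e`). -/
theorem UT.unpendant {d e : V} (h : UT G s) (hnb : ∀ b, G.Adj d b → b = e)
    (hne : ∃ v ∈ s, v ≠ d) : UT G (s \ {d}) := by
  obtain ⟨v, hv, hvd⟩ := hne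
  refine ⟨⟨v, hv, hvd⟩, ?_⟩
  intro u w hu hw
  obtain ⟨p, ⟨hp, hps⟩, hupp⟩ := h.2 u w hu.1 hw.1
  have hnb' : ∀ b, b ∈ (Set.univ : Set V) → G.Adj d b → b = e := fun b _ => hnb b
  have hdp : d ∉ p.support := by
    intro hdp
    have := pendant_start hnb' p hp (fun v _ => Set.mem_insert_iff.mpr (Or.inr trivial)) hw.2 hdp
    exact hu.2 this.symm
  refine ⟨p, ⟨hp, fun x hx => ⟨hps x hx, fun h' => hdp (h' ▸ hx)⟩⟩, ?_⟩
  rintro q ⟨hq, hqs⟩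
  exact hupp q ⟨hq, fun x hx => (hqs x hx).1⟩

end Pendant

section Transfer

variable {V' : Type*} {G' : SimpleGraph V'} {s : Set V}

/-- The restriction of `G` to `s`, as a graph on `V`. -/
def restrict (G : SimpleGraph V) (s : Set V) : SimpleGraph V where
  Adj a b := a ∈ s ∧ b ∈ s ∧ G.Adj a b
  symm := ⟨fun a b h => ⟨h.2.1, h.1, h.2.2.symm⟩⟩
  loopless := ⟨fun a h => G.irrefl h.2.2⟩

theorem restrict_le : restrict G s ≤ G := fun _ _ h => h.2.2

theorem restrict_support {a b : V} (p : (restrict G s).Walk a b) (ha : a ∈ s) :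
    ∀ v ∈ p.support, v ∈ s := by
  induction p with
  | nil => intro v hv; simp at hv; exact hv ▸ ha
  | @cons x y z h p ih =>
    intro v hv
    rw [SimpleGraph.Walk.support_cons] at hv
    rcases List.mem_cons.mp hv with h' | h'
    · exact h' ▸ h.1
    · exact ih h.2.1 v h'

theorem edges_mem_restrict {a b : V} (p : G.Walk a b) (hps : ∀ v ∈ p.support, v ∈ s) :
    ∀ e ∈ p.edges, e ∈ (restrict G s).edgeSet := by
  intro e he
  induction e with
  | h x y =>
    exact ⟨hps x (p.fst_mem_support_of_mem_edges he), hps y (p.snd_mem_support_of_mem_edges he),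
      p.adj_of_mem_edges he⟩

/-- The inclusion hom from the restriction. -/
def restrictHom (φ : V → V')
    (hadj : ∀ a b, a ∈ s → b ∈ s → G.Adj a b → G'.Adj (φ a) (φ b)) :
    restrict G s →g G' :=
  ⟨φ, fun {a b} hab => hadj a b hab.1 hab.2.1 hab.2.2⟩

/-- Pull back a walk along an injective adjacency-reflecting map. -/
theorem walk_pullback (φ : V → V') (hinj : Function.Injective φ)
    (hadj : ∀ a b, a ∈ s → b ∈ s → G.Adj a b → G'.Adj (φ a) (φ b))
    (hadj' : ∀ a b, a ∈ s → b ∈ s → G'.Adj (φ a) (φ b) → G.Adj a b) :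
    ∀ {x y : V'} (q : G'.Walk x y), (∀ v ∈ q.support, v ∈ φ '' s) →
      ∀ a b, a ∈ s → b ∈ s → ∀ (hxa : x = φ a) (hyb : y = φ b),
      ∃ p₀ : (restrict G s).Walk a b,
        (p₀.map (restrictHom φ hadj)).copy hxa.symm hyb.symm = q := by
  intro x y q
  induction q with
  | @nil z =>
    intro _ a b ha hb hxa hyb
    have hab : a = b := hinj (hxa.symm.trans hyb)
    subst hab
    subst hxa
    exact ⟨SimpleGraph.Walk.nil, rfl⟩
  | @cons z z' y' h q ih =>
    intro hsub a b ha hb hxa hyb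
    have hz' : z' ∈ φ '' s := hsub z' (by
      rw [SimpleGraph.Walk.support_cons]
      exact List.mem_cons_of_mem _ (SimpleGraph.Walk.start_mem_support q))
    obtain ⟨a', ha', haz'⟩ := hz'
    have hadj2 : (restrict G s).Adj a a' :=
      ⟨ha, ha', hadj' a a' ha ha' (by rw [hxa, ← haz'] at h; exact h)⟩
    obtain ⟨p₀, hmp⟩ := ih (fun v hv => hsub v (by
      rw [SimpleGraph.Walk.support_cons]; exact List.mem_cons_of_mem _ hv)) a' b ha' hb haz'.symm hyb
    refine ⟨SimpleGraph.Walk.cons hadj2 p₀, ?_⟩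
    subst hxa
    subst hyb
    rcases haz'
    exact congrArg (SimpleGraph.Walk.cons h) hmp

theorem transfer_congr {H : SimpleGraph V} {u v : V} {p q : G.Walk u v} (h : p = q)
    (hp : ∀ e ∈ p.edges, e ∈ H.edgeSet) (hq : ∀ e ∈ q.edges, e ∈ H.edgeSet) :
    p.transfer H hp = q.transfer H hq := by subst h; rfl

theorem UT.transfer (φ : V → V') (hinj : Function.Injective φ)
    (hadj : ∀ a b, a ∈ s → b ∈ s → G.Adj a b → G'.Adj (φ a) (φ b))
    (hadj' : ∀ a b, a ∈ s → b ∈ s → G'.Adj (φ a) (φ b) → G.Adj a b)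
    (h : UT G s) : UT G' (φ '' s) := by
  classical
  obtain ⟨⟨v0, hv0⟩, hup⟩ := h
  set hom : restrict G s →g G' := restrictHom φ hadj with homdef
  refine ⟨⟨φ v0, v0, hv0, rfl⟩, ?_⟩
  rintro x y ⟨a, ha, rfl⟩ ⟨b, hb, rfl⟩
  obtain ⟨p, ⟨hp, hps⟩, hupp⟩ := hup a b ha hb
  set pc : G'.Walk (φ a) (φ b) := (p.transfer (restrict G s) (edges_mem_restrict p hps)).map hom
    with pcdef
  have hpcsup : pc.support = p.support.map φ := by
    rw [pcdef]; exact (SimpleGraph.Walk.support_map _ _).trans (congrArg (List.map hom) (SimpleGraph.Walk.support_transfer _ _))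
  refine ⟨pc, ⟨?_, ?_⟩, ?_⟩
  · rw [SimpleGraph.Walk.isPath_def, hpcsup]
    exact ((SimpleGraph.Walk.isPath_def _).mp hp).map (fun a' b' h' => hinj h')
  · intro x hx
    rw [hpcsup] at hx
    obtain ⟨a', ha', rfl⟩ := List.mem_map.mp hx
    exact ⟨a', hps a' ha', rfl⟩
  · rintro q ⟨hq, hqs⟩
    obtain ⟨p₀, hmp⟩ := walk_pullback φ hinj hadj hadj' q hqs a b ha hb rfl rfl
    have hsup0 : ∀ v ∈ p₀.support, v ∈ s := fun v hv => restrict_support p₀ ha v hv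
    have hedgeG : ∀ e ∈ p₀.edges, e ∈ G.edgeSet := by
      refine Sym2.ind (fun x' y' he => ?_)
      exact (SimpleGraph.mem_edgeSet (G := G)).mpr (restrict_le (p₀.adj_of_mem_edges he))
    set p' : G.Walk a b := p₀.transfer G hedgeG with p'def
    have hsup' : p'.support = p₀.support := SimpleGraph.Walk.support_transfer _ _
    have hp'path : p'.IsPath := by
      rw [SimpleGraph.Walk.isPath_def, hsup']
      have := (SimpleGraph.Walk.isPath_def _).mp hq
      rw [← hmp] at this; rw [(SimpleGraph.Walk.support_copy (p₀.map (restrictHom φ hadj)) (u' := φ a) (v' := φ b) rfl rfl).trans (SimpleGraph.Walk.support_map _ _)] at this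
      exact this.of_map
    have hpp : p' = p := hupp p' ⟨hp'path, fun v hv => hsup0 _ (hsup' ▸ hv)⟩
    have h2 : ∀ e ∈ (p₀.transfer G hedgeG).edges, e ∈ (restrict G s).edgeSet := by
      rw [SimpleGraph.Walk.edges_transfer]
      exact fun e he => p₀.edges_subset_edgeSet he
    have hback : p'.transfer (restrict G s) (edges_mem_restrict p' (fun v hv => hsup0 _ (hsup' ▸ hv))) = p₀ := by
      refine (transfer_congr p'def _ h2).trans ?_
      rw [SimpleGraph.Walk.transfer_transfer]
      exact SimpleGraph.Walk.transfer_self p₀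
    have e3 : p₀ = p.transfer (restrict G s) (edges_mem_restrict p hps) :=
      hback.symm.trans (transfer_congr hpp _ (edges_mem_restrict p hps))
    rw [← hmp, e3]
    exact SimpleGraph.Walk.copy_rfl_rfl _

end Transfer


section Master

/-- Master lemma: glue two unique-path pieces `L` and `R` via the special
vertices `D`, `X`, `Y` to conclude that the whole graph is a tree. -/
theorem master (G : SimpleGraph V) (L R : Set V) (D X Y rl tl tr : V)
    (hUTL : UT G L) (hUTR : UT G R)
    (hrl : rl ∈ L) (htl : tl ∈ L) (htr : tr ∈ R)
    (hXL : X ∉ L) (hXR : X ∉ R) (hDL : D ∉ L) (hDR : D ∉ R) (hYL : Y ∉ L) (hYR : Y ∉ R)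
    (hDX : D ≠ X) (hDY : D ≠ Y) (hXY : X ≠ Y)
    (hLR : ∀ v, v ∈ L → v ∉ R)
    (haX : G.Adj X rl) (haD : G.Adj D X) (haYl : G.Adj Y tl) (haYr : G.Adj Y tr)
    (hNX : ∀ b, G.Adj X b → b = rl ∨ b = D)
    (hND : ∀ b, G.Adj D b → b = X)
    (hNY : ∀ b, G.Adj Y b → b = tl ∨ b = tr)
    (hclass : ∀ a b, G.Adj a b →
      (a ∈ insert Y (insert D (insert X L)) ∧ b ∈ insert Y (insert D (insert X L))) ∨
      (a ∈ insert Y R ∧ b ∈ insert Y R))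
    (hcover : ∀ v, v ∈ L ∨ v ∈ R ∨ v = D ∨ v = X ∨ v = Y) : G.IsTree := by
  -- step 1: add pendant X to L at rl
  have h1 : UT G (insert X L) :=
    hUTL.pendant hrl hXL haX (fun b hb hXb => by
      rcases hNX b hXb with h | h
      · exact h
      · exact absurd (h ▸ hb) hDL)
  -- step 2: add pendant D to insert X L at X
  have h2 : UT G (insert D (insert X L)) :=
    h1.pendant (Set.mem_insert _ _) (by
      intro hD
      rcases hD with h | h
      · exact hDX h
      · exact hDL h) haD (fun b hb hDb => (hND b hDb))
  -- step 3: add pendant Y at tl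
  have h3 : UT G (insert Y (insert D (insert X L))) :=
    h2.pendant (Set.mem_insert_of_mem _ (Set.mem_insert_of_mem _ htl)) (by
      intro hY
      rcases hY with h | h
      · exact hDY h.symm
      · rcases h with h | h
        · exact hXY h.symm
        · exact hYL h) (by
        -- need G.Adj Y tl
        exact haYl) (fun b hb hYb => by
      rcases hNY b hYb with h | h
      · exact h
      · exfalso
        subst h
        rcases hb with h | h
        · exact hDR (h ▸ htr)
        · rcases h with h | h
          · exact hXR (h ▸ htr)
          · exact hLR _ h htr)
  -- step 4: add pendant Y to R at tr
  have h4 : UT G (insert Y R) :=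
    hUTR.pendant htr hYR haYr (fun b hb hYb => by
      rcases hNY b hYb with h | h
      · exact absurd (h ▸ hb) (hLR _ htl)
      · exact h)
  -- step 5: glue
  have hglue : UT G (insert Y (insert D (insert X L)) ∪ insert Y R) := by
    refine h3.glue (c := Y) h4 ?_ ?_
    · ext v
      simp only [Set.mem_inter_iff, Set.mem_insert_iff, Set.mem_singleton_iff]
      constructor
      · rintro ⟨h1', h2'⟩
        rcases h2' with h' | h'
        · exact h'
        · rcases h1' with h'' | h''
          · exact h''
          · rcases h'' with h'' | h''
            · exact absurd (h'' ▸ h') hDR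
            · rcases h'' with h'' | h''
              · exact absurd (h'' ▸ h') hXR
              · exact absurd h' (hLR _ h'')
      · rintro rfl
        exact ⟨Or.inl rfl, Or.inl rfl⟩
    · intro a b hab _ _
      exact hclass a b hab
  have huniv : insert Y (insert D (insert X L)) ∪ insert Y R = Set.univ := by
    ext v
    simp only [Set.mem_union, Set.mem_insert_iff, Set.mem_univ, iff_true]
    rcases hcover v with h | h | h | h | h
    · exact Or.inl (Or.inr (Or.inr (Or.inr h)))
    · exact Or.inr (Or.inr h)
    · exact Or.inl (Or.inr (Or.inl h))
    · exact Or.inl (Or.inr (Or.inr (Or.inl h)))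
    · exact Or.inl (Or.inl h)
  rw [huniv] at hglue
  exact isTree_of_ut_univ hglue

end Master

end TreeGlue

namespace Nets

open Shape CutSeq

variable {A : Type}

/-- Embedding of the vertices of `S^⊥, T` into those of `(S ⊗ S')^⊥, T ⊗ T'`
(left component of a tensor of linkings). -/
def embTLaux {S S' T T' : Shape A} :
    (b : Bool) → Vtx ((two S T).main b) → (two (S.tensor S') (T.tensor T')).Vt
  | false, v => match v with
    | .root _ => .inl ⟨false, .root _⟩
    | .dchild u => .inl ⟨false, .dchild (.tleft u)⟩
  | true, w => .inl ⟨true, .tleft w⟩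

def embTL {S S' T T' : Shape A} :
    (two S T).Vt → (two (S.tensor S') (T.tensor T')).Vt
  | .inl ⟨b, v⟩ => embTLaux b v
  | .inr j => j.1.elim

/-- Embedding of the vertices of `S'^⊥, T'` into those of `(S ⊗ S')^⊥, T ⊗ T'`
(right component of a tensor of linkings). -/
def embTRaux {S S' T T' : Shape A} :
    (b : Bool) → Vtx ((two S' T').main b) → (two (S.tensor S') (T.tensor T')).Vt
  | false, v => match v with
    | .root _ => .inl ⟨false, .root _⟩
    | .dchild u => .inl ⟨false, .dchild (.tright u)⟩
  | true, w => .inl ⟨true, .tright w⟩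

def embTR {S S' T T' : Shape A} :
    (two S' T').Vt → (two (S.tensor S') (T.tensor T')).Vt
  | .inl ⟨b, v⟩ => embTRaux b v
  | .inr j => j.1.elim

/-- Characterization of the tensor `f ⊗ f' : S ⊗ S' → T ⊗ T'` of leaf functions
`f : S → T` and `f' : S' → T'`: its graph is the disjoint union of the graphs
of `f` and `f'`. -/
def tensorChar {S S' T T' : Shape A} (f : LaxLF (two S T)) (f' : LaxLF (two S' T'))
    (g : LaxLF (two (S.tensor S') (T.tensor T'))) : Prop :=
  (∀ n : NegLeaf (two S T), ∃ h : IsNeg (embTL (S' := S') (T' := T') n.1),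
      g.f ⟨embTL n.1, h⟩ = embTL (f.f n)) ∧
  (∀ n : NegLeaf (two S' T'), ∃ h : IsNeg (embTR (S := S) (T := T) n.1),
      g.f ⟨embTR n.1, h⟩ = embTR (f'.f n))


section Helpers

variable {A : Type} {S S' T T' : Shape A}

/-- The root of the dual (negative) component of a two-sided sequent. -/
def dRoot (U W : Shape A) : (two U W).Vt := .inl ⟨false, .root _⟩

/-- Special vertices of `(S ⊗ S')^⊥, T ⊗ T'`. -/
def vD (S S' T T' : Shape A) : (two (S.tensor S') (T.tensor T')).Vt := .inl ⟨false, .root _⟩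
def vX (S S' T T' : Shape A) : (two (S.tensor S') (T.tensor T')).Vt := .inl ⟨false, .dchild (.root _)⟩
def vY (S S' T T' : Shape A) : (two (S.tensor S') (T.tensor T')).Vt := .inl ⟨true, .root _⟩
def vrL (S S' T T' : Shape A) : (two (S.tensor S') (T.tensor T')).Vt :=
  .inl ⟨false, .dchild (.tleft (.root S))⟩
def vrR (S S' T T' : Shape A) : (two (S.tensor S') (T.tensor T')).Vt :=
  .inl ⟨false, .dchild (.tright (.root S'))⟩
def vtL (S S' T T' : Shape A) : (two (S.tensor S') (T.tensor T')).Vt :=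
  .inl ⟨true, .tleft (.root T)⟩
def vtR (S S' T T' : Shape A) : (two (S.tensor S') (T.tensor T')).Vt :=
  .inl ⟨true, .tright (.root T')⟩

theorem no_cut {U W : Shape A} (a b : (two U W).Vt) : ¬ cutEdge a b := fun ⟨j, _⟩ => j.elim

/-- Retraction of `embTL`. -/
def retrTL : (two (S.tensor S') (T.tensor T')).Vt → (two S T).Vt
  | .inl ⟨false, .root _⟩ => dRoot S T
  | .inl ⟨false, .dchild (.root _)⟩ => dRoot S T
  | .inl ⟨false, .dchild (.tleft u)⟩ => .inl ⟨false, .dchild u⟩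
  | .inl ⟨false, .dchild (.tright _)⟩ => dRoot S T
  | .inl ⟨true, .root _⟩ => dRoot S T
  | .inl ⟨true, .tleft w⟩ => .inl ⟨true, w⟩
  | .inl ⟨true, .tright _⟩ => dRoot S T
  | .inr j => j.1.elim

/-- Retraction of `embTR`. -/
def retrTR : (two (S.tensor S') (T.tensor T')).Vt → (two S' T').Vt
  | .inl ⟨false, .root _⟩ => dRoot S' T'
  | .inl ⟨false, .dchild (.root _)⟩ => dRoot S' T'
  | .inl ⟨false, .dchild (.tright u)⟩ => .inl ⟨false, .dchild u⟩
  | .inl ⟨false, .dchild (.tleft _)⟩ => dRoot S' T'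
  | .inl ⟨true, .root _⟩ => dRoot S' T'
  | .inl ⟨true, .tright w⟩ => .inl ⟨true, w⟩
  | .inl ⟨true, .tleft _⟩ => dRoot S' T'
  | .inr j => j.1.elim

theorem retrTL_embTL : ∀ v : (two S T).Vt, retrTL (embTL (S' := S') (T' := T') v) = v
  | .inl ⟨false, .root _⟩ => rfl
  | .inl ⟨false, .dchild _⟩ => rfl
  | .inl ⟨true, _⟩ => rfl
  | .inr j => j.1.elim

theorem retrTR_embTR : ∀ v : (two S' T').Vt, retrTR (embTR (S := S) (T := T) v) = v
  | .inl ⟨false, .root _⟩ => rfl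
  | .inl ⟨false, .dchild _⟩ => rfl
  | .inl ⟨true, _⟩ => rfl
  | .inr j => j.1.elim

theorem embTL_inj : Function.Injective (embTL (S := S) (S' := S') (T := T) (T' := T')) :=
  fun a b h => by rw [← retrTL_embTL (S' := S') (T' := T') a, h, retrTL_embTL]

theorem embTR_inj : Function.Injective (embTR (S := S) (S' := S') (T := T) (T' := T')) :=
  fun a b h => by rw [← retrTR_embTR (S := S) (T := T) a, h, retrTR_embTR]

end Helpers


section Preserve

variable {A : Type} {S S' T T' : Shape A}

theorem shape_embTL : ∀ v : (two S T).Vt, v ≠ dRoot S T →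
    shapeAt (embTL (S' := S') (T' := T') v) = shapeAt v
  | .inl ⟨false, .root _⟩, h => absurd rfl h
  | .inl ⟨false, .dchild _⟩, _ => rfl
  | .inl ⟨true, _⟩, _ => rfl
  | .inr j, _ => j.1.elim

theorem shape_embTR : ∀ v : (two S' T').Vt, v ≠ dRoot S' T' →
    shapeAt (embTR (S := S) (T := T) v) = shapeAt v
  | .inl ⟨false, .root _⟩, h => absurd rfl h
  | .inl ⟨false, .dchild _⟩, _ => rfl
  | .inl ⟨true, _⟩, _ => rfl
  | .inr j, _ => j.1.elim

theorem sgn_embTL : ∀ v : (two S T).Vt, sgn (embTL (S' := S') (T' := T') v) = sgn v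
  | .inl ⟨false, .root _⟩ => rfl
  | .inl ⟨false, .dchild _⟩ => rfl
  | .inl ⟨true, _⟩ => rfl
  | .inr j => j.1.elim

theorem sgn_embTR : ∀ v : (two S' T').Vt, sgn (embTR (S := S) (T := T) v) = sgn v
  | .inl ⟨false, .root _⟩ => rfl
  | .inl ⟨false, .dchild _⟩ => rfl
  | .inl ⟨true, _⟩ => rfl
  | .inr j => j.1.elim

theorem side_embTL : ∀ v : (two S T).Vt, side (embTL (S' := S') (T' := T') v) = side v
  | .inl ⟨false, .root _⟩ => rfl
  | .inl ⟨false, .dchild u⟩ => by cases u <;> rfl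
  | .inl ⟨true, w⟩ => by cases w <;> rfl
  | .inr j => j.1.elim

theorem side_embTR_dchild (u : Vtx S') (hu : u ≠ .root S') :
    side (embTR (S := S) (T := T) (T' := T') (.inl ⟨false, .dchild u⟩)) =
      side (.inl ⟨false, .dchild u⟩ : (two S' T').Vt) := by
  cases u with
  | root => exact absurd rfl hu
  | tleft _ => rfl
  | tright _ => rfl
  | dchild _ => rfl

theorem side_embTR_true (w : Vtx T') (hw : w ≠ .root T') :
    side (embTR (S := S) (T := T) (S' := S') (.inl ⟨true, w⟩)) =
      side (.inl ⟨true, w⟩ : (two S' T').Vt) := by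
  cases w with
  | root => exact absurd rfl hw
  | tleft _ => rfl
  | tright _ => rfl
  | dchild _ => rfl

theorem isNeg_embTL : ∀ v : (two S T).Vt, IsNeg (embTL (S' := S') (T' := T') v) ↔ IsNeg v
  | .inl ⟨false, .root _⟩ => Iff.rfl
  | .inl ⟨false, .dchild _⟩ => Iff.rfl
  | .inl ⟨true, _⟩ => Iff.rfl
  | .inr j => j.1.elim

theorem isNeg_embTR : ∀ v : (two S' T').Vt, IsNeg (embTR (S := S) (T := T) v) ↔ IsNeg v
  | .inl ⟨false, .root _⟩ => Iff.rfl
  | .inl ⟨false, .dchild _⟩ => Iff.rfl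
  | .inl ⟨true, _⟩ => Iff.rfl
  | .inr j => j.1.elim

theorem isPos_embTL : ∀ v : (two S T).Vt, IsPos (embTL (S' := S') (T' := T') v) ↔ IsPos v
  | .inl ⟨false, .root _⟩ => Iff.rfl
  | .inl ⟨false, .dchild _⟩ => Iff.rfl
  | .inl ⟨true, _⟩ => Iff.rfl
  | .inr j => j.1.elim

theorem isPos_embTR : ∀ v : (two S' T').Vt, IsPos (embTR (S := S) (T := T) v) ↔ IsPos v
  | .inl ⟨false, .root _⟩ => Iff.rfl
  | .inl ⟨false, .dchild _⟩ => Iff.rfl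
  | .inl ⟨true, _⟩ => Iff.rfl
  | .inr j => j.1.elim

theorem switched_embTL : ∀ v : (two S T).Vt,
    switched (embTL (S' := S') (T' := T') v) ↔ switched v
  | .inl ⟨false, .root _⟩ => Iff.rfl
  | .inl ⟨false, .dchild _⟩ => Iff.rfl
  | .inl ⟨true, _⟩ => Iff.rfl
  | .inr j => j.1.elim

theorem switched_embTR : ∀ v : (two S' T').Vt,
    switched (embTR (S := S) (T := T) v) ↔ switched v
  | .inl ⟨false, .root _⟩ => Iff.rfl
  | .inl ⟨false, .dchild _⟩ => Iff.rfl
  | .inl ⟨true, _⟩ => Iff.rfl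
  | .inr j => j.1.elim

theorem lbl_embTL : ∀ v : (two S T).Vt, lblAt (embTL (S' := S') (T' := T') v) = lblAt v
  | .inl ⟨false, .root _⟩ => rfl
  | .inl ⟨false, .dchild _⟩ => rfl
  | .inl ⟨true, _⟩ => rfl
  | .inr j => j.1.elim

theorem lbl_embTR : ∀ v : (two S' T').Vt, lblAt (embTR (S := S) (T := T) v) = lblAt v
  | .inl ⟨false, .root _⟩ => rfl
  | .inl ⟨false, .dchild _⟩ => rfl
  | .inl ⟨true, _⟩ => rfl
  | .inr j => j.1.elim

theorem unit_embTL : ∀ v : (two S T).Vt,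
    unitLeaf (embTL (S' := S') (T' := T') v) ↔ unitLeaf v
  | .inl ⟨false, .root _⟩ => by
      simp [unitLeaf, shapeAt, embTL, embTLaux, Shape.subtreeAt, two]
  | .inl ⟨false, .dchild _⟩ => Iff.rfl
  | .inl ⟨true, _⟩ => Iff.rfl
  | .inr j => j.1.elim

theorem unit_embTR : ∀ v : (two S' T').Vt,
    unitLeaf (embTR (S := S) (T := T) v) ↔ unitLeaf v
  | .inl ⟨false, .root _⟩ => by
      simp [unitLeaf, shapeAt, embTR, embTRaux, Shape.subtreeAt, two]
  | .inl ⟨false, .dchild _⟩ => Iff.rfl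
  | .inl ⟨true, _⟩ => Iff.rfl
  | .inr j => j.1.elim

theorem embTL_eq_D_iff {v : (two S T).Vt} :
    embTL (S' := S') (T' := T') v = vD S S' T T' ↔ v = dRoot S T := by
  constructor
  · intro h
    have := congrArg (retrTL (S := S) (S' := S') (T := T) (T' := T')) h
    rwa [retrTL_embTL] at this
  · rintro rfl; rfl

theorem embTR_eq_D_iff {v : (two S' T').Vt} :
    embTR (S := S) (T := T) v = vD S S' T T' ↔ v = dRoot S' T' := by
  constructor
  · intro h
    have := congrArg (retrTR (S := S) (S' := S') (T := T) (T' := T')) h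
    rwa [retrTR_embTR] at this
  · rintro rfl; rfl

/-- A discriminator on vertex families. -/
def fam : (two (S.tensor S') (T.tensor T')).Vt → ℕ
  | .inl ⟨false, .root _⟩ => 0
  | .inl ⟨false, .dchild (.root _)⟩ => 1
  | .inl ⟨false, .dchild (.tleft _)⟩ => 3
  | .inl ⟨false, .dchild (.tright _)⟩ => 4
  | .inl ⟨true, .root _⟩ => 2
  | .inl ⟨true, .tleft _⟩ => 5
  | .inl ⟨true, .tright _⟩ => 6
  | .inr j => j.1.elim

theorem embTL_ne_X : ∀ v : (two S T).Vt, embTL (S' := S') (T' := T') v ≠ vX S S' T T'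
  | .inl ⟨false, .root _⟩ => fun h => absurd (congrArg fam h) (Nat.ne_of_beq_eq_false rfl)
  | .inl ⟨false, .dchild _⟩ => fun h => absurd (congrArg fam h) (Nat.ne_of_beq_eq_false rfl)
  | .inl ⟨true, _⟩ => fun h => absurd (congrArg fam h) (Nat.ne_of_beq_eq_false rfl)
  | .inr j => j.1.elim

theorem embTR_ne_X : ∀ v : (two S' T').Vt, embTR (S := S) (T := T) v ≠ vX S S' T T'
  | .inl ⟨false, .root _⟩ => fun h => absurd (congrArg fam h) (Nat.ne_of_beq_eq_false rfl)
  | .inl ⟨false, .dchild _⟩ => fun h => absurd (congrArg fam h) (Nat.ne_of_beq_eq_false rfl)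
  | .inl ⟨true, _⟩ => fun h => absurd (congrArg fam h) (Nat.ne_of_beq_eq_false rfl)
  | .inr j => j.1.elim

theorem embTL_ne_Y : ∀ v : (two S T).Vt, embTL (S' := S') (T' := T') v ≠ vY S S' T T'
  | .inl ⟨false, .root _⟩ => fun h => absurd (congrArg fam h) (Nat.ne_of_beq_eq_false rfl)
  | .inl ⟨false, .dchild _⟩ => fun h => absurd (congrArg fam h) (Nat.ne_of_beq_eq_false rfl)
  | .inl ⟨true, _⟩ => fun h => absurd (congrArg fam h) (Nat.ne_of_beq_eq_false rfl)
  | .inr j => j.1.elim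

theorem embTR_ne_Y : ∀ v : (two S' T').Vt, embTR (S := S) (T := T) v ≠ vY S S' T T'
  | .inl ⟨false, .root _⟩ => fun h => absurd (congrArg fam h) (Nat.ne_of_beq_eq_false rfl)
  | .inl ⟨false, .dchild _⟩ => fun h => absurd (congrArg fam h) (Nat.ne_of_beq_eq_false rfl)
  | .inl ⟨true, _⟩ => fun h => absurd (congrArg fam h) (Nat.ne_of_beq_eq_false rfl)
  | .inr j => j.1.elim

theorem embTL_ne_embTR : ∀ (v : (two S T).Vt) (v' : (two S' T').Vt), v ≠ dRoot S T →
    embTL (S' := S') (T' := T') v ≠ embTR (S := S) (T := T) v' := by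
  intro v v' hv h
  have hfam := congrArg fam h
  rcases v with ⟨b, u⟩ | j
  case inr => exact j.1.elim
  rcases v' with ⟨b', u'⟩ | j'
  case inr => exact j'.1.elim
  cases b <;> cases b' <;> cases u <;> cases u' <;>
    first | exact hv rfl | exact Nat.ne_of_beq_eq_false rfl hfam

/-- Discriminator on old vertices. -/
def famO {U W : Shape A} : (two U W).Vt → ℕ
  | .inl ⟨false, .root _⟩ => 0
  | .inl ⟨false, .dchild _⟩ => 1
  | .inl ⟨true, _⟩ => 2
  | .inr j => j.1.elim

theorem ne_dRoot_dchild {U W : Shape A} (u : Vtx U) :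
    (.inl ⟨false, .dchild u⟩ : (two U W).Vt) ≠ dRoot U W := fun h =>
  absurd (congrArg famO h) (Nat.ne_of_beq_eq_false rfl)

theorem ne_dRoot_true {U W : Shape A} (w : Vtx W) :
    (.inl ⟨true, w⟩ : (two U W).Vt) ≠ dRoot U W := fun h =>
  absurd (congrArg famO h) (Nat.ne_of_beq_eq_false rfl)

theorem cover : ∀ v : (two (S.tensor S') (T.tensor T')).Vt,
    v = vD S S' T T' ∨ v = vX S S' T T' ∨ v = vY S S' T T' ∨
    (∃ v₀ : (two S T).Vt, v₀ ≠ dRoot S T ∧ v = embTL v₀) ∨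
    (∃ v₀ : (two S' T').Vt, v₀ ≠ dRoot S' T' ∧ v = embTR v₀)
  | .inl ⟨false, .root _⟩ => Or.inl rfl
  | .inl ⟨false, .dchild (.root _)⟩ => Or.inr (Or.inl rfl)
  | .inl ⟨true, .root _⟩ => Or.inr (Or.inr (Or.inl rfl))
  | .inl ⟨false, .dchild (.tleft u)⟩ =>
      Or.inr (Or.inr (Or.inr (Or.inl ⟨.inl ⟨false, .dchild u⟩, ne_dRoot_dchild u, rfl⟩)))
  | .inl ⟨false, .dchild (.tright u)⟩ =>
      Or.inr (Or.inr (Or.inr (Or.inr ⟨.inl ⟨false, .dchild u⟩, ne_dRoot_dchild u, rfl⟩)))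
  | .inl ⟨true, .tleft w⟩ =>
      Or.inr (Or.inr (Or.inr (Or.inl ⟨.inl ⟨true, w⟩, ne_dRoot_true w, rfl⟩)))
  | .inl ⟨true, .tright w⟩ =>
      Or.inr (Or.inr (Or.inr (Or.inr ⟨.inl ⟨true, w⟩, ne_dRoot_true w, rfl⟩)))
  | .inr j => j.1.elim

end Preserve


section Par

variable {A : Type} {S S' T T' : Shape A}

theorem parent_eq_none {U : Shape A} (u : Vtx U) (h : Shape.parent u = none) : u = .root U := by
  cases u <;> simp [Shape.parent] at h ⊢

theorem parD_none : par (vD S S' T T') = none := rfl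
theorem parY_none : par (vY S S' T T') = none := rfl
theorem parX : par (vX S S' T T') = some (vD S S' T T') := rfl
theorem par_rL : par (vrL S S' T T') = some (vX S S' T T') := rfl
theorem par_rR : par (vrR S S' T T') = some (vX S S' T T') := rfl
theorem par_tL : par (vtL S S' T T') = some (vY S S' T T') := rfl
theorem par_tR : par (vtR S S' T T') = some (vY S S' T T') := rfl

theorem parN_embTL_dchild_some (u p : Vtx S) (hp : Shape.parent u = some p) :
    par (embTL (S' := S') (T' := T') (.inl ⟨false, .dchild u⟩)) =
      some (embTL (S' := S') (T := T) (T' := T') (.inl ⟨false, .dchild p⟩)) := by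
  have e : Shape.parent (Vtx.dchild (Vtx.tleft (T := S') u)) = some (Vtx.dchild (Vtx.tleft p)) := by simp [Shape.parent, hp]
  exact congrArg (Option.map (fun q => (Sum.inl ⟨false, q⟩ : (two (S.tensor S') (T.tensor T')).Vt))) e

theorem parN_embTL_dchild_none (u : Vtx S) (hp : Shape.parent u = none) :
    par (embTL (S' := S') (T' := T') (.inl ⟨false, .dchild u⟩)) = some (vX S S' T T') := by
  have e : Shape.parent (Vtx.dchild (Vtx.tleft (T := S') u)) = some (Vtx.dchild (Vtx.root _)) := by simp [Shape.parent, hp]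
  exact congrArg (Option.map (fun q => (Sum.inl ⟨false, q⟩ : (two (S.tensor S') (T.tensor T')).Vt))) e

theorem parN_embTL_true_some (w p : Vtx T) (hp : Shape.parent w = some p) :
    par (embTL (S' := S') (T' := T') (.inl ⟨true, w⟩)) =
      some (embTL (S := S) (S' := S') (T' := T') (.inl ⟨true, p⟩)) := by
  simp [CutSeq.par, embTL, embTLaux, Shape.parent, hp]
  rfl

theorem parN_embTL_true_none (w : Vtx T) (hp : Shape.parent w = none) :
    par (embTL (S' := S') (T' := T') (.inl ⟨true, w⟩)) = some (vY S S' T T') := by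
  simp [CutSeq.par, embTL, embTLaux, Shape.parent, hp, vY, two]
  rfl

theorem parN_embTR_dchild_some (u p : Vtx S') (hp : Shape.parent u = some p) :
    par (embTR (S := S) (T := T) (.inl ⟨false, .dchild u⟩)) =
      some (embTR (S := S) (T := T) (T' := T') (.inl ⟨false, .dchild p⟩)) := by
  have e : Shape.parent (Vtx.dchild (Vtx.tright (S := S) u)) = some (Vtx.dchild (Vtx.tright p)) := by simp [Shape.parent, hp]
  exact congrArg (Option.map (fun q => (Sum.inl ⟨false, q⟩ : (two (S.tensor S') (T.tensor T')).Vt))) e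

theorem parN_embTR_dchild_none (u : Vtx S') (hp : Shape.parent u = none) :
    par (embTR (S := S) (T := T) (.inl ⟨false, .dchild u⟩)) = some (vX S S' T T') := by
  have e : Shape.parent (Vtx.dchild (Vtx.tright (S := S) u)) = some (Vtx.dchild (Vtx.root _)) := by simp [Shape.parent, hp]
  exact congrArg (Option.map (fun q => (Sum.inl ⟨false, q⟩ : (two (S.tensor S') (T.tensor T')).Vt))) e

theorem parN_embTR_true_some (w p : Vtx T') (hp : Shape.parent w = some p) :
    par (embTR (S := S) (T := T) (.inl ⟨true, w⟩)) =
      some (embTR (S := S) (S' := S') (T := T) (.inl ⟨true, p⟩)) := by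
  simp [CutSeq.par, embTR, embTRaux, Shape.parent, hp]
  rfl

theorem parN_embTR_true_none (w : Vtx T') (hp : Shape.parent w = none) :
    par (embTR (S := S) (T := T) (.inl ⟨true, w⟩)) = some (vY S S' T T') := by
  simp [CutSeq.par, embTR, embTRaux, Shape.parent, hp, vY, two]
  rfl

theorem parO_dchild_some {U W : Shape A} (u p : Vtx U) (hp : Shape.parent u = some p) :
    par (.inl ⟨false, .dchild u⟩ : (two U W).Vt) = some (.inl ⟨false, .dchild p⟩) := by
  simp [CutSeq.par, Shape.parent, hp]
  rfl

theorem parO_dchild_none {U W : Shape A} (u : Vtx U) (hp : Shape.parent u = none) :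
    par (.inl ⟨false, .dchild u⟩ : (two U W).Vt) = some (dRoot U W) := by
  simp [CutSeq.par, Shape.parent, hp, dRoot, two]
  rfl

theorem parO_true_some {U W : Shape A} (w p : Vtx W) (hp : Shape.parent w = some p) :
    par (.inl ⟨true, w⟩ : (two U W).Vt) = some (.inl ⟨true, p⟩) := by
  simp [CutSeq.par, Shape.parent, hp]
  exact congrArg (Option.map _) hp

theorem parO_true_none {U W : Shape A} (w : Vtx W) (hp : Shape.parent w = none) :
    par (.inl ⟨true, w⟩ : (two U W).Vt) = none := by
  simp [CutSeq.par, Shape.parent, hp]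
  exact congrArg (Option.map _) hp

theorem parN_embTL_shape (x : (two S T).Vt) (hx : x ≠ dRoot S T) :
    (∃ x', x' ≠ dRoot S T ∧
      par (embTL (S' := S') (T' := T') x) = some (embTL x') ∧ par x = some x' ∧
      side (embTL (S' := S') (T' := T') x) = side x) ∨
    (par (embTL (S' := S') (T' := T') x) = some (vX S S' T T') ∧
      x = .inl ⟨false, .dchild (.root S)⟩ ∧ par x = some (dRoot S T)) ∨
    (par (embTL (S' := S') (T' := T') x) = some (vY S S' T T') ∧
      x = .inl ⟨true, .root _⟩ ∧ par x = none) := by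
  rcases x with ⟨b, u⟩ | j
  case inr => exact j.1.elim
  cases b
  · cases u with
    | root => exact absurd rfl hx
    | dchild u' =>
      rcases hp : Shape.parent u' with _ | p
      · refine Or.inr (Or.inl ⟨?_, ?_, parO_dchild_none u' hp⟩)
        · rw [parent_eq_none u' hp]; exact parN_embTL_dchild_none _ rfl
        · rw [parent_eq_none u' hp]
      · exact Or.inl ⟨.inl ⟨false, .dchild p⟩, ne_dRoot_dchild p,
          parN_embTL_dchild_some u' p hp, parO_dchild_some u' p hp, side_embTL _⟩
  · rcases hp : Shape.parent u with _ | p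
    · have hu := parent_eq_none u hp
      subst hu
      exact Or.inr (Or.inr ⟨parN_embTL_true_none _ rfl, rfl, parO_true_none _ rfl⟩)
    · exact Or.inl ⟨.inl ⟨true, p⟩, ne_dRoot_true p,
        parN_embTL_true_some u p hp, parO_true_some u p hp, side_embTL _⟩

theorem parN_embTR_shape (x : (two S' T').Vt) (hx : x ≠ dRoot S' T') :
    (∃ x', x' ≠ dRoot S' T' ∧
      par (embTR (S := S) (T := T) x) = some (embTR x') ∧ par x = some x' ∧
      side (embTR (S := S) (T := T) x) = side x) ∨
    (par (embTR (S := S) (T := T) x) = some (vX S S' T T') ∧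
      x = .inl ⟨false, .dchild (.root S')⟩ ∧ par x = some (dRoot S' T')) ∨
    (par (embTR (S := S) (T := T) x) = some (vY S S' T T') ∧
      x = .inl ⟨true, .root _⟩ ∧ par x = none) := by
  rcases x with ⟨b, u⟩ | j
  case inr => exact j.1.elim
  cases b
  · cases u with
    | root => exact absurd rfl hx
    | dchild u' =>
      rcases hp : Shape.parent u' with _ | p
      · refine Or.inr (Or.inl ⟨?_, ?_, parO_dchild_none u' hp⟩)
        · rw [parent_eq_none u' hp]; exact parN_embTR_dchild_none _ rfl
        · rw [parent_eq_none u' hp]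
      · exact Or.inl ⟨.inl ⟨false, .dchild p⟩, ne_dRoot_dchild p,
          parN_embTR_dchild_some u' p hp, parO_dchild_some u' p hp,
          side_embTR_dchild u' (fun e => by rw [e] at hp; simp [Shape.parent] at hp)⟩
  · rcases hp : Shape.parent u with _ | p
    · have hu := parent_eq_none u hp
      subst hu
      exact Or.inr (Or.inr ⟨parN_embTR_true_none _ rfl, rfl, parO_true_none _ rfl⟩)
    · exact Or.inl ⟨.inl ⟨true, p⟩, ne_dRoot_true p,
        parN_embTR_true_some u p hp, parO_true_some u p hp,
        side_embTR_true u (fun e => by rw [e] at hp; simp [Shape.parent] at hp)⟩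

theorem fam_vD : fam (vD S S' T T') = 0 := rfl
theorem fam_vX : fam (vX S S' T T') = 1 := rfl
theorem fam_vY : fam (vY S S' T T') = 2 := rfl

theorem vD_ne_vX : vD S S' T T' ≠ vX S S' T T' := fun h => by
  simpa [fam_vD, fam_vX] using congrArg fam h
theorem vD_ne_vY : vD S S' T T' ≠ vY S S' T T' := fun h => by
  simpa [fam_vD, fam_vY] using congrArg fam h
theorem vX_ne_vY : vX S S' T T' ≠ vY S S' T T' := fun h => by
  simpa [fam_vX, fam_vY] using congrArg fam h

theorem par_inv_D : ∀ v : (two (S.tensor S') (T.tensor T')).Vt,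
    par v = some (vD S S' T T') → v = vX S S' T T' := by
  intro v h
  rcases cover v with rfl | rfl | rfl | ⟨x, hx, rfl⟩ | ⟨x, hx, rfl⟩
  · rw [parD_none] at h; exact absurd h (by simp)
  · rfl
  · rw [parY_none] at h; exact absurd h (by simp)
  · rcases parN_embTL_shape (S' := S') (T' := T') x hx with ⟨x', hx', hpar, _, _⟩ | ⟨hpar, _, _⟩ | ⟨hpar, _, _⟩ <;>
      rw [hpar] at h <;> have := Option.some.inj h
    · exact absurd this (fun hh => hx' (embTL_eq_D_iff.mp hh))
    · exact absurd this vD_ne_vX.symm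
    · exact absurd this vD_ne_vY.symm
  · rcases parN_embTR_shape (S := S) (T := T) x hx with ⟨x', hx', hpar, _, _⟩ | ⟨hpar, _, _⟩ | ⟨hpar, _, _⟩ <;>
      rw [hpar] at h <;> have := Option.some.inj h
    · exact absurd this (fun hh => hx' (embTR_eq_D_iff.mp hh))
    · exact absurd this vD_ne_vX.symm
    · exact absurd this vD_ne_vY.symm

theorem par_inv_X : ∀ v : (two (S.tensor S') (T.tensor T')).Vt,
    par v = some (vX S S' T T') → v = vrL S S' T T' ∨ v = vrR S S' T T' := by
  intro v h
  rcases cover v with rfl | rfl | rfl | ⟨x, hx, rfl⟩ | ⟨x, hx, rfl⟩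
  · rw [parD_none] at h; exact absurd h (by simp)
  · rw [parX] at h; exact absurd (Option.some.inj h) vD_ne_vX
  · rw [parY_none] at h; exact absurd h (by simp)
  · rcases parN_embTL_shape (S' := S') (T' := T') x hx with ⟨x', hx', hpar, _, _⟩ | ⟨hpar, hxval, _⟩ | ⟨hpar, _, _⟩ <;>
      rw [hpar] at h <;> have := Option.some.inj h
    · exact absurd this (embTL_ne_X x')
    · left; rw [hxval]; rfl
    · exact absurd this vX_ne_vY.symm
  · rcases parN_embTR_shape (S := S) (T := T) x hx with ⟨x', hx', hpar, _, _⟩ | ⟨hpar, hxval, _⟩ | ⟨hpar, _, _⟩ <;>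
      rw [hpar] at h <;> have := Option.some.inj h
    · exact absurd this (embTR_ne_X x')
    · right; rw [hxval]; rfl
    · exact absurd this vX_ne_vY.symm

theorem par_inv_Y : ∀ v : (two (S.tensor S') (T.tensor T')).Vt,
    par v = some (vY S S' T T') → v = vtL S S' T T' ∨ v = vtR S S' T T' := by
  intro v h
  rcases cover v with rfl | rfl | rfl | ⟨x, hx, rfl⟩ | ⟨x, hx, rfl⟩
  · rw [parD_none] at h; exact absurd h (by simp)
  · rw [parX] at h; exact absurd (Option.some.inj h) vD_ne_vY
  · rw [parY_none] at h; exact absurd h (by simp)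
  · rcases parN_embTL_shape (S' := S') (T' := T') x hx with ⟨x', hx', hpar, _, _⟩ | ⟨hpar, _, _⟩ | ⟨hpar, hxval, _⟩ <;>
      rw [hpar] at h <;> have := Option.some.inj h
    · exact absurd this (embTL_ne_Y x')
    · exact absurd this vX_ne_vY
    · left; rw [hxval]; rfl
  · rcases parN_embTR_shape (S := S) (T := T) x hx with ⟨x', hx', hpar, _, _⟩ | ⟨hpar, _, _⟩ | ⟨hpar, hxval, _⟩ <;>
      rw [hpar] at h <;> have := Option.some.inj h
    · exact absurd this (embTR_ne_Y x')
    · exact absurd this vX_ne_vY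
    · right; rw [hxval]; rfl

end Par


section Rel

variable {A : Type} {S S' T T' : Shape A}

/-- The generating relation of a switching graph. -/
def SRel {Γ : CutSeq A} (L : LaxLF Γ) (σ : Γ.Vt → Bool) (a b : Γ.Vt) : Prop :=
  (par a = some b ∧ (switched b → σ b = side a)) ∨ cutEdge a b ∨
    ∃ h : IsNeg a, L.f ⟨a, h⟩ = b

theorem switchGraph_adj {Γ : CutSeq A} (L : LaxLF Γ) (σ : Γ.Vt → Bool) (a b : Γ.Vt) :
    (switchGraph L σ).Adj a b ↔ (SRel L σ a b ∨ SRel L σ b a) ∧ a ≠ b := by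
  rw [switchGraph, SimpleGraph.fromRel_adj]
  unfold SRel
  tauto

theorem notNeg_D : ¬ IsNeg (vD S S' T T') := fun h => h.1
theorem notNeg_X : ¬ IsNeg (vX S S' T T') := fun h => h.1
theorem notNeg_Y : ¬ IsNeg (vY S S' T T') := fun h => h.1
theorem notPos_D : ¬ IsPos (vD S S' T T') := fun h => h.1
theorem notPos_X : ¬ IsPos (vX S S' T T') := fun h => h.1
theorem notPos_Y : ¬ IsPos (vY S S' T T') := fun h => h.1
theorem notPos_dRoot {U W : Shape A} : ¬ IsPos (dRoot U W) := fun h => h.1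
theorem notNeg_dRoot {U W : Shape A} : ¬ IsNeg (dRoot U W) := fun h => h.1

theorem notSwitched_D : ¬ switched (vD S S' T T') := fun h => h.1
theorem notSwitched_Y : ¬ switched (vY S S' T T') := fun h => Bool.noConfusion h.2
theorem switched_X : switched (vX S S' T T') := ⟨trivial, rfl⟩

theorem side_rL : side (vrL S S' T T') = false := rfl
theorem side_rR : side (vrR S S' T T') = true := rfl

variable {f : LaxLF (two S T)} {f' : LaxLF (two S' T')}
  {g : LaxLF (two (S.tensor S') (T.tensor T'))}

theorem gf_embTL (htc : tensorChar f f' g) (n : NegLeaf (two (S.tensor S') (T.tensor T')))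
    (n₀ : NegLeaf (two S T)) (h : n.1 = embTL n₀.1) : g.f n = embTL (f.f n₀) := by
  obtain ⟨hneg, heq⟩ := htc.1 n₀
  have : n = ⟨embTL n₀.1, hneg⟩ := Subtype.ext h
  rw [this, heq]

theorem gf_embTR (htc : tensorChar f f' g) (n : NegLeaf (two (S.tensor S') (T.tensor T')))
    (n₀ : NegLeaf (two S' T')) (h : n.1 = embTR n₀.1) : g.f n = embTR (f'.f n₀) := by
  obtain ⟨hneg, heq⟩ := htc.2 n₀
  have : n = ⟨embTR n₀.1, hneg⟩ := Subtype.ext h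
  rw [this, heq]

theorem negLeaf_cases (n : NegLeaf (two (S.tensor S') (T.tensor T'))) :
    (∃ n₀ : NegLeaf (two S T), n.1 = embTL n₀.1) ∨
    (∃ n₀ : NegLeaf (two S' T'), n.1 = embTR n₀.1) := by
  rcases cover n.1 with h | h | h | ⟨x, hx, h⟩ | ⟨x, hx, h⟩
  · exact absurd (h ▸ n.2) notNeg_D
  · exact absurd (h ▸ n.2) notNeg_X
  · exact absurd (h ▸ n.2) notNeg_Y
  · exact Or.inl ⟨⟨x, (isNeg_embTL x).mp (h ▸ n.2)⟩, h⟩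
  · exact Or.inr ⟨⟨x, (isNeg_embTR x).mp (h ▸ n.2)⟩, h⟩

theorem posLeaf_cases (w : PosLeaf (two (S.tensor S') (T.tensor T'))) :
    (∃ w₀ : PosLeaf (two S T), w.1 = embTL w₀.1) ∨
    (∃ w₀ : PosLeaf (two S' T'), w.1 = embTR w₀.1) := by
  rcases cover w.1 with h | h | h | ⟨x, hx, h⟩ | ⟨x, hx, h⟩
  · exact absurd (h ▸ w.2) notPos_D
  · exact absurd (h ▸ w.2) notPos_X
  · exact absurd (h ▸ w.2) notPos_Y
  · exact Or.inl ⟨⟨x, (isPos_embTL x).mp (h ▸ w.2)⟩, h⟩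
  · exact Or.inr ⟨⟨x, (isPos_embTR x).mp (h ▸ w.2)⟩, h⟩

theorem gf_val (htc : tensorChar f f' g) (hstd : IsStandard f) (hstd' : IsStandard f')
    (n : NegLeaf (two (S.tensor S') (T.tensor T'))) :
    (∃ w₀ : (two S T).Vt, IsPos w₀ ∧ g.f n = embTL w₀) ∨
    (∃ w₀ : (two S' T').Vt, IsPos w₀ ∧ g.f n = embTR w₀) := by
  rcases negLeaf_cases n with ⟨n₀, h⟩ | ⟨n₀, h⟩
  · exact Or.inl ⟨f.f n₀, hstd n₀, gf_embTL htc n n₀ h⟩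
  · exact Or.inr ⟨f'.f n₀, hstd' n₀, gf_embTR htc n n₀ h⟩

theorem pos_ne_dRoot {U W : Shape A} {v : (two U W).Vt} (h : IsPos v) : v ≠ dRoot U W :=
  fun e => notPos_dRoot (e ▸ h)

theorem gf_ne_D (htc : tensorChar f f' g) (hstd : IsStandard f) (hstd' : IsStandard f')
    (n : NegLeaf (two (S.tensor S') (T.tensor T'))) : g.f n ≠ vD S S' T T' := by
  rcases gf_val htc hstd hstd' n with ⟨w₀, hw, h⟩ | ⟨w₀, hw, h⟩
  · rw [h]; exact fun e => pos_ne_dRoot hw (embTL_eq_D_iff.mp e)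
  · rw [h]; exact fun e => pos_ne_dRoot hw (embTR_eq_D_iff.mp e)

theorem gf_ne_X (htc : tensorChar f f' g) (hstd : IsStandard f) (hstd' : IsStandard f')
    (n : NegLeaf (two (S.tensor S') (T.tensor T'))) : g.f n ≠ vX S S' T T' := by
  rcases gf_val htc hstd hstd' n with ⟨w₀, hw, h⟩ | ⟨w₀, hw, h⟩
  · rw [h]; exact embTL_ne_X w₀
  · rw [h]; exact embTR_ne_X w₀

theorem gf_ne_Y (htc : tensorChar f f' g) (hstd : IsStandard f) (hstd' : IsStandard f')
    (n : NegLeaf (two (S.tensor S') (T.tensor T'))) : g.f n ≠ vY S S' T T' := by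
  rcases gf_val htc hstd hstd' n with ⟨w₀, hw, h⟩ | ⟨w₀, hw, h⟩
  · rw [h]; exact embTL_ne_Y w₀
  · rw [h]; exact embTR_ne_Y w₀

end Rel


section Adj

variable {A : Type} {S S' T T' : Shape A}
variable {f : LaxLF (two S T)} {f' : LaxLF (two S' T')}
  {g : LaxLF (two (S.tensor S') (T.tensor T'))}
  {σ : (two (S.tensor S') (T.tensor T')).Vt → Bool}

theorem relL_iff (htc : tensorChar f f' g) (a b : (two S T).Vt)
    (ha : a ≠ dRoot S T) (hb : b ≠ dRoot S T) :
    SRel g σ (embTL a) (embTL b) ↔ SRel f (fun v => σ (embTL v)) a b := by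
  have hfe : (∃ h : IsNeg (embTL (S' := S') (T' := T') a), g.f ⟨embTL a, h⟩ = embTL b) ↔
      (∃ h : IsNeg a, f.f ⟨a, h⟩ = b) := by
    constructor
    · rintro ⟨h, heq⟩
      have ha' : IsNeg a := (isNeg_embTL a).mp h
      refine ⟨ha', ?_⟩
      have hg := gf_embTL htc ⟨embTL a, h⟩ ⟨a, ha'⟩ rfl
      rw [hg] at heq
      exact embTL_inj heq
    · rintro ⟨h, heq⟩
      refine ⟨(isNeg_embTL a).mpr h, ?_⟩
      have hg := gf_embTL htc ⟨embTL a, (isNeg_embTL a).mpr h⟩ ⟨a, h⟩ rfl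
      rw [hg, heq]
  have hpar : (par (embTL (S' := S') (T' := T') a) = some (embTL b) ∧
      (switched (embTL (S' := S') (T' := T') b) → σ (embTL b) = side (embTL (S' := S') (T' := T') a))) ↔
      (par a = some b ∧ (switched b → σ (embTL b) = side a)) := by
    rcases parN_embTL_shape (S' := S') (T' := T') a ha with
      ⟨x', hx', hN, hO, hside⟩ | ⟨hN, hxv, hO⟩ | ⟨hN, hxv, hO⟩
    · rw [hN, hO, hside, Option.some_inj, Option.some_inj]
      constructor
      · rintro ⟨he, hc⟩
        have hb' : x' = b := embTL_inj he
        subst hb'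
        exact ⟨rfl, fun hsw => hc ((switched_embTL _).mpr hsw)⟩
      · rintro ⟨he, hc⟩
        subst he
        exact ⟨rfl, fun hsw => hc ((switched_embTL _).mp hsw)⟩
    · rw [hN, hO]
      constructor
      · rintro ⟨he, _⟩
        exact absurd (Option.some.inj he).symm (embTL_ne_X b)
      · rintro ⟨he, _⟩
        exact absurd (Option.some.inj he).symm hb
    · rw [hN, hO]
      constructor
      · rintro ⟨he, _⟩
        exact absurd (Option.some.inj he).symm (embTL_ne_Y b)
      · rintro ⟨he, _⟩
        exact nomatch he
  unfold SRel
  rw [hpar]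
  constructor
  · rintro (h | h | h)
    · exact Or.inl h
    · exact absurd h (no_cut _ _)
    · exact Or.inr (Or.inr (hfe.mp h))
  · rintro (h | h | h)
    · exact Or.inl h
    · exact absurd h (no_cut _ _)
    · exact Or.inr (Or.inr (hfe.mpr h))

theorem relR_iff (htc : tensorChar f f' g) (a b : (two S' T').Vt)
    (ha : a ≠ dRoot S' T') (hb : b ≠ dRoot S' T') :
    SRel g σ (embTR a) (embTR b) ↔ SRel f' (fun v => σ (embTR v)) a b := by
  have hfe : (∃ h : IsNeg (embTR (S := S) (T := T) a), g.f ⟨embTR a, h⟩ = embTR b) ↔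
      (∃ h : IsNeg a, f'.f ⟨a, h⟩ = b) := by
    constructor
    · rintro ⟨h, heq⟩
      have ha' : IsNeg a := (isNeg_embTR a).mp h
      refine ⟨ha', ?_⟩
      have hg := gf_embTR htc ⟨embTR a, h⟩ ⟨a, ha'⟩ rfl
      rw [hg] at heq
      exact embTR_inj heq
    · rintro ⟨h, heq⟩
      refine ⟨(isNeg_embTR a).mpr h, ?_⟩
      have hg := gf_embTR htc ⟨embTR a, (isNeg_embTR a).mpr h⟩ ⟨a, h⟩ rfl
      rw [hg, heq]
  have hpar : (par (embTR (S := S) (T := T) a) = some (embTR b) ∧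
      (switched (embTR (S := S) (T := T) b) → σ (embTR b) = side (embTR (S := S) (T := T) a))) ↔
      (par a = some b ∧ (switched b → σ (embTR b) = side a)) := by
    rcases parN_embTR_shape (S := S) (T := T) a ha with
      ⟨x', hx', hN, hO, hside⟩ | ⟨hN, hxv, hO⟩ | ⟨hN, hxv, hO⟩
    · rw [hN, hO, hside, Option.some_inj, Option.some_inj]
      constructor
      · rintro ⟨he, hc⟩
        have hb' : x' = b := embTR_inj he
        subst hb'
        exact ⟨rfl, fun hsw => hc ((switched_embTR _).mpr hsw)⟩
      · rintro ⟨he, hc⟩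
        subst he
        exact ⟨rfl, fun hsw => hc ((switched_embTR _).mp hsw)⟩
    · rw [hN, hO]
      constructor
      · rintro ⟨he, _⟩
        exact absurd (Option.some.inj he).symm (embTR_ne_X b)
      · rintro ⟨he, _⟩
        exact absurd (Option.some.inj he).symm hb
    · rw [hN, hO]
      constructor
      · rintro ⟨he, _⟩
        exact absurd (Option.some.inj he).symm (embTR_ne_Y b)
      · rintro ⟨he, _⟩
        exact nomatch he
  unfold SRel
  rw [hpar]
  constructor
  · rintro (h | h | h)
    · exact Or.inl h
    · exact absurd h (no_cut _ _)
    · exact Or.inr (Or.inr (hfe.mp h))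
  · rintro (h | h | h)
    · exact Or.inl h
    · exact absurd h (no_cut _ _)
    · exact Or.inr (Or.inr (hfe.mpr h))

theorem adjL_iff (htc : tensorChar f f' g) (a b : (two S T).Vt)
    (ha : a ≠ dRoot S T) (hb : b ≠ dRoot S T) :
    (switchGraph g σ).Adj (embTL a) (embTL b) ↔
      (switchGraph f (fun v => σ (embTL v))).Adj a b := by
  rw [switchGraph_adj, switchGraph_adj]
  constructor
  · rintro ⟨h, hne⟩
    refine ⟨?_, fun e => hne (by rw [e])⟩
    rcases h with h | h
    · exact Or.inl ((relL_iff htc a b ha hb).mp h)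
    · exact Or.inr ((relL_iff htc b a hb ha).mp h)
  · rintro ⟨h, hne⟩
    refine ⟨?_, fun e => hne (embTL_inj e)⟩
    rcases h with h | h
    · exact Or.inl ((relL_iff htc a b ha hb).mpr h)
    · exact Or.inr ((relL_iff htc b a hb ha).mpr h)

theorem adjR_iff (htc : tensorChar f f' g) (a b : (two S' T').Vt)
    (ha : a ≠ dRoot S' T') (hb : b ≠ dRoot S' T') :
    (switchGraph g σ).Adj (embTR a) (embTR b) ↔
      (switchGraph f' (fun v => σ (embTR v))).Adj a b := by
  rw [switchGraph_adj, switchGraph_adj]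
  constructor
  · rintro ⟨h, hne⟩
    refine ⟨?_, fun e => hne (by rw [e])⟩
    rcases h with h | h
    · exact Or.inl ((relR_iff htc a b ha hb).mp h)
    · exact Or.inr ((relR_iff htc b a hb ha).mp h)
  · rintro ⟨h, hne⟩
    refine ⟨?_, fun e => hne (embTR_inj e)⟩
    rcases h with h | h
    · exact Or.inl ((relR_iff htc a b ha hb).mpr h)
    · exact Or.inr ((relR_iff htc b a hb ha).mpr h)

theorem vX_ne_rL : vX S S' T T' ≠ vrL S S' T T' := fun h => by
  simpa [fam, vX, vrL] using congrArg fam h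
theorem vX_ne_rR : vX S S' T T' ≠ vrR S S' T T' := fun h => by
  simpa [fam, vX, vrR] using congrArg fam h
theorem vY_ne_tL : vY S S' T T' ≠ vtL S S' T T' := fun h => by
  simpa [fam, vY, vtL] using congrArg fam h
theorem vY_ne_tR : vY S S' T T' ≠ vtR S S' T T' := fun h => by
  simpa [fam, vY, vtR] using congrArg fam h

theorem adjDX : (switchGraph g σ).Adj (vD S S' T T') (vX S S' T T') := by
  rw [switchGraph_adj]
  exact ⟨Or.inr (Or.inl ⟨parX, fun h => absurd h notSwitched_D⟩), vD_ne_vX⟩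

theorem adjXrL (hσ : σ (vX S S' T T') = false) :
    (switchGraph g σ).Adj (vX S S' T T') (vrL S S' T T') := by
  rw [switchGraph_adj]
  exact ⟨Or.inr (Or.inl ⟨par_rL, fun _ => by rw [hσ, side_rL]⟩), vX_ne_rL⟩

theorem adjXrR (hσ : σ (vX S S' T T') = true) :
    (switchGraph g σ).Adj (vX S S' T T') (vrR S S' T T') := by
  rw [switchGraph_adj]
  exact ⟨Or.inr (Or.inl ⟨par_rR, fun _ => by rw [hσ, side_rR]⟩), vX_ne_rR⟩

theorem adjYtL : (switchGraph g σ).Adj (vY S S' T T') (vtL S S' T T') := by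
  rw [switchGraph_adj]
  exact ⟨Or.inr (Or.inl ⟨par_tL, fun h => absurd h notSwitched_Y⟩), vY_ne_tL⟩

theorem adjYtR : (switchGraph g σ).Adj (vY S S' T T') (vtR S S' T T') := by
  rw [switchGraph_adj]
  exact ⟨Or.inr (Or.inl ⟨par_tR, fun h => absurd h notSwitched_Y⟩), vY_ne_tR⟩

theorem nbD (htc : tensorChar f f' g) (hstd : IsStandard f) (hstd' : IsStandard f') :
    ∀ b, (switchGraph g σ).Adj (vD S S' T T') b → b = vX S S' T T' := by
  intro b h
  rw [switchGraph_adj] at h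
  obtain ⟨h, hne⟩ := h
  rcases h with (⟨hp, _⟩ | hc | ⟨hn, _⟩) | (⟨hp, _⟩ | hc | ⟨hn, heq⟩)
  · rw [parD_none] at hp; exact nomatch hp
  · exact absurd hc (no_cut _ _)
  · exact absurd hn notNeg_D
  · exact par_inv_D b hp
  · exact absurd hc (no_cut _ _)
  · exact absurd heq (gf_ne_D htc hstd hstd' ⟨b, hn⟩)

theorem nbX (htc : tensorChar f f' g) (hstd : IsStandard f) (hstd' : IsStandard f') :
    ∀ b, (switchGraph g σ).Adj (vX S S' T T') b →
      b = vD S S' T T' ∨ (b = vrL S S' T T' ∧ σ (vX S S' T T') = false) ∨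
      (b = vrR S S' T T' ∧ σ (vX S S' T T') = true) := by
  intro b h
  rw [switchGraph_adj] at h
  obtain ⟨h, hne⟩ := h
  rcases h with (⟨hp, _⟩ | hc | ⟨hn, _⟩) | (⟨hp, hcnd⟩ | hc | ⟨hn, heq⟩)
  · rw [parX] at hp; exact Or.inl (Option.some.inj hp).symm
  · exact absurd hc (no_cut _ _)
  · exact absurd hn notNeg_X
  · rcases par_inv_X b hp with rfl | rfl
    · exact Or.inr (Or.inl ⟨rfl, (hcnd switched_X).trans side_rL⟩)
    · exact Or.inr (Or.inr ⟨rfl, (hcnd switched_X).trans side_rR⟩)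
  · exact absurd hc (no_cut _ _)
  · exact absurd heq (gf_ne_X htc hstd hstd' ⟨b, hn⟩)

theorem nbY (htc : tensorChar f f' g) (hstd : IsStandard f) (hstd' : IsStandard f') :
    ∀ b, (switchGraph g σ).Adj (vY S S' T T') b →
      b = vtL S S' T T' ∨ b = vtR S S' T T' := by
  intro b h
  rw [switchGraph_adj] at h
  obtain ⟨h, hne⟩ := h
  rcases h with (⟨hp, _⟩ | hc | ⟨hn, _⟩) | (⟨hp, _⟩ | hc | ⟨hn, heq⟩)
  · rw [parY_none] at hp; exact nomatch hp
  · exact absurd hc (no_cut _ _)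
  · exact absurd hn notNeg_Y
  · exact par_inv_Y b hp
  · exact absurd hc (no_cut _ _)
  · exact absurd heq (gf_ne_Y htc hstd hstd' ⟨b, hn⟩)

end Adj


section Class

variable {A : Type} {S S' T T' : Shape A}
variable {f : LaxLF (two S T)} {f' : LaxLF (two S' T')}
  {g : LaxLF (two (S.tensor S') (T.tensor T'))}
  {σ : (two (S.tensor S') (T.tensor T')).Vt → Bool}

/-- Left and right pieces of the vertex set. -/
def LsetD (S S' T T' : Shape A) : Set ((two (S.tensor S') (T.tensor T')).Vt) :=
  embTL '' {x | x ≠ dRoot S T}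

def RsetD (S S' T T' : Shape A) : Set ((two (S.tensor S') (T.tensor T')).Vt) :=
  embTR '' {x | x ≠ dRoot S' T'}

theorem memL {x : (two S T).Vt} (hx : x ≠ dRoot S T) :
    embTL (S' := S') (T' := T') x ∈ LsetD S S' T T' := ⟨x, hx, rfl⟩

theorem memR {x : (two S' T').Vt} (hx : x ≠ dRoot S' T') :
    embTR (S := S) (T := T) x ∈ RsetD S S' T T' := ⟨x, hx, rfl⟩

theorem side_embTR_rootS' :
    side (embTR (S := S) (T := T) (T' := T') (.inl ⟨false, .dchild (.root S')⟩)) = true := rfl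

theorem side_embTL_rootS :
    side (embTL (S' := S') (T := T) (T' := T') (.inl ⟨false, .dchild (.root S)⟩)) = false := rfl

theorem relClass_false (htc : tensorChar f f' g) (hstd : IsStandard f) (hstd' : IsStandard f')
    (hσ : σ (vX S S' T T') = false) :
    ∀ a b, SRel g σ a b →
      (a ∈ insert (vY S S' T T') (insert (vD S S' T T') (insert (vX S S' T T') (LsetD S S' T T'))) ∧
       b ∈ insert (vY S S' T T') (insert (vD S S' T T') (insert (vX S S' T T') (LsetD S S' T T')))) ∨
      (a ∈ insert (vY S S' T T') (RsetD S S' T T') ∧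
       b ∈ insert (vY S S' T T') (RsetD S S' T T')) := by
  have hY3 : vY S S' T T' ∈ insert (vY S S' T T') (insert (vD S S' T T') (insert (vX S S' T T') (LsetD S S' T T'))) := Set.mem_insert _ _
  have hD3 : vD S S' T T' ∈ insert (vY S S' T T') (insert (vD S S' T T') (insert (vX S S' T T') (LsetD S S' T T'))) := Set.mem_insert_of_mem _ (Set.mem_insert _ _)
  have hX3 : vX S S' T T' ∈ insert (vY S S' T T') (insert (vD S S' T T') (insert (vX S S' T T') (LsetD S S' T T'))) := Set.mem_insert_of_mem _ (Set.mem_insert_of_mem _ (Set.mem_insert _ _))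
  have hL3 : ∀ {x : (two S T).Vt}, x ≠ dRoot S T →
      embTL (S' := S') (T' := T') x ∈ insert (vY S S' T T') (insert (vD S S' T T') (insert (vX S S' T T') (LsetD S S' T T'))) :=
    fun hx => Set.mem_insert_of_mem _ (Set.mem_insert_of_mem _ (Set.mem_insert_of_mem _ (memL hx)))
  have hYR : vY S S' T T' ∈ insert (vY S S' T T') (RsetD S S' T T') := Set.mem_insert _ _
  have hRR : ∀ {x : (two S' T').Vt}, x ≠ dRoot S' T' →
      embTR (S := S) (T := T) x ∈ insert (vY S S' T T') (RsetD S S' T T') :=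
    fun hx => Set.mem_insert_of_mem _ (memR hx)
  intro a b h
  rcases cover a with rfl | rfl | rfl | ⟨x, hx, rfl⟩ | ⟨x, hx, rfl⟩
  · rcases h with ⟨hp, _⟩ | hc | ⟨hn, _⟩
    · rw [parD_none] at hp; exact nomatch hp
    · exact absurd hc (no_cut _ _)
    · exact absurd hn notNeg_D
  · rcases h with ⟨hp, _⟩ | hc | ⟨hn, _⟩
    · rw [parX] at hp
      have hb := Option.some.inj hp
      subst hb
      exact Or.inl ⟨hX3, hD3⟩
    · exact absurd hc (no_cut _ _)
    · exact absurd hn notNeg_X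
  · rcases h with ⟨hp, _⟩ | hc | ⟨hn, _⟩
    · rw [parY_none] at hp; exact nomatch hp
    · exact absurd hc (no_cut _ _)
    · exact absurd hn notNeg_Y
  · rcases h with ⟨hp, hcnd⟩ | hc | ⟨hn, heq⟩
    · rcases parN_embTL_shape (S' := S') (T' := T') x hx with
        ⟨x', hx', hN, _, _⟩ | ⟨hN, hxv, _⟩ | ⟨hN, hxv, _⟩ <;>
        rw [hN] at hp <;> have hb := Option.some.inj hp <;> subst hb
      · exact Or.inl ⟨hL3 hx, hL3 hx'⟩
      · exact Or.inl ⟨hL3 hx, hX3⟩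
      · exact Or.inl ⟨hL3 hx, hY3⟩
    · exact absurd hc (no_cut _ _)
    · have hg := gf_embTL htc ⟨embTL x, hn⟩ ⟨x, (isNeg_embTL x).mp hn⟩ rfl
      rw [hg] at heq
      subst heq
      exact Or.inl ⟨hL3 hx, hL3 (pos_ne_dRoot (hstd _))⟩
  · rcases h with ⟨hp, hcnd⟩ | hc | ⟨hn, heq⟩
    · rcases parN_embTR_shape (S := S) (T := T) x hx with
        ⟨x', hx', hN, _, _⟩ | ⟨hN, hxv, _⟩ | ⟨hN, hxv, _⟩ <;>
        rw [hN] at hp <;> have hb := Option.some.inj hp <;> subst hb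
      · exact Or.inr ⟨hRR hx, hRR hx'⟩
      · exfalso
        subst hxv
        have h2 := hcnd switched_X
        rw [hσ, side_embTR_rootS'] at h2
        exact Bool.noConfusion h2
      · exact Or.inr ⟨hRR hx, hYR⟩
    · exact absurd hc (no_cut _ _)
    · have hg := gf_embTR htc ⟨embTR x, hn⟩ ⟨x, (isNeg_embTR x).mp hn⟩ rfl
      rw [hg] at heq
      subst heq
      exact Or.inr ⟨hRR hx, hRR (pos_ne_dRoot (hstd' _))⟩

theorem relClass_true (htc : tensorChar f f' g) (hstd : IsStandard f) (hstd' : IsStandard f')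
    (hσ : σ (vX S S' T T') = true) :
    ∀ a b, SRel g σ a b →
      (a ∈ insert (vY S S' T T') (insert (vD S S' T T') (insert (vX S S' T T') (RsetD S S' T T'))) ∧
       b ∈ insert (vY S S' T T') (insert (vD S S' T T') (insert (vX S S' T T') (RsetD S S' T T')))) ∨
      (a ∈ insert (vY S S' T T') (LsetD S S' T T') ∧
       b ∈ insert (vY S S' T T') (LsetD S S' T T')) := by
  have hY3 : vY S S' T T' ∈ insert (vY S S' T T') (insert (vD S S' T T') (insert (vX S S' T T') (RsetD S S' T T'))) := Set.mem_insert _ _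
  have hD3 : vD S S' T T' ∈ insert (vY S S' T T') (insert (vD S S' T T') (insert (vX S S' T T') (RsetD S S' T T'))) := Set.mem_insert_of_mem _ (Set.mem_insert _ _)
  have hX3 : vX S S' T T' ∈ insert (vY S S' T T') (insert (vD S S' T T') (insert (vX S S' T T') (RsetD S S' T T'))) := Set.mem_insert_of_mem _ (Set.mem_insert_of_mem _ (Set.mem_insert _ _))
  have hR3 : ∀ {x : (two S' T').Vt}, x ≠ dRoot S' T' →
      embTR (S := S) (T := T) x ∈ insert (vY S S' T T') (insert (vD S S' T T') (insert (vX S S' T T') (RsetD S S' T T'))) :=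
    fun hx => Set.mem_insert_of_mem _ (Set.mem_insert_of_mem _ (Set.mem_insert_of_mem _ (memR hx)))
  have hYL : vY S S' T T' ∈ insert (vY S S' T T') (LsetD S S' T T') := Set.mem_insert _ _
  have hLL : ∀ {x : (two S T).Vt}, x ≠ dRoot S T →
      embTL (S' := S') (T' := T') x ∈ insert (vY S S' T T') (LsetD S S' T T') :=
    fun hx => Set.mem_insert_of_mem _ (memL hx)
  intro a b h
  rcases cover a with rfl | rfl | rfl | ⟨x, hx, rfl⟩ | ⟨x, hx, rfl⟩
  · rcases h with ⟨hp, _⟩ | hc | ⟨hn, _⟩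
    · rw [parD_none] at hp; exact nomatch hp
    · exact absurd hc (no_cut _ _)
    · exact absurd hn notNeg_D
  · rcases h with ⟨hp, _⟩ | hc | ⟨hn, _⟩
    · rw [parX] at hp
      have hb := Option.some.inj hp
      subst hb
      exact Or.inl ⟨hX3, hD3⟩
    · exact absurd hc (no_cut _ _)
    · exact absurd hn notNeg_X
  · rcases h with ⟨hp, _⟩ | hc | ⟨hn, _⟩
    · rw [parY_none] at hp; exact nomatch hp
    · exact absurd hc (no_cut _ _)
    · exact absurd hn notNeg_Y
  · rcases h with ⟨hp, hcnd⟩ | hc | ⟨hn, heq⟩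
    · rcases parN_embTL_shape (S' := S') (T' := T') x hx with
        ⟨x', hx', hN, _, _⟩ | ⟨hN, hxv, _⟩ | ⟨hN, hxv, _⟩ <;>
        rw [hN] at hp <;> have hb := Option.some.inj hp <;> subst hb
      · exact Or.inr ⟨hLL hx, hLL hx'⟩
      · exfalso
        subst hxv
        have h2 := hcnd switched_X
        rw [hσ, side_embTL_rootS] at h2
        exact Bool.noConfusion h2
      · exact Or.inr ⟨hLL hx, hYL⟩
    · exact absurd hc (no_cut _ _)
    · have hg := gf_embTL htc ⟨embTL x, hn⟩ ⟨x, (isNeg_embTL x).mp hn⟩ rfl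
      rw [hg] at heq
      subst heq
      exact Or.inr ⟨hLL hx, hLL (pos_ne_dRoot (hstd _))⟩
  · rcases h with ⟨hp, hcnd⟩ | hc | ⟨hn, heq⟩
    · rcases parN_embTR_shape (S := S) (T := T) x hx with
        ⟨x', hx', hN, _, _⟩ | ⟨hN, hxv, _⟩ | ⟨hN, hxv, _⟩ <;>
        rw [hN] at hp <;> have hb := Option.some.inj hp <;> subst hb
      · exact Or.inl ⟨hR3 hx, hR3 hx'⟩
      · exact Or.inl ⟨hR3 hx, hX3⟩
      · exact Or.inl ⟨hR3 hx, hY3⟩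
    · exact absurd hc (no_cut _ _)
    · have hg := gf_embTR htc ⟨embTR x, hn⟩ ⟨x, (isNeg_embTR x).mp hn⟩ rfl
      rw [hg] at heq
      subst heq
      exact Or.inl ⟨hR3 hx, hR3 (pos_ne_dRoot (hstd' _))⟩

end Class


section Old

variable {A : Type} {U W : Shape A}

theorem parO_inv_dRoot : ∀ v : (two U W).Vt, par v = some (dRoot U W) →
    v = (.inl ⟨false, .dchild (.root U)⟩ : (two U W).Vt) := by
  intro v h
  rcases v with ⟨b, u⟩ | j
  case inr => exact j.1.elim
  cases b
  · cases u with
    | root => rw [show par (.inl ⟨false, .root _⟩ : (two U W).Vt) = none from rfl] at h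
              exact nomatch h
    | dchild u' =>
      rcases hp : Shape.parent u' with _ | p
      · rw [parent_eq_none u' hp]
      · rw [parO_dchild_some u' p hp] at h
        exact absurd (Option.some.inj h) (ne_dRoot_dchild p)
  · rcases hp : Shape.parent u with _ | p
    · exact nomatch (h.symm.trans (parO_true_none u hp))
    · exact absurd (Option.some.inj ((parO_true_some u p hp).symm.trans h)) (ne_dRoot_true p)

theorem parO_dRoot_none : par (dRoot U W) = none := rfl

theorem nbDRoot (L : LaxLF (two U W)) (hstd : IsStandard L) (σ₀ : (two U W).Vt → Bool) :
    ∀ b, (switchGraph L σ₀).Adj (dRoot U W) b →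
      b = (.inl ⟨false, .dchild (.root U)⟩ : (two U W).Vt) := by
  intro b h
  rw [switchGraph_adj] at h
  obtain ⟨h, hne⟩ := h
  rcases h with (⟨hp, _⟩ | hc | ⟨hn, _⟩) | (⟨hp, _⟩ | hc | ⟨hn, heq⟩)
  · rw [parO_dRoot_none] at hp; exact nomatch hp
  · exact absurd hc (no_cut _ _)
  · exact absurd hn notNeg_dRoot
  · exact parO_inv_dRoot b hp
  · exact absurd hc (no_cut _ _)
  · exact absurd (heq ▸ hstd ⟨b, hn⟩) notPos_dRoot

end Old

section Construct

variable {A : Type} {S S' T T' : Shape A}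

/-- The tensor of the leaf functions `f` and `f'`. -/
def gsf (f : LaxLF (two S T)) (f' : LaxLF (two S' T')) :
    NegLeaf (two (S.tensor S') (T.tensor T')) → (two (S.tensor S') (T.tensor T')).Vt
  | ⟨.inl ⟨false, .root _⟩, h⟩ => False.elim h.1
  | ⟨.inl ⟨false, .dchild (.root _)⟩, h⟩ => False.elim h.1
  | ⟨.inl ⟨false, .dchild (.tleft u)⟩, h⟩ =>
      embTL (f.f ⟨.inl ⟨false, .dchild u⟩, (isNeg_embTL (.inl ⟨false, .dchild u⟩)).mp h⟩)
  | ⟨.inl ⟨false, .dchild (.tright u)⟩, h⟩ =>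
      embTR (f'.f ⟨.inl ⟨false, .dchild u⟩, (isNeg_embTR (.inl ⟨false, .dchild u⟩)).mp h⟩)
  | ⟨.inl ⟨true, .root _⟩, h⟩ => False.elim h.1
  | ⟨.inl ⟨true, .tleft w⟩, h⟩ =>
      embTL (f.f ⟨.inl ⟨true, w⟩, (isNeg_embTL (.inl ⟨true, w⟩)).mp h⟩)
  | ⟨.inl ⟨true, .tright w⟩, h⟩ =>
      embTR (f'.f ⟨.inl ⟨true, w⟩, (isNeg_embTR (.inl ⟨true, w⟩)).mp h⟩)
  | ⟨.inr j, _⟩ => j.1.elim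

theorem gsf_pos (f : LaxLF (two S T)) (f' : LaxLF (two S' T'))
    (hstd : IsStandard f) (hstd' : IsStandard f') :
    ∀ n, IsPos (gsf f f' n)
  | ⟨.inl ⟨false, .root _⟩, h⟩ => False.elim h.1
  | ⟨.inl ⟨false, .dchild (.root _)⟩, h⟩ => False.elim h.1
  | ⟨.inl ⟨false, .dchild (.tleft u)⟩, h⟩ => (isPos_embTL _).mpr (hstd _)
  | ⟨.inl ⟨false, .dchild (.tright u)⟩, h⟩ => (isPos_embTR _).mpr (hstd' _)
  | ⟨.inl ⟨true, .root _⟩, h⟩ => False.elim h.1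
  | ⟨.inl ⟨true, .tleft w⟩, h⟩ => (isPos_embTL _).mpr (hstd _)
  | ⟨.inl ⟨true, .tright w⟩, h⟩ => (isPos_embTR _).mpr (hstd' _)
  | ⟨.inr j, _⟩ => j.1.elim

/-- The tensor of two linkings, as a lax leaf function. -/
def gstar (f : LaxLF (two S T)) (f' : LaxLF (two S' T'))
    (hstd : IsStandard f) (hstd' : IsStandard f') :
    LaxLF (two (S.tensor S') (T.tensor T')) :=
  ⟨gsf f f', fun v _ => gsf_pos f f' hstd hstd' v⟩

theorem gstar_char (f : LaxLF (two S T)) (f' : LaxLF (two S' T'))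
    (hstd : IsStandard f) (hstd' : IsStandard f') :
    tensorChar f f' (gstar f f' hstd hstd') := by
  constructor
  · rintro ⟨v, hv⟩
    refine ⟨(isNeg_embTL v).mpr hv, ?_⟩
    rcases v with ⟨b, u⟩ | j
    case inr => exact j.1.elim
    cases b
    · cases u with
      | root => exact absurd hv notNeg_dRoot
      | dchild u' => rfl
    · rfl
  · rintro ⟨v, hv⟩
    refine ⟨(isNeg_embTR v).mpr hv, ?_⟩
    rcases v with ⟨b, u⟩ | j
    case inr => exact j.1.elim
    cases b
    · cases u with
      | root => exact absurd hv notNeg_dRoot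
      | dchild u' => rfl
    · rfl

end Construct

/-- The tensor of linkings is a linking: if `f : S → T` and
`f' : S' → T'` are linkings, then their disjoint union
`f ⊗ f' : S ⊗ S' → T ⊗ T'` exists and is a linking (in particular every
switching of it is a tree). -/
theorem statement9 (A : Type) (S S' T T' : Shape A)
    (f : LaxLF (two S T)) (f' : LaxLF (two S' T'))
    (hf : IsLink f) (hf' : IsLink f') :
    (∃ g : LaxLF (two (S.tensor S') (T.tensor T')), tensorChar f f' g) ∧
    ∀ g : LaxLF (two (S.tensor S') (T.tensor T')), tensorChar f f' g → IsLink g := by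
  obtain ⟨⟨hM, hSw⟩, hstd⟩ := hf
  obtain ⟨⟨hM', hSw'⟩, hstd'⟩ := hf'
  constructor
  · exact ⟨gstar f f' hstd hstd', gstar_char f f' hstd hstd'⟩
  intro g htc
  refine ⟨⟨⟨?_, ?_, ?_⟩, ?_⟩, ?_⟩
  · -- label preservation
    intro v a hl
    rcases negLeaf_cases v with ⟨n₀, h⟩ | ⟨n₀, h⟩
    · have hl' : lblAt n₀.1 = some a := by
        rw [← lbl_embTL (S' := S') (T' := T') n₀.1, ← h]; exact hl
      rw [gf_embTL htc v n₀ h, lbl_embTL]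
      exact hM.1 n₀ a hl'
    · have hl' : lblAt n₀.1 = some a := by
        rw [← lbl_embTR (S := S) (T := T) n₀.1, ← h]; exact hl
      rw [gf_embTR htc v n₀ h, lbl_embTR]
      exact hM'.1 n₀ a hl'
  · -- injectivity
    intro v w hvu hwu heq
    rcases negLeaf_cases v with ⟨n₀, h⟩ | ⟨n₀, h⟩ <;>
      rcases negLeaf_cases w with ⟨m₀, hm⟩ | ⟨m₀, hm⟩
    · rw [gf_embTL htc v n₀ h, gf_embTL htc w m₀ hm] at heq
      have h1 : ¬ unitLeaf n₀.1 := fun hu => hvu (by rw [h]; exact (unit_embTL n₀.1).mpr hu)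
      have h2 : ¬ unitLeaf m₀.1 := fun hu => hwu (by rw [hm]; exact (unit_embTL m₀.1).mpr hu)
      have heq' := hM.2.1 n₀ m₀ h1 h2 (embTL_inj heq)
      exact Subtype.ext (by rw [h, hm, heq'])
    · rw [gf_embTL htc v n₀ h, gf_embTR htc w m₀ hm] at heq
      exact absurd heq (embTL_ne_embTR _ _ (pos_ne_dRoot (hstd n₀)))
    · rw [gf_embTR htc v n₀ h, gf_embTL htc w m₀ hm] at heq
      exact absurd heq.symm (embTL_ne_embTR _ _ (pos_ne_dRoot (hstd m₀)))
    · rw [gf_embTR htc v n₀ h, gf_embTR htc w m₀ hm] at heq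
      have h1 : ¬ unitLeaf n₀.1 := fun hu => hvu (by rw [h]; exact (unit_embTR n₀.1).mpr hu)
      have h2 : ¬ unitLeaf m₀.1 := fun hu => hwu (by rw [hm]; exact (unit_embTR m₀.1).mpr hu)
      have heq' := hM'.2.1 n₀ m₀ h1 h2 (embTR_inj heq)
      exact Subtype.ext (by rw [h, hm, heq'])
  · -- surjectivity
    intro w a hl
    rcases posLeaf_cases w with ⟨w₀, h⟩ | ⟨w₀, h⟩
    · have hl' : lblAt w₀.1 = some a := by
        rw [← lbl_embTL (S' := S') (T' := T') w₀.1, ← h]; exact hl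
      obtain ⟨v₀, hvnu, hveq⟩ := hM.2.2 w₀ a hl'
      refine ⟨⟨embTL v₀.1, (isNeg_embTL v₀.1).mpr v₀.2⟩, ?_, ?_⟩
      · exact fun hu => hvnu ((unit_embTL v₀.1).mp hu)
      · rw [gf_embTL htc ⟨embTL v₀.1, (isNeg_embTL v₀.1).mpr v₀.2⟩ v₀ rfl, hveq, ← h]
    · have hl' : lblAt w₀.1 = some a := by
        rw [← lbl_embTR (S := S) (T := T) w₀.1, ← h]; exact hl
      obtain ⟨v₀, hvnu, hveq⟩ := hM'.2.2 w₀ a hl'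
      refine ⟨⟨embTR v₀.1, (isNeg_embTR v₀.1).mpr v₀.2⟩, ?_, ?_⟩
      · exact fun hu => hvnu ((unit_embTR v₀.1).mp hu)
      · rw [gf_embTR htc ⟨embTR v₀.1, (isNeg_embTR v₀.1).mpr v₀.2⟩ v₀ rfl, hveq, ← h]
  · -- the switching criterion
    intro σ
    have hUL : TreeGlue.UT (switchGraph f (fun v => σ (embTL v))) {x | x ≠ dRoot S T} := by
      haveI : Nonempty ((two S T).Vt) := ⟨dRoot S T⟩
      have h0 := TreeGlue.ut_univ_of_isTree (hSw (fun v => σ (embTL v)))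
      have h1 := h0.unpendant (d := dRoot S T) (e := .inl ⟨false, .dchild (.root S)⟩)
        (nbDRoot f hstd _) ⟨.inl ⟨false, .dchild (.root S)⟩, trivial, ne_dRoot_dchild _⟩
      have he : (Set.univ \ {dRoot S T} : Set _) = {x | x ≠ dRoot S T} := by ext v; simp
      rwa [he] at h1
    have hUR : TreeGlue.UT (switchGraph f' (fun v => σ (embTR v))) {x | x ≠ dRoot S' T'} := by
      haveI : Nonempty ((two S' T').Vt) := ⟨dRoot S' T'⟩
      have h0 := TreeGlue.ut_univ_of_isTree (hSw' (fun v => σ (embTR v)))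
      have h1 := h0.unpendant (d := dRoot S' T') (e := .inl ⟨false, .dchild (.root S')⟩)
        (nbDRoot f' hstd' _) ⟨.inl ⟨false, .dchild (.root S')⟩, trivial, ne_dRoot_dchild _⟩
      have he : (Set.univ \ {dRoot S' T'} : Set _) = {x | x ≠ dRoot S' T'} := by ext v; simp
      rwa [he] at h1
    have hUTL : TreeGlue.UT (switchGraph g σ) (LsetD S S' T T') :=
      TreeGlue.UT.transfer embTL embTL_inj
        (fun a b ha hb hadj => (adjL_iff htc a b ha hb).mpr hadj)
        (fun a b ha hb hadj => (adjL_iff htc a b ha hb).mp hadj) hUL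
    have hUTR : TreeGlue.UT (switchGraph g σ) (RsetD S S' T T') :=
      TreeGlue.UT.transfer embTR embTR_inj
        (fun a b ha hb hadj => (adjR_iff htc a b ha hb).mpr hadj)
        (fun a b ha hb hadj => (adjR_iff htc a b ha hb).mp hadj) hUR
    have hXL : vX S S' T T' ∉ LsetD S S' T T' := fun h => by
      obtain ⟨x, hx, heq⟩ := h; exact embTL_ne_X x heq
    have hXR : vX S S' T T' ∉ RsetD S S' T T' := fun h => by
      obtain ⟨x, hx, heq⟩ := h; exact embTR_ne_X x heq
    have hDL : vD S S' T T' ∉ LsetD S S' T T' := fun h => by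
      obtain ⟨x, hx, heq⟩ := h; exact hx (embTL_eq_D_iff.mp heq)
    have hDR : vD S S' T T' ∉ RsetD S S' T T' := fun h => by
      obtain ⟨x, hx, heq⟩ := h; exact hx (embTR_eq_D_iff.mp heq)
    have hYL : vY S S' T T' ∉ LsetD S S' T T' := fun h => by
      obtain ⟨x, hx, heq⟩ := h; exact embTL_ne_Y x heq
    have hYR : vY S S' T T' ∉ RsetD S S' T T' := fun h => by
      obtain ⟨x, hx, heq⟩ := h; exact embTR_ne_Y x heq
    have hLR : ∀ v, v ∈ LsetD S S' T T' → v ∉ RsetD S S' T T' := by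
      rintro v ⟨x, hx, rfl⟩ ⟨x', hx', heq⟩
      exact embTL_ne_embTR x x' hx heq.symm
    have hRL : ∀ v, v ∈ RsetD S S' T T' → v ∉ LsetD S S' T T' := by
      rintro v ⟨x, hx, rfl⟩ ⟨x', hx', heq⟩
      exact embTL_ne_embTR x' x hx' heq
    by_cases hσ : σ (vX S S' T T') = false
    · refine TreeGlue.master (switchGraph g σ) (LsetD S S' T T') (RsetD S S' T T')
        (vD S S' T T') (vX S S' T T') (vY S S' T T')
        (vrL S S' T T') (vtL S S' T T') (vtR S S' T T')
        hUTL hUTR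
        (memL (x := .inl ⟨false, .dchild (.root S)⟩) (ne_dRoot_dchild _))
        (memL (x := .inl ⟨true, .root _⟩) (ne_dRoot_true _))
        (memR (x := .inl ⟨true, .root _⟩) (ne_dRoot_true _))
        hXL hXR hDL hDR hYL hYR vD_ne_vX vD_ne_vY vX_ne_vY hLR
        (adjXrL hσ) adjDX adjYtL adjYtR ?_ (nbD htc hstd hstd') ?_ ?_ ?_
      · intro b hb
        rcases nbX htc hstd hstd' b hb with rfl | ⟨rfl, _⟩ | ⟨rfl, hcontra⟩
        · exact Or.inr rfl
        · exact Or.inl rfl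
        · rw [hσ] at hcontra; exact Bool.noConfusion hcontra
      · exact nbY htc hstd hstd'
      · intro a b hab
        rw [switchGraph_adj] at hab
        rcases hab.1 with h | h
        · exact relClass_false htc hstd hstd' hσ a b h
        · exact (relClass_false htc hstd hstd' hσ b a h).imp
            (fun ⟨x, y⟩ => ⟨y, x⟩) (fun ⟨x, y⟩ => ⟨y, x⟩)
      · intro v
        rcases cover v with rfl | rfl | rfl | ⟨x, hx, rfl⟩ | ⟨x, hx, rfl⟩
        · exact Or.inr (Or.inr (Or.inl rfl))
        · exact Or.inr (Or.inr (Or.inr (Or.inl rfl)))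
        · exact Or.inr (Or.inr (Or.inr (Or.inr rfl)))
        · exact Or.inl (memL hx)
        · exact Or.inr (Or.inl (memR hx))
    · have hσ' : σ (vX S S' T T') = true := by
        revert hσ; cases σ (vX S S' T T') <;> simp
      refine TreeGlue.master (switchGraph g σ) (RsetD S S' T T') (LsetD S S' T T')
        (vD S S' T T') (vX S S' T T') (vY S S' T T')
        (vrR S S' T T') (vtR S S' T T') (vtL S S' T T')
        hUTR hUTL
        (memR (x := .inl ⟨false, .dchild (.root S')⟩) (ne_dRoot_dchild _))
        (memR (x := .inl ⟨true, .root _⟩) (ne_dRoot_true _))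
        (memL (x := .inl ⟨true, .root _⟩) (ne_dRoot_true _))
        hXR hXL hDR hDL hYR hYL vD_ne_vX vD_ne_vY vX_ne_vY hRL
        (adjXrR hσ') adjDX adjYtR adjYtL ?_ (nbD htc hstd hstd') ?_ ?_ ?_
      · intro b hb
        rcases nbX htc hstd hstd' b hb with rfl | ⟨rfl, hcontra⟩ | ⟨rfl, _⟩
        · exact Or.inr rfl
        · rw [hσ'] at hcontra; exact Bool.noConfusion hcontra
        · exact Or.inl rfl
      · intro b hb
        exact (nbY htc hstd hstd' b hb).symm
      · intro a b hab
        rw [switchGraph_adj] at hab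
        rcases hab.1 with h | h
        · exact relClass_true htc hstd hstd' hσ' a b h
        · exact (relClass_true htc hstd hstd' hσ' b a h).imp
            (fun ⟨x, y⟩ => ⟨y, x⟩) (fun ⟨x, y⟩ => ⟨y, x⟩)
      · intro v
        rcases cover v with rfl | rfl | rfl | ⟨x, hx, rfl⟩ | ⟨x, hx, rfl⟩
        · exact Or.inr (Or.inr (Or.inl rfl))
        · exact Or.inr (Or.inr (Or.inr (Or.inl rfl)))
        · exact Or.inr (Or.inr (Or.inr (Or.inr rfl)))
        · exact Or.inr (Or.inl (memL hx))
        · exact Or.inl (memR hx)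
  · -- standardness
    intro n
    rcases negLeaf_cases n with ⟨n₀, h⟩ | ⟨n₀, h⟩
    · rw [gf_embTL htc n n₀ h]
      exact (isPos_embTL _).mpr (hstd n₀)
    · rw [gf_embTR htc n n₀ h]
      exact (isPos_embTR _).mpr (hstd' n₀)

end Nets
end
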